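/- arXiv:1512.00759 — 7 statements merged into one kernel-verified Lean document; each statement's English description precedes it below -/
import Mathlib

section
/- Let n ≥ 1, let D ∈ ℂ^{n×n} be Hermitian, let b, c ∈ ℂⁿ, let p ∈ ℝ with p > 0, and let λ ∈ ℝ satisfy det(D − λI) ≠ 0 and det(Δ − λI) ≠ 0, where Δ := D − p⁻¹ b b*. Set π := p − b*(D − λI)⁻¹ b. Then π ≠ 0 and (1/π) · (b*(D − λI)⁻¹ c) = (1/p) · (b*(Δ − λI)⁻¹ c). -/
open Matrix

lemma vecMulVec_mulVec' {n : ℕ} (w v x : Fin n → ℂ) :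
    vecMulVec w v *ᵥ x = (v ⬝ᵥ x) • w := by
  ext i
  simp [vecMulVec, mulVec, dotProduct, Finset.sum_mul, Finset.mul_sum, mul_assoc, mul_comm,
    mul_left_comm]

/-- With `Δ := D - p⁻¹ b b*` and `π := p - b*(D-λ)⁻¹b`, if both
`det(D-λ) ≠ 0` and `det(Δ-λ) ≠ 0`, then `π ≠ 0` and
`(1/π)·(b*(D-λ)⁻¹c) = (1/p)·(b*(Δ-λ)⁻¹c)`. -/
theorem stmt1 {n : ℕ} (hn : 1 ≤ n) (D : Matrix (Fin n) (Fin n) ℂ)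
    (hD : D.IsHermitian) (b c : Fin n → ℂ) (p : ℝ) (hp : 0 < p) (lam : ℝ)
    (hdetD : (D - (lam : ℂ) • (1 : Matrix (Fin n) (Fin n) ℂ)).det ≠ 0)
    (hdetΔ : ((D - (p : ℂ)⁻¹ • vecMulVec b (star b)) - (lam : ℂ) • 1).det ≠ 0) :
    (p : ℂ) - star b ⬝ᵥ ((D - (lam : ℂ) • 1)⁻¹ *ᵥ b) ≠ 0 ∧
    ((p : ℂ) - star b ⬝ᵥ ((D - (lam : ℂ) • 1)⁻¹ *ᵥ b))⁻¹ *
        (star b ⬝ᵥ ((D - (lam : ℂ) • 1)⁻¹ *ᵥ c)) =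
      (p : ℂ)⁻¹ *
        (star b ⬝ᵥ (((D - (p : ℂ)⁻¹ • vecMulVec b (star b)) - (lam : ℂ) • 1)⁻¹ *ᵥ c)) := by
  have hp0 : (p : ℂ) ≠ 0 := by exact_mod_cast hp.ne'
  set A : Matrix (Fin n) (Fin n) ℂ := D - (lam : ℂ) • 1 with hAdef
  set M : Matrix (Fin n) (Fin n) ℂ := (D - (p : ℂ)⁻¹ • vecMulVec b (star b)) - (lam : ℂ) • 1
    with hMdef
  have hMA : M = A - (p : ℂ)⁻¹ • vecMulVec b (star b) := by
    rw [hMdef, hAdef]; abel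
  have hAu : IsUnit A.det := isUnit_iff_ne_zero.mpr hdetD
  have hMu : IsUnit M.det := isUnit_iff_ne_zero.mpr hdetΔ
  have hAinv : A * A⁻¹ = 1 := mul_nonsing_inv A hAu
  have hAinv' : A⁻¹ * A = 1 := nonsing_inv_mul A hAu
  -- π ≠ 0
  have hpi : (p : ℂ) - star b ⬝ᵥ (A⁻¹ *ᵥ b) ≠ 0 := by
    intro h
    have hbb : star b ⬝ᵥ (A⁻¹ *ᵥ b) = (p : ℂ) := by linear_combination -h
    by_cases hb : b = 0
    · rw [hb] at hbb; simp at hbb; exact hp0 hbb.symm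
    · have hx : M *ᵥ (A⁻¹ *ᵥ b) = 0 := by
        rw [hMA, sub_mulVec, smul_mulVec, vecMulVec_mulVec', hbb,
          mulVec_mulVec, hAinv, one_mulVec]
        rw [smul_smul, inv_mul_cancel₀ hp0, one_smul, sub_self]
      have hinj := mulVec_injective_iff_isUnit.mpr ((isUnit_iff_isUnit_det M).mpr hMu)
      have : A⁻¹ *ᵥ b = 0 := by
        have := hinj (by rw [hx, mulVec_zero] : M *ᵥ (A⁻¹ *ᵥ b) = M *ᵥ 0)
        exact this
      have : b = 0 := by
        have := congrArg (A *ᵥ ·) this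
        simpa [mulVec_mulVec, hAinv] using this
      exact hb this
  refine ⟨hpi, ?_⟩
  -- main identity
  set x : Fin n → ℂ := M⁻¹ *ᵥ c with hxdef
  have hMx : M *ᵥ x = c := by
    rw [hxdef, mulVec_mulVec, mul_nonsing_inv M hMu, one_mulVec]
  have hxeq : A *ᵥ x - ((p : ℂ)⁻¹ * (star b ⬝ᵥ x)) • b = c := by
    conv_rhs => rw [← hMx, hMA, sub_mulVec, smul_mulVec, vecMulVec_mulVec', smul_smul]
  have hx2 : x = A⁻¹ *ᵥ c + ((p : ℂ)⁻¹ * (star b ⬝ᵥ x)) • (A⁻¹ *ᵥ b) := by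
    have := congrArg (A⁻¹ *ᵥ ·) hxeq
    simp only [mulVec_sub, mulVec_smul, mulVec_mulVec, hAinv', one_mulVec] at this
    rw [← this]; abel
  set t : ℂ := star b ⬝ᵥ x with htdef
  set β : ℂ := star b ⬝ᵥ (A⁻¹ *ᵥ b) with hβdef
  set γ : ℂ := star b ⬝ᵥ (A⁻¹ *ᵥ c) with hγdef
  have ht : t = γ + (p : ℂ)⁻¹ * t * β := by
    conv_lhs => rw [htdef, hx2]
    rw [dotProduct_add, dotProduct_smul, smul_eq_mul]
  have hπ : (p : ℂ) - β ≠ 0 := hpi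
  field_simp
  field_simp at ht
  linear_combination -ht
end

section
/- Let α ∈ ℝ and β ∈ ℝ ∪ {+∞} with α < β. Let p : [α,β) → ℝ be continuous with p(t) > 0 for all t, let b : [α,β) → ℂⁿ be continuous, and let D : [α,β) → ℂ^{n×n} be continuous with D(t) Hermitian for every t. Set Δ(t) := D(t) − p(t)⁻¹ b(t) b(t)*. Let λ ∈ ℝ satisfy: (1) λ does not belong to the closure of the set {μ ∈ ℝ : there exists t ∈ [α,β) with det(Δ(t) − μI) = 0}, and (2) liminf_{t↗β} dist(λ, spec(D(t))) > 0. Then there exists t̂ ∈ (α,β) such that: (i) for all t ∈ [t̂,β), λ is not an eigenvalue of D(t), and sup_{t ∈ [t̂,β)} ‖(D(t) − λI)⁻¹‖ < ∞; (ii) either π(t,λ) > 0 for all t ∈ [t̂,β), or π(t,λ) < 0 for all t ∈ [t̂,β), where π(t,λ) := p(t) − b(t)*(D(t) − λI)⁻¹ b(t). -/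
open Matrix Filter Topology
open scoped ComplexOrder

/-- The filter of left neighbourhoods `t ↗ β` for `β ∈ ℝ ∪ {±∞}` (realised in `EReal`),
pulled back to `ℝ`.  For real `β` this is `𝓝[<] β`; for `β = +∞` it is `atTop`. -/
noncomputable def leftLim (β : EReal) : Filter ℝ :=
  Filter.comap (fun t : ℝ => (t : EReal)) (nhdsWithin β (Set.Iio β))

lemma herm_lower {n : ℕ} {M : Matrix (Fin n) (Fin n) ℂ} (hM : M.IsHermitian) {δ : ℝ}
    (hδ : 0 ≤ δ) (h : ∀ i, δ ≤ |hM.eigenvalues i|) (W : EuclideanSpace ℂ (Fin n)) :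
    δ * ‖W‖ ≤ ‖Matrix.toEuclideanLin M W‖ := by
  set B := hM.eigenvectorBasis with hB
  have hsymm := (Matrix.isHermitian_iff_isSymmetric.1 hM)
  have hrepr : ∀ i, B.repr (Matrix.toEuclideanLin M W) i = (hM.eigenvalues i : ℂ) * B.repr W i := by
    intro i
    rw [B.repr_apply_apply, B.repr_apply_apply, ← hsymm (B i) W]
    have h2 : Matrix.toEuclideanLin M (B i) = ((hM.eigenvalues i : ℂ)) • (B i) := by
      have h3 := hM.mulVec_eigenvectorBasis i
      rw [Matrix.toEuclideanLin_apply]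
      rw [hB, h3]
      rw [RCLike.real_smul_eq_coe_smul (K := ℂ)]
      rfl
    rw [h2, inner_smul_left]
    simp [Complex.conj_ofReal]
  have hc : ∀ x : EuclideanSpace ℂ (Fin n), ‖x‖ = Real.sqrt (∑ i, ‖B.repr x i‖^2) := by
    intro x
    rw [← B.repr.norm_map x, EuclideanSpace.norm_eq]
  rw [hc W, hc (Matrix.toEuclideanLin M W)]
  rw [← Real.sqrt_sq hδ, ← Real.sqrt_mul (by positivity)]
  apply Real.sqrt_le_sqrt
  rw [Finset.mul_sum]
  apply Finset.sum_le_sum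
  intro i _
  rw [hrepr i, norm_mul, Complex.norm_real, Real.norm_eq_abs]
  have h4 : (0:ℝ) ≤ ‖B.repr W i‖ := norm_nonneg _
  nlinarith [mul_le_mul (h i) (h i) hδ (abs_nonneg _), sq_nonneg (‖B.repr W i‖),
    mul_le_mul_of_nonneg_right (mul_le_mul (h i) (h i) hδ (abs_nonneg _))
      (sq_nonneg (‖B.repr W i‖))]

lemma herm_det_ne {n : ℕ} {M : Matrix (Fin n) (Fin n) ℂ} (hM : M.IsHermitian) {δ : ℝ}
    (hδ : 0 < δ) (h : ∀ i, δ ≤ |hM.eigenvalues i|) : M.det ≠ 0 := by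
  rw [hM.det_eq_prod_eigenvalues]
  apply Finset.prod_ne_zero_iff.2
  intro i _
  intro h0
  have h0' : hM.eigenvalues i = 0 := by simpa using h0
  have := h i
  rw [h0'] at this
  simp at this
  linarith

noncomputable def eCLM (n : ℕ) : EuclideanSpace ℂ (Fin n) →L[ℂ] (Fin n → ℂ) :=
  (PiLp.continuousLinearEquiv 2 ℂ (fun _ : Fin n => ℂ) : _ ≃L[ℂ] _)

noncomputable def eCLM' (n : ℕ) : (Fin n → ℂ) →L[ℂ] EuclideanSpace ℂ (Fin n) :=
  ((PiLp.continuousLinearEquiv 2 ℂ (fun _ : Fin n => ℂ)).symm : _ ≃L[ℂ] _)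

lemma herm_inv_bound {n : ℕ} {M : Matrix (Fin n) (Fin n) ℂ} (hM : M.IsHermitian) {δ : ℝ}
    (hδ : 0 < δ) (h : ∀ i, δ ≤ |hM.eigenvalues i|) (v : Fin n → ℂ) :
    ‖M⁻¹ *ᵥ v‖ ≤ (‖eCLM n‖ * δ⁻¹ * ‖eCLM' n‖) * ‖v‖ := by
  have hdet := herm_det_ne hM hδ h
  set w := M⁻¹ *ᵥ v with hw
  have hMw : M *ᵥ w = v := by
    rw [hw, Matrix.mulVec_mulVec, Matrix.mul_nonsing_inv M (isUnit_iff_ne_zero.2 hdet),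
      Matrix.one_mulVec]
  set W : EuclideanSpace ℂ (Fin n) := (WithLp.equiv 2 (Fin n → ℂ)).symm w with hW
  have key : δ * ‖W‖ ≤ ‖(WithLp.equiv 2 (Fin n → ℂ)).symm v‖ := by
    have := herm_lower hM hδ.le h W
    rwa [hW, WithLp.equiv_symm_apply, Matrix.toEuclideanLin_apply_piLp_toLp, hMw] at this
  have h1 : ‖w‖ = ‖eCLM n W‖ := rfl
  have h2 : ‖(WithLp.equiv 2 (Fin n → ℂ)).symm v‖ = ‖eCLM' n v‖ := rfl
  calc ‖w‖ = ‖eCLM n W‖ := h1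
    _ ≤ ‖eCLM n‖ * ‖W‖ := (eCLM n).le_opNorm W
    _ ≤ ‖eCLM n‖ * (δ⁻¹ * ‖eCLM' n v‖) := by
        apply mul_le_mul_of_nonneg_left _ (norm_nonneg _)
        rw [← h2, le_inv_mul_iff₀ hδ]
        exact key
    _ ≤ ‖eCLM n‖ * (δ⁻¹ * (‖eCLM' n‖ * ‖v‖)) := by
        have h5 := (eCLM' n).le_opNorm v
        gcongr
    _ = (‖eCLM n‖ * δ⁻¹ * ‖eCLM' n‖) * ‖v‖ := by ring

lemma eig_bound {n : ℕ} {A : Matrix (Fin n) (Fin n) ℂ} (lam δ : ℝ)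
    (hdist : δ < Metric.infDist lam {μ : ℝ | (A - (μ:ℂ) • 1).det = 0})
    (hM : (A - (lam:ℂ) • 1).IsHermitian) (i : Fin n) : δ ≤ |hM.eigenvalues i| := by
  set M := A - (lam:ℂ) • 1 with hMdef
  set μ := hM.eigenvalues i with hμ
  have hmem : lam + μ ∈ {μ : ℝ | (A - (μ:ℂ) • 1).det = 0} := by
    show (A - ((lam + μ : ℝ):ℂ) • 1).det = 0
    have hAeq : A - ((lam + μ : ℝ):ℂ) • (1 : Matrix (Fin n) (Fin n) ℂ) = M - (μ:ℂ) • 1 := by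
      rw [hMdef]
      push_cast
      rw [add_smul]
      abel
    rw [hAeq]
    rw [← Matrix.exists_mulVec_eq_zero_iff]
    refine ⟨(WithLp.equiv 2 ((i : Fin n) → ℂ)) (hM.eigenvectorBasis i), ?_, ?_⟩
    · intro h0
      refine hM.eigenvectorBasis.toBasis.ne_zero i ?_
      simp only [OrthonormalBasis.coe_toBasis]
      apply (WithLp.equiv 2 ((i : Fin n) → ℂ)).injective
      simpa using h0
    · rw [Matrix.sub_mulVec, show (WithLp.equiv 2 (Fin n → ℂ)) (hM.eigenvectorBasis i) = (hM.eigenvectorBasis i).ofLp from rfl, hM.mulVec_eigenvectorBasis i, Matrix.smul_mulVec,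
        Matrix.one_mulVec, ← hμ]
      ext j
      simp
  have h2 : Metric.infDist lam {μ : ℝ | (A - (μ:ℂ) • 1).det = 0} ≤ |μ| := by
    have := Metric.infDist_le_dist_of_mem (x := lam) hmem
    rwa [Real.dist_eq, show lam - (lam + μ) = -μ by ring, abs_neg] at this
  linarith

lemma pi_real {n : ℕ} (bb : Fin n → ℂ) {A : Matrix (Fin n) (Fin n) ℂ} (hA : A.IsHermitian) :
    (starRingEnd ℂ) (star bb ⬝ᵥ A⁻¹ *ᵥ bb) = star bb ⬝ᵥ A⁻¹ *ᵥ bb := by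
  have hinv : (A⁻¹).IsHermitian := hA.inv
  rw [starRingEnd_apply]
  calc star (star bb ⬝ᵥ A⁻¹ *ᵥ bb) = star (A⁻¹ *ᵥ bb) ⬝ᵥ star (star bb) :=
        (star_dotProduct_star _ _).symm
    _ = star (A⁻¹ *ᵥ bb) ⬝ᵥ bb := by rw [star_star]
    _ = star bb ⬝ᵥ A⁻¹ *ᵥ bb := by rw [star_mulVec, ← dotProduct_mulVec, hinv.eq]

lemma det_key {n : ℕ} {p : ℝ} (bb : Fin n → ℂ) {A : Matrix (Fin n) (Fin n) ℂ}
    (hdet : A.det ≠ 0) :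
    (A - (p:ℂ)⁻¹ • vecMulVec bb (star bb)).det
      = A.det * (1 - (p:ℂ)⁻¹ * (star bb ⬝ᵥ A⁻¹ *ᵥ bb)) := by
  have h1 : A - (p:ℂ)⁻¹ • vecMulVec bb (star bb)
      = A + Matrix.replicateCol Unit ((-(p:ℂ)⁻¹) • bb) * Matrix.replicateRow Unit (star bb) := by
    rw [← Matrix.vecMulVec_eq Unit]
    ext i j
    simp [Matrix.vecMulVec_apply]
    ring
  have h2 : (1 + Matrix.replicateRow Unit (star bb) * A⁻¹ * Matrix.replicateCol Unit ((-(p:ℂ)⁻¹) • bb)).det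
      = 1 - (p:ℂ)⁻¹ * (star bb ⬝ᵥ A⁻¹ *ᵥ bb) := by
    rw [Matrix.det_unique, Matrix.add_apply, Matrix.one_apply_eq,
      ← Matrix.replicateRow_vecMul, Matrix.replicateRow_mul_replicateCol_apply, ← dotProduct_mulVec, Matrix.mulVec_smul,
      dotProduct_smul]
    simp [smul_eq_mul]
    ring
  rw [h1, Matrix.det_add_replicateCol_mul_replicateRow (isUnit_iff_ne_zero.2 hdet), h2]

set_option maxHeartbeats 2000000 in
/-- (Lemma 3.5 of the paper.)  If `λ` avoids the closure of the eigenvalue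
range of `Δ = D - p⁻¹ b b*` on `[α,β)` and `liminf_{t↗β} dist(λ, spec D(t)) > 0`, then there
is `t̂ ∈ (α,β)` such that `D(t)-λ` is invertible with uniformly bounded inverse on `[t̂,β)`
and `π(·,λ) = p - b*(D-λ)⁻¹b` has a constant sign on `[t̂,β)`. -/
theorem stmt2 {n : ℕ} (α : ℝ) (β : EReal) (hαβ : (α : EReal) < β)
    (p : ℝ → ℝ) (b : ℝ → Fin n → ℂ) (D : ℝ → Matrix (Fin n) (Fin n) ℂ)
    (hp : ∀ t, α ≤ t → (t : EReal) < β → 0 < p t)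
    (hpc : ContinuousOn p {t | α ≤ t ∧ (t : EReal) < β})
    (hbc : ContinuousOn b {t | α ≤ t ∧ (t : EReal) < β})
    (hDc : ContinuousOn D {t | α ≤ t ∧ (t : EReal) < β})
    (hD : ∀ t, α ≤ t → (t : EReal) < β → (D t).IsHermitian)
    (lam : ℝ)
    (h1 : lam ∉ closure {μ : ℝ | ∃ t, α ≤ t ∧ (t : EReal) < β ∧
        ((D t - (p t : ℂ)⁻¹ • vecMulVec (b t) (star (b t))) - (μ : ℂ) • 1).det = 0})
    (h2 : 0 < Filter.liminf
        (fun t => ((Metric.infDist lam {μ : ℝ | ((D t) - (μ : ℂ) • 1).det = 0} : ℝ) : EReal))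
        (leftLim β)) :
    ∃ th : ℝ, α < th ∧ (th : EReal) < β ∧
      (∀ t, th ≤ t → (t : EReal) < β → ((D t) - (lam : ℂ) • 1).det ≠ 0) ∧
      (∃ C : ℝ, ∀ t, th ≤ t → (t : EReal) < β →
        ∀ v : Fin n → ℂ, ‖((D t - (lam : ℂ) • 1)⁻¹) *ᵥ v‖ ≤ C * ‖v‖) ∧
      ((∀ t, th ≤ t → (t : EReal) < β →
          0 < (p t : ℂ) - star (b t) ⬝ᵥ ((D t - (lam : ℂ) • 1)⁻¹ *ᵥ b t)) ∨
       (∀ t, th ≤ t → (t : EReal) < β →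
          (p t : ℂ) - star (b t) ⬝ᵥ ((D t - (lam : ℂ) • 1)⁻¹ *ᵥ b t) < 0)) := by
  classical
  -- Step 1: extract δ > 0 and a left endpoint th with infDist > δ on [th, β)
  obtain ⟨c, hc0, hcl⟩ := exists_between h2
  have hcT : c ≠ ⊤ := (hcl.trans_le le_top).ne
  have hev : ∀ᶠ t in leftLim β,
      c < ((Metric.infDist lam {μ : ℝ | ((D t) - (μ : ℂ) • 1).det = 0} : ℝ) : EReal) :=
    Filter.eventually_lt_of_lt_liminf hcl
  set δ := c.toReal with hδdef
  have hcoe : (δ : EReal) = c := EReal.coe_toReal hcT (ne_bot_of_gt hc0)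
  have hδ : 0 < δ := by
    rw [← EReal.coe_lt_coe_iff, hcoe]
    exact_mod_cast hc0
  obtain ⟨s, hs, hsub⟩ := Filter.mem_comap.mp hev
  obtain ⟨l, hl, hIoo⟩ := (mem_nhdsLT_iff_exists_Ioo_subset' hαβ).mp hs
  obtain ⟨th, hmax, hthβ⟩ := EReal.exists_between_coe_real (max_lt hl hαβ)
  have hαth : α < th := EReal.coe_lt_coe_iff.mp ((le_max_right _ _).trans_lt hmax)
  have hlth : l < (th : EReal) := (le_max_left _ _).trans_lt hmax
  have hdist : ∀ t, th ≤ t → (t : EReal) < β →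
      δ < Metric.infDist lam {μ : ℝ | ((D t) - (μ : ℂ) • 1).det = 0} := by
    intro t ht htβ
    have hmem : (t : EReal) ∈ Set.Ioo l β := ⟨hlth.trans_le (EReal.coe_le_coe_iff.2 ht), htβ⟩
    have hmem2 : t ∈ (fun t : ℝ => (t : EReal)) ⁻¹' s := hIoo hmem
    have h3 := hsub hmem2
    rw [← hcoe] at h3
    exact EReal.coe_lt_coe_iff.mp h3
  -- Hermitian structure
  have hsm1 : (((lam:ℂ) • 1 : Matrix (Fin n) (Fin n) ℂ)).IsHermitian := by
    simp [Matrix.IsHermitian, Matrix.conjTranspose_smul, Complex.star_def, Complex.conj_ofReal]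
  have hherm : ∀ t, th ≤ t → (t : EReal) < β → ((D t) - (lam:ℂ) • 1).IsHermitian := by
    intro t ht htβ
    exact (hD t (hαth.le.trans ht) htβ).sub hsm1
  have heig : ∀ t, (ht : th ≤ t) → (htβ : (t : EReal) < β) →
      ∀ i, δ ≤ |(hherm t ht htβ).eigenvalues i| := by
    intro t ht htβ i
    exact eig_bound lam δ (hdist t ht htβ) (hherm t ht htβ) i
  have hdet0 : ∀ t, th ≤ t → (t : EReal) < β → ((D t) - (lam:ℂ) • 1).det ≠ 0 := by
    intro t ht htβ
    exact herm_det_ne (hherm t ht htβ) hδ (heig t ht htβ)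
  -- nonvanishing and realness of π
  have hΔdet : ∀ t, th ≤ t → (t : EReal) < β →
      ((D t - (p t : ℂ)⁻¹ • vecMulVec (b t) (star (b t))) - (lam : ℂ) • 1).det ≠ 0 := by
    intro t ht htβ hzero
    exact h1 (subset_closure ⟨t, hαth.le.trans ht, htβ, hzero⟩)
  have hπne : ∀ t, th ≤ t → (t : EReal) < β →
      ((p t : ℂ) - star (b t) ⬝ᵥ ((D t - (lam : ℂ) • 1)⁻¹ *ᵥ b t)) ≠ 0 := by
    intro t ht htβ
    have hpt := hp t (hαth.le.trans ht) htβ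
    have hptC : (p t : ℂ) ≠ 0 := by exact_mod_cast hpt.ne'
    have hdA := hdet0 t ht htβ
    have hkey := det_key (p := p t) (b t) hdA
    have hΔ := hΔdet t ht htβ
    have hre : (D t - (p t : ℂ)⁻¹ • vecMulVec (b t) (star (b t))) - (lam : ℂ) • 1
        = (D t - (lam : ℂ) • 1) - (p t : ℂ)⁻¹ • vecMulVec (b t) (star (b t)) :=
      sub_right_comm _ _ _
    rw [hre, hkey] at hΔ
    have h1c : (1 : ℂ) - (p t : ℂ)⁻¹ * (star (b t) ⬝ᵥ (D t - (lam : ℂ) • 1)⁻¹ *ᵥ b t) ≠ 0 :=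
      right_ne_zero_of_mul hΔ
    have heq : (p t : ℂ) - star (b t) ⬝ᵥ ((D t - (lam : ℂ) • 1)⁻¹ *ᵥ b t)
        = (p t : ℂ) * (1 - (p t : ℂ)⁻¹ * (star (b t) ⬝ᵥ (D t - (lam : ℂ) • 1)⁻¹ *ᵥ b t)) := by
      field_simp
    rw [heq]
    exact mul_ne_zero hptC h1c
  have hπim : ∀ t, (ht : th ≤ t) → (htβ : (t : EReal) < β) →
      ((p t : ℂ) - star (b t) ⬝ᵥ ((D t - (lam : ℂ) • 1)⁻¹ *ᵥ b t)).im = 0 := by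
    intro t ht htβ
    have hpr := pi_real (b t) (hherm t ht htβ)
    have him : (star (b t) ⬝ᵥ ((D t - (lam : ℂ) • 1)⁻¹ *ᵥ b t)).im = 0 :=
      Complex.conj_eq_iff_im.mp hpr
    rw [Complex.sub_im, him, Complex.ofReal_im, sub_zero]
  -- continuity of π on T
  set T : Set ℝ := {t : ℝ | th ≤ t ∧ (t : EReal) < β} with hT
  set S : Set ℝ := {t : ℝ | α ≤ t ∧ (t : EReal) < β} with hS
  have hTS : T ⊆ S := fun t ht => ⟨hαth.le.trans ht.1, ht.2⟩
  set g : ℝ → ℝ :=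
    fun t => ((p t : ℂ) - star (b t) ⬝ᵥ ((D t - (lam : ℂ) • 1)⁻¹ *ᵥ b t)).re with hg
  have hgc : ContinuousOn g T := by
    set A : ℝ → Matrix (Fin n) (Fin n) ℂ := fun t => D t - (lam : ℂ) • 1 with hA
    set N : ℝ → Matrix (Fin n) (Fin n) ℂ :=
      fun t => ((A t).det)⁻¹ • (A t).adjugate with hN
    have cA : ContinuousOn A T := (hDc.mono hTS).sub continuousOn_const
    have cdet : ContinuousOn (fun t => (A t).det) T :=
      (continuous_id.matrix_det).comp_continuousOn cA
    have cadj : ContinuousOn (fun t => (A t).adjugate) T :=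
      (continuous_id.matrix_adjugate).comp_continuousOn cA
    have cinv : ContinuousOn (fun t => ((A t).det)⁻¹) T :=
      cdet.inv₀ (fun t ht => hdet0 t ht.1 ht.2)
    have cN : ContinuousOn N T := cinv.smul cadj
    have cb : ContinuousOn b T := hbc.mono hTS
    have hG : Continuous fun x : (Fin n → ℂ) × Matrix (Fin n) (Fin n) ℂ =>
        star x.1 ⬝ᵥ (x.2 *ᵥ x.1) :=
      Continuous.dotProduct (continuous_star.comp continuous_fst)
        (Continuous.matrix_mulVec continuous_snd continuous_fst)
    have cdot : ContinuousOn (fun t => star (b t) ⬝ᵥ (N t *ᵥ b t)) T :=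
      hG.comp_continuousOn (cb.prodMk cN)
    have cp : ContinuousOn (fun t => (p t : ℂ)) T :=
      Complex.continuous_ofReal.comp_continuousOn (hpc.mono hTS)
    have cπN : ContinuousOn (fun t => (p t : ℂ) - star (b t) ⬝ᵥ (N t *ᵥ b t)) T := cp.sub cdot
    have cgN : ContinuousOn (fun t => ((p t : ℂ) - star (b t) ⬝ᵥ (N t *ᵥ b t)).re) T :=
      Complex.continuous_re.comp_continuousOn cπN
    apply cgN.congr
    intro t ht
    have hNt : (D t - (lam:ℂ) • 1)⁻¹ = N t := by
      show _ = ((D t - (lam:ℂ) • 1).det)⁻¹ • (D t - (lam:ℂ) • 1).adjugate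
      rw [Matrix.inv_def, Ring.inverse_eq_inv]
    show ((p t : ℂ) - star (b t) ⬝ᵥ ((D t - (lam : ℂ) • 1)⁻¹ *ᵥ b t)).re
        = ((p t : ℂ) - star (b t) ⬝ᵥ (N t *ᵥ b t)).re
    rw [hNt]
  -- T is preconnected
  have hTpc : IsPreconnected T := by
    apply Set.OrdConnected.isPreconnected
    constructor
    intro x hx y hy z hz
    exact ⟨hx.1.trans hz.1, lt_of_le_of_lt (EReal.coe_le_coe_iff.2 hz.2) hy.2⟩
  have hthT : th ∈ T := ⟨le_refl _, hthβ⟩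
  have hgne : ∀ t ∈ T, g t ≠ 0 := by
    intro t ht h0
    apply hπne t ht.1 ht.2
    apply Complex.ext
    · simpa [hg] using h0
    · simpa using hπim t ht.1 ht.2
  refine ⟨th, hαth, hthβ, hdet0, ⟨‖eCLM n‖ * δ⁻¹ * ‖eCLM' n‖, ?_⟩, ?_⟩
  · intro t ht htβ v
    exact herm_inv_bound (hherm t ht htβ) hδ (heig t ht htβ) v
  · -- constant sign
    by_cases hsign : 0 < g th
    · left
      intro t ht htβ
      have hgt : 0 < g t := by
        by_contra hng
        have hlt : g t < 0 := lt_of_le_of_ne (not_lt.mp hng) (hgne t ⟨ht, htβ⟩)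
        have hiv := hTpc.intermediate_value (⟨ht, htβ⟩ : t ∈ T) hthT hgc
        obtain ⟨t', ht', hgt'⟩ := hiv ⟨hlt.le, hsign.le⟩
        exact hgne t' ht' hgt'
      rw [Complex.lt_def]
      refine ⟨?_, ?_⟩
      · rw [Complex.zero_re]
        exact hgt
      · rw [Complex.zero_im]
        exact (hπim t ht htβ).symm
    · right
      intro t ht htβ
      have hgth : g th < 0 := lt_of_le_of_ne (not_lt.mp hsign) (hgne th hthT)
      have hgt : g t < 0 := by
        by_contra hng
        have hlt : 0 < g t := lt_of_le_of_ne (not_lt.mp hng) (Ne.symm (hgne t ⟨ht, htβ⟩))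
        have hiv := hTpc.intermediate_value hthT (⟨ht, htβ⟩ : t ∈ T) hgc
        obtain ⟨t', ht', hgt'⟩ := hiv ⟨hgth.le, hlt.le⟩
        exact hgne t' ht' hgt'
      rw [Complex.lt_def]
      refine ⟨?_, ?_⟩
      · rw [Complex.zero_re]
        exact hgt
      · rw [Complex.zero_im]
        exact hπim t ht htβ
end

section
/- Let α < β be real numbers and t₀ ∈ (α,β). Let π : (t₀,β) → ℝ be differentiable, with π(t) ≠ 0 for all t, and suppose that both t ↦ π(t)/(β−t)² and t ↦ (β−t)²/π(t) are bounded on (t₀,β). Let r : (t₀,β) → ℝ be differentiable and suppose that (β−t)·r(t)/π(t) → r̃ ∈ ℝ as t ↗ β. If, as t ↗ β, the function Φ₁(t) := (β−t)·π′(t)/π(t) converges to a real limit L₁ and the function Φ₂(t) := (β−t)²·r′(t)/π(t) converges to a real limit L₂, then L₁ = −2 and L₂ = −r̃. -/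
open Filter Topology

open Set Real in
lemma core_blowup (β a : ℝ) (u u' : ℝ → ℝ) (c : ℝ) (hc : 0 < c) (ha : a < β)
    (hu : ∀ t ∈ Set.Ioo a β, HasDerivAt u (u' t) t)
    (hlim : Tendsto (fun t => (β - t) * u' t) (𝓝[<] β) (𝓝 c)) :
    Tendsto u (𝓝[<] β) atTop := by
  have hmem : ∀ᶠ t in 𝓝[<] β, t ∈ Set.Ioo a β := Ioo_mem_nhdsLT ha
  have hev : ∀ᶠ t in 𝓝[<] β, c/2 < (β - t) * u' t ∧ t ∈ Set.Ioo a β :=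
    (hlim.eventually (eventually_gt_nhds (half_lt_self hc))).and hmem
  rw [eventually_iff, mem_nhdsLT_iff_exists_Ioo_subset] at hev
  obtain ⟨l, hl, hsub⟩ := hev
  have hlβ : l < β := hl
  set v : ℝ → ℝ := fun t => u t + (c/2) * Real.log (β - t) with hv_def
  have hv : ∀ t ∈ Set.Ioo l β, HasDerivAt v (u' t + (c/2) * (-1/(β - t))) t := by
    intro t ht
    have htm := hsub ht
    have hβt : β - t ≠ 0 := ne_of_gt (sub_pos.mpr ht.2)
    have h1 : HasDerivAt (fun s : ℝ => β - s) (-1) t := by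
      simpa using (hasDerivAt_id t).const_sub β
    have h2 : HasDerivAt (fun s : ℝ => Real.log (β - s)) (-1/(β - t)) t := h1.log hβt
    exact (hu t htm.2).add (h2.const_mul (c/2))
  have hmono : MonotoneOn v (Set.Ioo l β) := by
    apply monotoneOn_of_deriv_nonneg (convex_Ioo l β)
    · exact fun t ht => (hv t ht).continuousAt.continuousWithinAt
    · rw [interior_Ioo]
      exact fun t ht => (hv t ht).differentiableAt.differentiableWithinAt
    · intro t ht
      rw [interior_Ioo] at ht
      rw [(hv t ht).deriv]
      have h1 := (hsub ht).1
      have hpos : 0 < β - t := sub_pos.mpr ht.2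
      have h2 : c/2/(β - t) ≤ u' t := by
        rw [div_le_iff₀ hpos]; nlinarith
      have h3 : (c/2) * (-1/(β - t)) = -(c/2/(β - t)) := by ring
      rw [h3]; linarith
  set s₁ : ℝ := (l + β)/2 with hs₁_def
  have hs₁ : s₁ ∈ Set.Ioo l β := ⟨by simp [hs₁_def]; linarith, by simp [hs₁_def]; linarith⟩
  have hlog : Tendsto (fun t => Real.log (β - t)) (𝓝[<] β) atBot := by
    apply Real.tendsto_log_nhdsGT_zero.comp
    apply tendsto_nhdsWithin_of_tendsto_nhds_of_eventually_within
    · have : Tendsto (fun t : ℝ => β - t) (𝓝 β) (𝓝 (β - β)) :=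
        (continuous_const.sub continuous_id).tendsto β
      simpa using this.mono_left nhdsWithin_le_nhds
    · exact eventually_mem_nhdsWithin.mono fun t ht => Set.mem_Ioi.mpr (sub_pos.mpr ht)
  have hg : Tendsto (fun t => v s₁ - c/2 * Real.log (β - t)) (𝓝[<] β) atTop := by
    have h1 : Tendsto (fun t => c/2 * Real.log (β - t)) (𝓝[<] β) atBot :=
      hlog.const_mul_atBot (half_pos hc)
    have h2 : Tendsto (fun t => -(c/2 * Real.log (β - t))) (𝓝[<] β) atTop :=
      tendsto_neg_atBot_atTop.comp h1
    simpa [sub_eq_add_neg] using tendsto_atTop_add_const_left _ (v s₁) h2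
  apply tendsto_atTop_mono' _ _ hg
  filter_upwards [Ioo_mem_nhdsLT hs₁.2] with t ht
  have h4 : v s₁ ≤ v t := hmono hs₁ ⟨hs₁.1.trans ht.1, ht.2⟩ ht.1.le
  simp only [hv_def] at h4 ⊢
  linarith

/-- (Lemma 4.2 of the paper, case `β < ∞`.)  If `pi` is differentiable and
nonvanishing on `(t₀,β)`, `pi(t)/(β-t)²` and `(β-t)²/pi(t)` are bounded, and
`(β-t)·r(t)/pi(t) → r̃`, then convergence of `Φ₁(t) = (β-t)·pi'(t)/pi(t)` to `L₁` and of
`Φ₂(t) = (β-t)²·r'(t)/pi(t)` to `L₂` forces `L₁ = -2` and `L₂ = -r̃`. -/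
theorem stmt3 (α β t₀ : ℝ) (hαβ : α < β) (ht₀ : α < t₀ ∧ t₀ < β)
    (pi r pi' r' : ℝ → ℝ) (rt L₁ L₂ : ℝ)
    (hpid : ∀ t ∈ Set.Ioo t₀ β, HasDerivAt pi (pi' t) t)
    (hpi0 : ∀ t ∈ Set.Ioo t₀ β, pi t ≠ 0)
    (hb1 : ∃ C : ℝ, ∀ t ∈ Set.Ioo t₀ β, |pi t / (β - t) ^ 2| ≤ C)
    (hb2 : ∃ C : ℝ, ∀ t ∈ Set.Ioo t₀ β, |(β - t) ^ 2 / pi t| ≤ C)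
    (hrd : ∀ t ∈ Set.Ioo t₀ β, HasDerivAt r (r' t) t)
    (hrlim : Tendsto (fun t => (β - t) * r t / pi t) (𝓝[<] β) (𝓝 rt))
    (hΦ1 : Tendsto (fun t => (β - t) * pi' t / pi t) (𝓝[<] β) (𝓝 L₁))
    (hΦ2 : Tendsto (fun t => (β - t) ^ 2 * r' t / pi t) (𝓝[<] β) (𝓝 L₂)) :
    L₁ = -2 ∧ L₂ = -rt := by
  obtain ⟨ht₀α, ht₀β⟩ := ht₀
  have hmem : ∀ᶠ t in 𝓝[<] β, t ∈ Set.Ioo t₀ β := Ioo_mem_nhdsLT ht₀β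
  have hd1 : ∀ t : ℝ, HasDerivAt (fun s : ℝ => β - s) (-1) t := by
    intro t; simpa using (hasDerivAt_id t).const_sub β
  -- Part 1
  set u : ℝ → ℝ := fun t => Real.log (pi t) - 2 * Real.log (β - t) with hu_def
  set u' : ℝ → ℝ := fun t => pi' t / pi t + 2 * (1 / (β - t)) with hu'_def
  have hud : ∀ t ∈ Set.Ioo t₀ β, HasDerivAt u (u' t) t := by
    intro t ht
    have hβt : β - t ≠ 0 := ne_of_gt (sub_pos.mpr ht.2)
    have h2 := (hd1 t).log hβt
    have h3 := ((hpid t ht).log (hpi0 t ht)).sub (h2.const_mul 2)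
    refine h3.congr_deriv ?_
    simp only [hu'_def]
    ring
  have hulim : Tendsto (fun t => (β - t) * u' t) (𝓝[<] β) (𝓝 (L₁ + 2)) := by
    have h0 := hΦ1.add (tendsto_const_nhds (x := (2:ℝ)))
    apply h0.congr'
    filter_upwards [hmem] with t ht
    have hβt : β - t ≠ 0 := ne_of_gt (sub_pos.mpr ht.2)
    have hπ : pi t ≠ 0 := hpi0 t ht
    simp only [hu'_def]
    field_simp
  obtain ⟨C₁, hC₁⟩ := hb1
  obtain ⟨C₂, hC₂⟩ := hb2
  have hub : ∀ t ∈ Set.Ioo t₀ β, u t ≤ Real.log C₁ := by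
    intro t ht
    have hβt : (β - t) ^ 2 ≠ 0 := pow_ne_zero 2 (ne_of_gt (sub_pos.mpr ht.2))
    have heq : u t = Real.log (pi t / (β - t) ^ 2) := by
      rw [Real.log_div (hpi0 t ht) hβt, Real.log_pow]
      simp [hu_def]
    rw [heq, ← Real.log_abs]
    exact Real.log_le_log (abs_pos.mpr (div_ne_zero (hpi0 t ht) hβt)) (hC₁ t ht)
  have hlb : ∀ t ∈ Set.Ioo t₀ β, -u t ≤ Real.log C₂ := by
    intro t ht
    have hβt : (β - t) ^ 2 ≠ 0 := pow_ne_zero 2 (ne_of_gt (sub_pos.mpr ht.2))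
    have heq : -u t = Real.log ((β - t) ^ 2 / pi t) := by
      rw [Real.log_div hβt (hpi0 t ht), Real.log_pow]
      simp [hu_def]
    rw [heq, ← Real.log_abs]
    exact Real.log_le_log (abs_pos.mpr (div_ne_zero hβt (hpi0 t ht))) (hC₂ t ht)
  have hL1 : L₁ = -2 := by
    by_contra hne
    have hc : L₁ + 2 ≠ 0 := fun h => hne (by linarith)
    rcases hc.lt_or_gt with hneg | hpos
    · have hneglim : Tendsto (fun t => (β - t) * (-u' t)) (𝓝[<] β) (𝓝 (-(L₁ + 2))) := by
        simpa [mul_neg] using hulim.neg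
      have hblow := core_blowup β t₀ (fun t => -u t) (fun t => -u' t) (-(L₁ + 2))
        (by linarith) ht₀β (fun t ht => (hud t ht).neg) hneglim
      obtain ⟨t, h3, h4⟩ := ((hblow.eventually (eventually_gt_atTop (Real.log C₂))).and hmem).exists
      exact absurd (hlb t h4) (not_le.mpr h3)
    · have hblow := core_blowup β t₀ u u' (L₁ + 2) hpos ht₀β hud hulim
      obtain ⟨t, h3, h4⟩ := ((hblow.eventually (eventually_gt_atTop (Real.log C₁))).and hmem).exists
      exact absurd (hub t h4) (not_le.mpr h3)
  refine ⟨hL1, ?_⟩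
  -- Part 2
  set h : ℝ → ℝ := fun t => (β - t) * r t / pi t with hh_def
  set h' : ℝ → ℝ := fun t =>
    (((-1) * r t + (β - t) * r' t) * pi t - (β - t) * r t * pi' t) / (pi t) ^ 2 with hh'_def
  have hhd : ∀ t ∈ Set.Ioo t₀ β, HasDerivAt h (h' t) t := by
    intro t ht
    exact ((hd1 t).mul (hrd t ht)).div (hpid t ht) (hpi0 t ht)
  have hhlim : Tendsto (fun t => (β - t) * h' t) (𝓝[<] β) (𝓝 (L₂ + rt)) := by
    have h0 := (hrlim.neg.add hΦ2).sub (hrlim.mul hΦ1)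
    rw [show -rt + L₂ - rt * L₁ = L₂ + rt by rw [hL1]; ring] at h0
    apply h0.congr'
    filter_upwards [hmem] with t ht
    have hπ : pi t ≠ 0 := hpi0 t ht
    simp only [hh_def, hh'_def]
    field_simp
  by_contra hne
  have hc : L₂ + rt ≠ 0 := fun hz => hne (by linarith)
  rcases hc.lt_or_gt with hneg | hpos
  · have hneglim : Tendsto (fun t => (β - t) * (-h' t)) (𝓝[<] β) (𝓝 (-(L₂ + rt))) := by
      simpa [mul_neg] using hhlim.neg
    have hblow := core_blowup β t₀ (fun t => -h t) (fun t => -h' t) (-(L₂ + rt))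
      (by linarith) ht₀β (fun t ht => (hhd t ht).neg) hneglim
    exact not_tendsto_nhds_of_tendsto_atTop hblow (-rt) hrlim.neg
  · have hblow := core_blowup β t₀ h h' (L₂ + rt) hpos ht₀β hhd hhlim
    exact not_tendsto_nhds_of_tendsto_atTop hblow rt hrlim
end

section
/- Let α < β be real numbers, let n ≥ 1 and 1 ≤ j₀ ≤ n. For j = 1,…,n let σⱼ : [α,β) → ℝ with σⱼ(t) > 0 for all t, let λⱼ : [α,β) → ℝ, and let p : [α,β) → ℝ. Assume: (h1) for j ≤ j₀, λⱼ(t) → Lⱼ ∈ ℝ as t ↗ β, and L₁, …, L_{j₀} are pairwise distinct; (h2) for j > j₀, |λⱼ(t)| → ∞ as t ↗ β; (h3) there exists m ∈ ℕ such that for each j > j₀ the function t ↦ σⱼ(t)/((β−t)² |λⱼ(t)|^m) is bounded on some interval (t₀,β); (h4) there is an infinite set S ⊆ ℝ with S ∩ {L₁,…,L_{j₀}} = ∅ such that for every x ∈ S the function t ↦ π(t,x)/(β−t)², where π(t,x) := p(t) − Σ_{j=1}^{n} σⱼ(t)/(λⱼ(t) − x), converges to a real limit π₂(x) as t ↗ β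 (this function is defined for t close enough to β, since eventually x ≠ λⱼ(t) for all j). Then: (c1) for each j ≤ j₀ the limit σⱼ_β := lim_{t↗β} σⱼ(t)/(β−t)² exists and σⱼ_β ≥ 0; (c2) the limit f_β := lim_{t↗β} (1/(β−t)²)·(−p(t) + Σ_{j>j₀} σⱼ(t)/λⱼ(t)) exists in ℝ; (c3) the limit g_β := lim_{t↗β} (1/(β−t)²)·Σ_{j>j₀} σⱼ(t)/λⱼ(t)² exists and g_β ≥ 0; (c4) for every integer k ≥ 3, (1/(β−t)²)·Σ_{j>j₀} σⱼ(t)/λⱼ(t)^k → 0 as t ↗ β; (c5) for every x ∈ S, −π₂(x) = f_β + g_β·x + Σ_{j=1}^{j₀} σⱼ_β/(Lⱼ − x). In particular, x ↦ −π₂(x) is a Nevanlinna function. -/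
open Filter Topology Polynomial

lemma geomExp (K : ℕ) {l x : ℝ} (hl : l ≠ 0) (hlx : l - x ≠ 0) :
    ∑ k ∈ Finset.range (K+1), x ^ k / l ^ (k+1)
      = 1 / (l - x) - x ^ (K+1) / (l ^ (K+1) * (l - x)) := by
  induction K with
  | zero =>
    simp
    field_simp
  | succ K ih =>
      rw [Finset.sum_range_succ, ih]
      have h2 : l ^ (K+1) ≠ 0 := pow_ne_zero _ hl
      field_simp
      ring

lemma detAux (K : ℕ) {ιJ : Type} [Fintype ιJ] [DecidableEq ιJ]
    (L : ιJ → ℝ) (hL : Function.Injective L)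
    (x : Fin (K+1) ⊕ ιJ → ℝ) (hx : Function.Injective x)
    (hxL : ∀ i j, x i ≠ L j) :
    (Matrix.of fun i c => Sum.elim (fun k : Fin (K+1) => x i ^ (k : ℕ))
        (fun j : ιJ => (L j - x i)⁻¹) c).det ≠ 0 := by
  classical
  intro hdet
  obtain ⟨v, hv, hMv⟩ := Matrix.exists_mulVec_eq_zero_iff.mpr hdet
  set Q : ℝ[X] := ∏ j : ιJ, (C (L j) - X) with hQdef
  set P1 : ℝ[X] := ∑ k : Fin (K+1), C (v (Sum.inl k)) * X ^ (k : ℕ) with hP1def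
  set P : ℝ[X] := P1 * Q
      + ∑ j : ιJ, C (v (Sum.inr j)) * ∏ j' ∈ Finset.univ.erase j, (C (L j') - X)
    with hPdef
  -- evaluation of P at each x i is zero
  have hQeval : ∀ y : ℝ, Q.eval y = ∏ j : ιJ, (L j - y) := by
    intro y; simp [hQdef, eval_prod]
  have heval : ∀ i, P.eval (x i) = 0 := by
    intro i
    have hrow := congrFun hMv i
    have hrow' : (∑ k : Fin (K+1), x i ^ (k : ℕ) * v (Sum.inl k))
        + ∑ j : ιJ, (L j - x i)⁻¹ * v (Sum.inr j) = 0 := by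
      simpa [Matrix.mulVec, dotProduct, Fintype.sum_sum_type] using hrow
    have hfac : ∀ j : ιJ, (L j - x i) ≠ 0 :=
      fun j => sub_ne_zero.mpr (Ne.symm (hxL i j))
    have hPev : P.eval (x i) = ((∑ k : Fin (K+1), x i ^ (k : ℕ) * v (Sum.inl k))
        + ∑ j : ιJ, (L j - x i)⁻¹ * v (Sum.inr j)) * ∏ j : ιJ, (L j - x i) := by
      rw [hPdef, hP1def, hQdef]
      simp only [eval_add, eval_mul, eval_finset_sum, eval_prod, eval_sub, eval_C, eval_X,
        eval_pow]
      rw [add_mul]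
      simp only [Finset.sum_mul]
      refine congrArg₂ (· + ·) (Finset.sum_congr rfl fun k _ => by ring)
        (Finset.sum_congr rfl fun j _ => ?_)
      rw [← Finset.mul_prod_erase Finset.univ (fun j' => L j' - x i) (Finset.mem_univ j)]
      have hj := hfac j
      field_simp
    rw [hPev, hrow', zero_mul]
  -- degree bound
  have hdegQ : Q.natDegree ≤ Fintype.card ιJ := by
    refine le_trans (Polynomial.natDegree_prod_le _ _) ?_
    calc ∑ j : ιJ, (C (L j) - X).natDegree ≤ ∑ _j : ιJ, 1 := by
          refine Finset.sum_le_sum fun j _ => ?_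
          refine le_trans (natDegree_sub_le _ _) ?_
          simp
      _ = Fintype.card ιJ := by simp
  have hdegP1 : P1.natDegree ≤ K := by
    refine natDegree_sum_le_of_forall_le _ _ fun k _ => ?_
    refine le_trans (natDegree_C_mul_le _ _) ?_
    simpa using Nat.le_of_lt_succ k.2
  have hdegP : P.natDegree < Fintype.card (Fin (K+1) ⊕ ιJ) := by
    have h1 : (P1 * Q).natDegree ≤ K + Fintype.card ιJ :=
      le_trans (natDegree_mul_le) (add_le_add hdegP1 hdegQ)
    have h2 : (∑ j : ιJ, C (v (Sum.inr j)) *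
        ∏ j' ∈ Finset.univ.erase j, (C (L j') - X)).natDegree ≤ K + Fintype.card ιJ := by
      refine natDegree_sum_le_of_forall_le _ _ fun j _ => ?_
      refine le_trans (natDegree_C_mul_le _ _) ?_
      refine le_trans (Polynomial.natDegree_prod_le _ _) ?_
      calc ∑ j' ∈ Finset.univ.erase j, (C (L j') - X).natDegree
          ≤ ∑ _j' ∈ Finset.univ.erase j, 1 := by
            refine Finset.sum_le_sum fun j' _ => ?_
            refine le_trans (natDegree_sub_le _ _) ?_
            simp
        _ ≤ Fintype.card ιJ := by
            simp only [Finset.sum_const, smul_eq_mul, mul_one]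
            exact le_trans (Finset.card_le_card (Finset.erase_subset _ _)) (by simp)
        _ ≤ K + Fintype.card ιJ := Nat.le_add_left _ _
    have := natDegree_add_le (P1 * Q)
      (∑ j : ιJ, C (v (Sum.inr j)) * ∏ j' ∈ Finset.univ.erase j, (C (L j') - X))
    rw [← hPdef] at this
    have hle : P.natDegree ≤ K + Fintype.card ιJ := le_trans this (max_le h1 h2)
    have : Fintype.card (Fin (K+1) ⊕ ιJ) = K + 1 + Fintype.card ιJ := by simp
    omega
  have hP0 : P = 0 := eq_zero_of_natDegree_lt_card_of_eval_eq_zero P hx heval hdegP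
  -- v (inr j) = 0
  have hvr : ∀ j : ιJ, v (Sum.inr j) = 0 := by
    intro j
    have hev : (P1 * Q + ∑ j' : ιJ, C (v (Sum.inr j')) *
        ∏ j'' ∈ Finset.univ.erase j', (C (L j'') - X)).eval (L j) = 0 := by
      rw [← hPdef, hP0, eval_zero]
    have hQL : Q.eval (L j) = 0 := by
      rw [hQeval]
      exact Finset.prod_eq_zero (Finset.mem_univ j) (by simp)
    rw [eval_add, eval_mul, hQL, mul_zero, zero_add, eval_finset_sum] at hev
    have hsingle : ∀ j' : ιJ, j' ≠ j →
        (C (v (Sum.inr j')) * ∏ j'' ∈ Finset.univ.erase j', (C (L j'') - X)).eval (L j) = 0 := by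
      intro j' hj'
      simp only [eval_mul, eval_C, eval_prod, eval_sub, eval_X]
      have : ∏ j'' ∈ Finset.univ.erase j', (L j'' - L j) = 0 :=
        Finset.prod_eq_zero (Finset.mem_erase.mpr ⟨Ne.symm hj', Finset.mem_univ _⟩) (by simp)
      rw [this, mul_zero]
    rw [Finset.sum_eq_single j (fun j' _ hj' => hsingle j' hj') (by simp)] at hev
    simp only [eval_mul, eval_C, eval_prod, eval_sub, eval_X] at hev
    have hne : ∏ j'' ∈ Finset.univ.erase j, (L j'' - L j) ≠ 0 := by
      rw [Finset.prod_ne_zero_iff]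
      intro j'' hj''
      exact sub_ne_zero.mpr (fun h => (Finset.mem_erase.mp hj'').1 (hL h))
    exact (mul_eq_zero.mp hev).resolve_right hne
  -- P1 = 0
  have hP10 : P1 = 0 := by
    have hsum0 : (∑ j : ιJ, C (v (Sum.inr j)) *
        ∏ j' ∈ Finset.univ.erase j, (C (L j') - X)) = 0 := by
      refine Finset.sum_eq_zero fun j _ => ?_
      rw [hvr j, map_zero, zero_mul]
    rw [hPdef, hsum0, add_zero] at hP0
    have hQne : Q ≠ 0 := by
      rw [hQdef, Finset.prod_ne_zero_iff]
      intro j _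
      intro h
      have := congrArg (fun q => Polynomial.coeff q 1) h
      simp at this
    exact (mul_eq_zero.mp hP0).resolve_right hQne
  have hvl : ∀ k : Fin (K+1), v (Sum.inl k) = 0 := by
    intro k
    have := congrArg (fun q => Polynomial.coeff q (k : ℕ)) hP10
    simp only [hP1def, finset_sum_coeff, coeff_C_mul, coeff_X_pow, coeff_zero, mul_ite,
      mul_one, mul_zero] at this
    rw [Finset.sum_eq_single k (fun k' _ hk' => if_neg (fun h => hk' (Fin.ext h.symm)))
      (by simp)] at this
    simpa using this
  apply hv
  funext c
  cases c with
  | inl k => exact hvl k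
  | inr j => exact hvr j



open Filter Topology

set_option maxHeartbeats 4000000 in
/-- (Proposition 6.5 of the paper.)  Asymptotics of the Nevanlinna
coefficients of `-π₂`: under the assumptions (h1)–(h4) the limits `σ_{j,β}` (for `j ≤ j₀`),
`f_β`, `g_β` exist, `σ_{j,β} ≥ 0`, `g_β ≥ 0`, the higher-order sums tend to `0`, and for all
`x ∈ S` one has `-π₂(x) = f_β + g_β x + Σ_{j≤j₀} σ_{j,β}/(L_j - x)`. -/
theorem stmt8 {n : ℕ} (hn : 1 ≤ n) (j₀ : ℕ) (hj₀ : 1 ≤ j₀ ∧ j₀ ≤ n)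
    (α β : ℝ) (hαβ : α < β)
    (σ lam : Fin n → ℝ → ℝ) (p : ℝ → ℝ)
    (hσpos : ∀ j : Fin n, ∀ t ∈ Set.Ico α β, 0 < σ j t)
    (L : Fin n → ℝ)
    (h1 : ∀ j : Fin n, (j : ℕ) < j₀ → Tendsto (lam j) (𝓝[<] β) (𝓝 (L j)))
    (h1' : ∀ i j : Fin n, (i : ℕ) < j₀ → (j : ℕ) < j₀ → i ≠ j → L i ≠ L j)
    (h2 : ∀ j : Fin n, j₀ ≤ (j : ℕ) → Tendsto (fun t => |lam j t|) (𝓝[<] β) atTop)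
    (h3 : ∃ m : ℕ, ∀ j : Fin n, j₀ ≤ (j : ℕ) →
      ∃ t₀ ∈ Set.Ico α β, ∃ C : ℝ, ∀ t ∈ Set.Ioo t₀ β,
        σ j t / ((β - t) ^ 2 * |lam j t| ^ m) ≤ C)
    (S : Set ℝ) (hS : S.Infinite)
    (hSL : ∀ x ∈ S, ∀ j : Fin n, (j : ℕ) < j₀ → x ≠ L j)
    (π₂ : ℝ → ℝ)
    (h4 : ∀ x ∈ S, Tendsto
      (fun t => (p t - ∑ j, σ j t / (lam j t - x)) / (β - t) ^ 2)
      (𝓝[<] β) (𝓝 (π₂ x))) :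
    ∃ (σβ : Fin n → ℝ) (fβ gβ : ℝ),
      (∀ j : Fin n, (j : ℕ) < j₀ →
        Tendsto (fun t => σ j t / (β - t) ^ 2) (𝓝[<] β) (𝓝 (σβ j)) ∧ 0 ≤ σβ j) ∧
      Tendsto (fun t =>
          (-(p t) + ∑ j ∈ Finset.univ.filter (fun j : Fin n => j₀ ≤ (j : ℕ)),
            σ j t / lam j t) / (β - t) ^ 2)
        (𝓝[<] β) (𝓝 fβ) ∧
      (Tendsto (fun t =>
          (∑ j ∈ Finset.univ.filter (fun j : Fin n => j₀ ≤ (j : ℕ)),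
            σ j t / (lam j t) ^ 2) / (β - t) ^ 2)
        (𝓝[<] β) (𝓝 gβ) ∧ 0 ≤ gβ) ∧
      (∀ k : ℕ, 3 ≤ k →
        Tendsto (fun t =>
            (∑ j ∈ Finset.univ.filter (fun j : Fin n => j₀ ≤ (j : ℕ)),
              σ j t / (lam j t) ^ k) / (β - t) ^ 2)
          (𝓝[<] β) (𝓝 0)) ∧
      (∀ x ∈ S, -(π₂ x) = fβ + gβ * x +
        ∑ j ∈ Finset.univ.filter (fun j : Fin n => (j : ℕ) < j₀), σβ j / (L j - x)) := by
    classical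
  obtain ⟨hj₀1, hj₀n⟩ := hj₀
  obtain ⟨m, h3⟩ := h3
  -- basic eventualities
  have hmem : ∀ᶠ t in 𝓝[<] β, t ∈ Set.Ioo α β := by
    filter_upwards [Ioo_mem_nhdsLT_of_mem (Set.mem_Ioc.mpr ⟨hαβ, le_rfl⟩)] with t ht
    exact ht
  have hβne : ∀ᶠ t in 𝓝[<] β, β - t ≠ 0 := by
    filter_upwards [self_mem_nhdsWithin] with t ht
    exact sub_ne_zero.mpr (ne_of_gt ht)
  have hevne : ∀ y : ℝ, (∀ j : Fin n, (j : ℕ) < j₀ → L j ≠ y) →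
      ∀ᶠ t in 𝓝[<] β, ∀ j : Fin n, lam j t ≠ y := by
    intro y hy
    rw [eventually_all]
    intro j
    by_cases hj : (j : ℕ) < j₀
    · exact (h1 j hj).eventually_ne (hy j hj)
    · filter_upwards [(h2 j (le_of_not_gt hj)).eventually_gt_atTop |y|] with t ht hEq
      rw [hEq] at ht
      exact lt_irrefl _ ht
  have hevne0 : ∀ᶠ t in 𝓝[<] β, ∀ j : Fin n, j₀ ≤ (j : ℕ) → lam j t ≠ 0 := by
    rw [eventually_all]
    intro j
    by_cases hj : j₀ ≤ (j : ℕ)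
    · filter_upwards [(h2 j hj).eventually_gt_atTop 0] with t ht _
      exact fun hEq => by rw [hEq] at ht; simp at ht
    · exact Eventually.of_forall fun t hc => absurd hc hj
  -- choose points in S
  obtain ⟨xe, hxeInj, hxeS⟩ : ∃ xf : (Fin (m+3) ⊕ {j : Fin n // (j : ℕ) < j₀}) → ℝ,
      Function.Injective xf ∧ ∀ i, xf i ∈ S := by
    have g : (Fin (m+3) ⊕ {j : Fin n // (j : ℕ) < j₀}) ↪ ℕ :=
      (Fintype.equivFin _).toEmbedding.trans Fin.valEmbedding
    refine ⟨fun i => (Set.Infinite.natEmbedding S hS (g i) : ℝ), ?_,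
      fun i => (Set.Infinite.natEmbedding S hS (g i)).2⟩
    intro a b hab
    exact g.injective ((Set.Infinite.natEmbedding S hS).injective (Subtype.ext hab))
  -- the unknown vector and the remainder
  set U : ℝ → (Fin (m+3) ⊕ {j : Fin n // (j : ℕ) < j₀}) → ℝ := fun t =>
    Sum.elim
      (fun k => (if (k : ℕ) = 0 then -p t / (β - t) ^ 2 else 0) +
        ∑ j ∈ Finset.univ.filter (fun j : Fin n => j₀ ≤ (j : ℕ)),
          σ j t / ((β - t) ^ 2 * lam j t ^ ((k : ℕ) + 1)))
      (fun j => σ (j : Fin n) t / (β - t) ^ 2) with hU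
  set R : ℝ → ℝ → ℝ := fun t y =>
    ∑ j ∈ Finset.univ.filter (fun j : Fin n => j₀ ≤ (j : ℕ)),
      σ j t * y ^ (m+3) / ((β - t) ^ 2 * lam j t ^ (m+3) * (lam j t - y)) with hR
  -- the key algebraic identity
  have key : ∀ t y : ℝ, (β - t) ≠ 0 → (∀ j : Fin n, lam j t ≠ y) →
      (∀ j : Fin n, j₀ ≤ (j : ℕ) → lam j t ≠ 0) →
      (∑ k : Fin (m+3), y ^ (k : ℕ) * U t (Sum.inl k)) +
        (∑ j : {j : Fin n // (j : ℕ) < j₀}, (lam (j : Fin n) t - y)⁻¹ * U t (Sum.inr j))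
      = -((p t - ∑ j, σ j t / (lam j t - y)) / (β - t) ^ 2) - R t y := by
    intro t y hβt hne h0
    have hs : ((β - t) ^ 2) ≠ 0 := pow_ne_zero _ hβt
    have e0 : ∑ k : Fin (m+3), y ^ (k : ℕ) *
        (if (k : ℕ) = 0 then -p t / (β - t) ^ 2 else 0) = -p t / (β - t) ^ 2 := by
      rw [Finset.sum_eq_single (0 : Fin (m+3))]
      · simp
      · intro k _ hk
        rw [if_neg, mul_zero]
        exact fun h => hk (Fin.ext h)
      · simp
    have e1 : ∀ j ∈ Finset.univ.filter (fun j : Fin n => j₀ ≤ (j : ℕ)),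
        ∑ k : Fin (m+3), y ^ (k : ℕ) * (σ j t / ((β - t) ^ 2 * lam j t ^ ((k : ℕ) + 1)))
        = σ j t / (lam j t - y) / (β - t) ^ 2
          - σ j t * y ^ (m+3) / ((β - t) ^ 2 * lam j t ^ (m+3) * (lam j t - y)) := by
      intro j hj
      have hjge : j₀ ≤ (j : ℕ) := by simpa using hj
      have hl : lam j t ≠ 0 := h0 j hjge
      have hlx : lam j t - y ≠ 0 := sub_ne_zero.mpr (hne j)
      have hgeom := geomExp (K := m+2) (l := lam j t) (x := y) hl hlx
      have hconv : ∑ k : Fin (m+3), y ^ (k : ℕ) * (σ j t / ((β - t) ^ 2 * lam j t ^ ((k : ℕ) + 1)))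
          = (σ j t / (β - t) ^ 2) * ∑ k ∈ Finset.range (m+3), y ^ k / lam j t ^ (k + 1) := by
        rw [Finset.mul_sum,
          ← Fin.sum_univ_eq_sum_range (fun k => (σ j t / (β - t) ^ 2) * (y ^ k / lam j t ^ (k + 1)))]
        refine Finset.sum_congr rfl fun k _ => ?_
        have hlp : lam j t ^ ((k : ℕ) + 1) ≠ 0 := pow_ne_zero _ hl
        field_simp
      rw [show m + 2 + 1 = m + 3 from rfl] at hgeom
      rw [hconv, hgeom]
      have hp3 : lam j t ^ (m+3) ≠ 0 := pow_ne_zero _ hl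
      field_simp
    -- assemble
    simp only [hU, Sum.elim_inl, Sum.elim_inr, mul_add]
    rw [Finset.sum_add_distrib, e0]
    have e2 : ∑ k : Fin (m+3), y ^ (k : ℕ) *
        ∑ j ∈ Finset.univ.filter (fun j : Fin n => j₀ ≤ (j : ℕ)),
          σ j t / ((β - t) ^ 2 * lam j t ^ ((k : ℕ) + 1))
        = ∑ j ∈ Finset.univ.filter (fun j : Fin n => j₀ ≤ (j : ℕ)),
            (σ j t / (lam j t - y) / (β - t) ^ 2
            - σ j t * y ^ (m+3) / ((β - t) ^ 2 * lam j t ^ (m+3) * (lam j t - y))) := by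
      simp only [Finset.mul_sum]
      rw [Finset.sum_comm]
      exact Finset.sum_congr rfl e1
    rw [e2, Finset.sum_sub_distrib]
    have e3 : ∑ j : {j : Fin n // (j : ℕ) < j₀}, (lam (j : Fin n) t - y)⁻¹ * (σ (j : Fin n) t / (β - t) ^ 2)
        = ∑ j ∈ Finset.univ.filter (fun j : Fin n => (j : ℕ) < j₀),
            σ j t / (lam j t - y) / (β - t) ^ 2 := by
      have step1 : ∑ j : {j : Fin n // (j : ℕ) < j₀},
          (lam (j : Fin n) t - y)⁻¹ * (σ (j : Fin n) t / (β - t) ^ 2)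
          = ∑ j : {j : Fin n // (j : ℕ) < j₀}, σ (j : Fin n) t / (lam (j : Fin n) t - y) / (β - t) ^ 2 := by
        refine Finset.sum_congr rfl fun j _ => ?_
        have hlx : lam (j : Fin n) t - y ≠ 0 := sub_ne_zero.mpr (hne j)
        field_simp
      rw [step1, ← Finset.sum_subtype (Finset.univ.filter (fun j : Fin n => (j : ℕ) < j₀))
        (fun j => by simp) (fun j : Fin n => σ j t / (lam j t - y) / (β - t) ^ 2)]
    rw [e3]
    have e4 : ∑ j, σ j t / (lam j t - y)
        = (∑ j ∈ Finset.univ.filter (fun j : Fin n => (j : ℕ) < j₀), σ j t / (lam j t - y))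
          + ∑ j ∈ Finset.univ.filter (fun j : Fin n => j₀ ≤ (j : ℕ)), σ j t / (lam j t - y) := by
      rw [← Finset.sum_filter_add_sum_filter_not Finset.univ (fun j : Fin n => (j : ℕ) < j₀)]
      congr 1
      refine Finset.sum_congr (Finset.filter_congr fun j _ => by simp [not_lt]) fun _ _ => rfl
    rw [hR, e4]
    rw [sub_div, add_div, neg_sub, Finset.sum_div, Finset.sum_div]
    ring
  -- matrices
  set Mt : ℝ → Matrix (Fin (m+3) ⊕ {j : Fin n // (j : ℕ) < j₀})
      (Fin (m+3) ⊕ {j : Fin n // (j : ℕ) < j₀}) ℝ := fun t =>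
    Matrix.of fun i c => Sum.elim (fun k : Fin (m+3) => xe i ^ (k : ℕ))
      (fun j : {j : Fin n // (j : ℕ) < j₀} => (lam (j : Fin n) t - xe i)⁻¹) c with hMt
  set Minf : Matrix (Fin (m+3) ⊕ {j : Fin n // (j : ℕ) < j₀})
      (Fin (m+3) ⊕ {j : Fin n // (j : ℕ) < j₀}) ℝ :=
    Matrix.of fun i c => Sum.elim (fun k : Fin (m+3) => xe i ^ (k : ℕ))
      (fun j : {j : Fin n // (j : ℕ) < j₀} => (L (j : Fin n) - xe i)⁻¹) c with hMinf
  set Vt : ℝ → (Fin (m+3) ⊕ {j : Fin n // (j : ℕ) < j₀}) → ℝ := fun t i =>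
    -((p t - ∑ j, σ j t / (lam j t - xe i)) / (β - t) ^ 2) - R t (xe i) with hVt
  have hLinj : Function.Injective (fun j : {j : Fin n // (j : ℕ) < j₀} => L (j : Fin n)) := by
    intro a b hab
    by_contra hab'
    exact h1' a b a.2 b.2 (fun h => hab' (Subtype.ext h)) hab
  have hxLne : ∀ (i : Fin (m+3) ⊕ {j : Fin n // (j : ℕ) < j₀})
      (j : {j : Fin n // (j : ℕ) < j₀}), xe i ≠ L (j : Fin n) :=
    fun i j => hSL (xe i) (hxeS i) j j.2
  have hdet : Minf.det ≠ 0 := by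
    rw [hMinf]
    exact detAux (m+2) _ hLinj xe hxeInj hxLne
  -- remainder tends to zero
  have hR0 : ∀ y : ℝ, Tendsto (fun t => R t y) (𝓝[<] β) (𝓝 0) := by
    intro y
    have hterm : ∀ j ∈ Finset.univ.filter (fun j : Fin n => j₀ ≤ (j : ℕ)),
        Tendsto (fun t => σ j t * y ^ (m+3) / ((β - t) ^ 2 * lam j t ^ (m+3) * (lam j t - y)))
          (𝓝[<] β) (𝓝 0) := by
      intro j hj
      have hjge : j₀ ≤ (j : ℕ) := by simpa using hj
      obtain ⟨t₀, ht₀, C, hC⟩ := h3 j hjge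
      have hIoo : ∀ᶠ t in 𝓝[<] β, t ∈ Set.Ioo t₀ β := by
        filter_upwards [Ioo_mem_nhdsLT_of_mem (Set.mem_Ioc.mpr ⟨ht₀.2, le_rfl⟩)] with t ht
        exact ht
      refine squeeze_zero_norm' ?_
        (Filter.Tendsto.div_atTop (tendsto_const_nhds (x := 2 * max C 0 * |y| ^ (m+3)))
          (h2 j hjge))
      filter_upwards [hIoo, (h2 j hjge).eventually_ge_atTop (max 1 (2 * |y|))] with t ht hA
      have htβ : t < β := ht.2
      have hs : (0:ℝ) < (β - t) ^ 2 := pow_pos (sub_pos.mpr htβ) 2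
      have hσt : 0 < σ j t := hσpos j t ⟨le_trans ht₀.1 (le_of_lt ht.1), htβ⟩
      have hA1 : (1:ℝ) ≤ |lam j t| := le_trans (le_max_left _ _) hA
      have hA0 : (0:ℝ) < |lam j t| := lt_of_lt_of_le one_pos hA1
      have hA2 : 2 * |y| ≤ |lam j t| := le_trans (le_max_right _ _) hA
      have hay : |lam j t| / 2 ≤ |lam j t - y| := by
        have := abs_sub_abs_le_abs_sub (lam j t) y
        have h2' : |y| ≤ |lam j t| / 2 := by linarith
        linarith
      have hCb : σ j t ≤ max C 0 * ((β - t) ^ 2 * |lam j t| ^ m) := by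
        have hb := hC t ht
        have hpos : (0:ℝ) < (β - t) ^ 2 * |lam j t| ^ m := by positivity
        have := (div_le_iff₀ hpos).mp hb
        nlinarith [le_max_left C 0, mul_pos hs (pow_pos hA0 m)]
      have hnorm : ‖σ j t * y ^ (m+3) / ((β - t) ^ 2 * lam j t ^ (m+3) * (lam j t - y))‖
          = σ j t * |y| ^ (m+3) / ((β - t) ^ 2 * |lam j t| ^ (m+3) * |lam j t - y|) := by
        rw [Real.norm_eq_abs, abs_div, abs_mul, abs_mul, abs_mul, abs_pow, abs_pow, abs_pow,
          abs_of_pos hσt, abs_of_pos (sub_pos.mpr htβ)]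
      rw [hnorm]
      have hstep : σ j t * |y| ^ (m+3) / ((β - t) ^ 2 * |lam j t| ^ (m+3) * |lam j t - y|)
          ≤ (max C 0 * ((β - t) ^ 2 * |lam j t| ^ m)) * |y| ^ (m+3)
            / ((β - t) ^ 2 * |lam j t| ^ (m+3) * (|lam j t| / 2)) := by
        have h2y : (0:ℝ) < |lam j t| / 2 := by positivity
        gcongr
      refine le_trans hstep ?_
      have heq : (max C 0 * ((β - t) ^ 2 * |lam j t| ^ m)) * |y| ^ (m+3)
          / ((β - t) ^ 2 * |lam j t| ^ (m+3) * (|lam j t| / 2))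
          = 2 * max C 0 * |y| ^ (m+3) / |lam j t| ^ 4 := by
        rw [show m + 3 = m + 3 from rfl, pow_add |lam j t| m 3]
        have hsne : ((β - t) ^ 2) ≠ 0 := ne_of_gt hs
        have hAne : |lam j t| ≠ 0 := ne_of_gt hA0
        have hbt : β - t ≠ 0 := sub_ne_zero.mpr (ne_of_gt htβ)
        field_simp
      rw [heq]
      have h14 : |lam j t| ≤ |lam j t| ^ 4 := by
        calc |lam j t| = |lam j t| ^ 1 := (pow_one _).symm
          _ ≤ |lam j t| ^ 4 := pow_le_pow_right₀ hA1 (by norm_num)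
      have hD : (0:ℝ) ≤ 2 * max C 0 * |y| ^ (m+3) := by positivity
      gcongr
    have := tendsto_finset_sum (Finset.univ.filter (fun j : Fin n => j₀ ≤ (j : ℕ))) hterm
    rw [hR]
    simpa using this
  -- eventual linear system
  have hMUV : ∀ᶠ t in 𝓝[<] β, (Mt t).mulVec (U t) = Vt t := by
    have hall : ∀ᶠ t in 𝓝[<] β, ∀ i : Fin (m+3) ⊕ {j : Fin n // (j : ℕ) < j₀},
        ∀ j : Fin n, lam j t ≠ xe i := by
      rw [eventually_all]
      intro i
      exact hevne (xe i) (fun j hj => Ne.symm (hSL (xe i) (hxeS i) j hj))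
    filter_upwards [hβne, hall, hevne0] with t h1t h2t h3t
    funext i
    have hk := key t (xe i) h1t (h2t i) h3t
    show ∑ c, Mt t i c * U t c = Vt t i
    rw [hVt]
    rw [Fintype.sum_sum_type]
    simp only [hMt, Matrix.of_apply, Sum.elim_inl, Sum.elim_inr]
    exact hk
  -- limits of matrices and data
  have hMtlim : Tendsto Mt (𝓝[<] β) (𝓝 Minf) := by
    refine tendsto_pi_nhds.mpr ?_
    intro i
    rw [tendsto_pi_nhds]
    intro c
    cases c with
    | inl k => simpa [hMt, hMinf] using tendsto_const_nhds
    | inr j =>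
        have hLx : L (j : Fin n) - xe i ≠ 0 := sub_ne_zero.mpr (Ne.symm (hxLne i j))
        have := ((h1 (j : Fin n) j.2).sub_const (xe i)).inv₀ hLx
        simpa [hMt, hMinf] using this
  have hVtlim : ∀ i, Tendsto (fun t => Vt t i) (𝓝[<] β) (𝓝 (-(π₂ (xe i)))) := by
    intro i
    have := ((h4 (xe i) (hxeS i)).neg).sub (hR0 (xe i))
    rw [sub_zero] at this
    exact this
  have hdetlim : Tendsto (fun t => (Mt t).det) (𝓝[<] β) (𝓝 Minf.det) :=
    ((continuous_id.matrix_det).tendsto Minf).comp hMtlim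
  have hadjlim : Tendsto (fun t => (Mt t).adjugate) (𝓝[<] β) (𝓝 Minf.adjugate) :=
    ((continuous_id.matrix_adjugate).tendsto Minf).comp hMtlim
  -- the limit vector
  set W : (Fin (m+3) ⊕ {j : Fin n // (j : ℕ) < j₀}) → ℝ := fun i =>
    Minf.det⁻¹ * (Minf.adjugate.mulVec (fun i' => -(π₂ (xe i'))) i) with hW
  have hUlim : ∀ i, Tendsto (fun t => U t i) (𝓝[<] β) (𝓝 (W i)) := by
    intro i
    have hWt : Tendsto (fun t => (Mt t).det⁻¹ * ((Mt t).adjugate.mulVec (Vt t) i))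
        (𝓝[<] β) (𝓝 (W i)) := by
      rw [hW]
      refine (hdetlim.inv₀ hdet).mul ?_
      simp only [Matrix.mulVec, dotProduct]
      refine tendsto_finset_sum _ fun c _ => ?_
      exact (tendsto_pi_nhds.mp (tendsto_pi_nhds.mp hadjlim i) c).mul (hVtlim c)
    refine hWt.congr' ?_
    filter_upwards [hdetlim.eventually_ne hdet, hMUV] with t h1t h2t
    rw [← h2t, Matrix.mulVec_mulVec, Matrix.adjugate_mul, Matrix.smul_mulVec,
      Matrix.one_mulVec, Pi.smul_apply, smul_eq_mul, ← mul_assoc, inv_mul_cancel₀ h1t, one_mul]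
  -- generic rewriting of sums
  have hsplit : ∀ (k : ℕ) (t : ℝ),
      ∑ j ∈ Finset.univ.filter (fun j : Fin n => j₀ ≤ (j : ℕ)),
        σ j t / ((β - t) ^ 2 * lam j t ^ k)
      = (∑ j ∈ Finset.univ.filter (fun j : Fin n => j₀ ≤ (j : ℕ)),
          σ j t / lam j t ^ k) / (β - t) ^ 2 := by
    intro k t
    rw [Finset.sum_div]
    exact Finset.sum_congr rfl fun j _ => by
      rw [div_div, mul_comm (lam j t ^ k) ((β - t) ^ 2)]
  -- c1 data
  have hσblim : ∀ (j : Fin n) (hj : (j : ℕ) < j₀),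
      Tendsto (fun t => σ j t / (β - t) ^ 2) (𝓝[<] β) (𝓝 (W (Sum.inr ⟨j, hj⟩))) := by
    intro j hj
    have h := hUlim (Sum.inr ⟨j, hj⟩)
    refine h.congr fun t => ?_
    simp only [hU, Sum.elim_inr]
  -- c2
  have hfblim : Tendsto (fun t =>
      (-(p t) + ∑ j ∈ Finset.univ.filter (fun j : Fin n => j₀ ≤ (j : ℕ)),
        σ j t / lam j t) / (β - t) ^ 2) (𝓝[<] β) (𝓝 (W (Sum.inl ⟨0, by omega⟩))) := by
    have h := hUlim (Sum.inl ⟨0, by omega⟩)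
    refine h.congr fun t => ?_
    simp only [hU, Sum.elim_inl]
    rw [if_pos trivial, show 0 + 1 = 1 from rfl, hsplit 1 t, add_div, neg_div]
    simp only [pow_one]
  -- c3
  have hglim : Tendsto (fun t =>
      (∑ j ∈ Finset.univ.filter (fun j : Fin n => j₀ ≤ (j : ℕ)),
        σ j t / (lam j t) ^ 2) / (β - t) ^ 2) (𝓝[<] β) (𝓝 (W (Sum.inl ⟨1, by omega⟩))) := by
    have h := hUlim (Sum.inl ⟨1, by omega⟩)
    refine h.congr fun t => ?_
    simp only [hU, Sum.elim_inl]
    rw [if_neg (by norm_num), zero_add]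
    have he : ((⟨1, by omega⟩ : Fin (m+3)) : ℕ) + 1 = 2 := rfl
    rw [he, hsplit 2 t]
  have hgb0 : 0 ≤ W (Sum.inl ⟨1, by omega⟩) := by
    refine ge_of_tendsto (hUlim (Sum.inl ⟨1, by omega⟩)) ?_
    filter_upwards [hmem] with t ht
    simp only [hU, Sum.elim_inl]
    rw [if_neg (by norm_num), zero_add,
      show ((⟨1, by omega⟩ : Fin (m+3)) : ℕ) + 1 = 2 from rfl]
    refine Finset.sum_nonneg fun j _ => ?_
    have hσt := hσpos j t ⟨le_of_lt ht.1, ht.2⟩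
    positivity
  -- higher order sums
  have hhigh : ∀ k : ℕ, 3 ≤ k → Tendsto (fun t =>
      ∑ j ∈ Finset.univ.filter (fun j : Fin n => j₀ ≤ (j : ℕ)),
        σ j t / ((β - t) ^ 2 * lam j t ^ k)) (𝓝[<] β) (𝓝 0) := by
    intro k hk
    have hB : (0:ℝ) < W (Sum.inl ⟨1, by omega⟩) + 1 := by linarith
    rw [Metric.tendsto_nhds]
    intro ε hε
    have hδpos : 0 < ε / (2 * (W (Sum.inl ⟨1, by omega⟩) + 1)) := by positivity
    set δ := ε / (2 * (W (Sum.inl ⟨1, by omega⟩) + 1)) with hδdef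
    have hevA : ∀ᶠ t in 𝓝[<] β, ∀ j : Fin n, j₀ ≤ (j : ℕ) → max 1 (1/δ) ≤ |lam j t| := by
      rw [eventually_all]
      intro j
      by_cases hj : j₀ ≤ (j : ℕ)
      · filter_upwards [(h2 j hj).eventually_ge_atTop (max 1 (1/δ))] with t ht _
        exact ht
      · exact Eventually.of_forall fun t hc => absurd hc hj
    filter_upwards [hmem, hevA,
      hglim.eventually_le_const (lt_add_one (W (Sum.inl ⟨1, by omega⟩)))] with t ht hA hG
    rw [Real.dist_eq, sub_zero]
    have hsp : (0:ℝ) < (β - t) ^ 2 := pow_pos (sub_pos.mpr ht.2) 2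
    have habs : |∑ j ∈ Finset.univ.filter (fun j : Fin n => j₀ ≤ (j : ℕ)),
          σ j t / ((β - t) ^ 2 * lam j t ^ k)|
        ≤ ∑ j ∈ Finset.univ.filter (fun j : Fin n => j₀ ≤ (j : ℕ)),
            δ * (σ j t / ((β - t) ^ 2 * lam j t ^ 2)) := by
      refine le_trans (Finset.abs_sum_le_sum_abs _ _) (Finset.sum_le_sum fun j hj => ?_)
      have hσt := hσpos j t ⟨le_of_lt ht.1, ht.2⟩
      have hjge : j₀ ≤ (j : ℕ) := by simpa using hj
      have hA1 : (1:ℝ) ≤ |lam j t| := le_trans (le_max_left _ _) (hA j hjge)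
      have hA0 : (0:ℝ) < |lam j t| := lt_of_lt_of_le one_pos hA1
      have hAδ : 1/δ ≤ |lam j t| := le_trans (le_max_right _ _) (hA j hjge)
      have e : |σ j t / ((β - t) ^ 2 * lam j t ^ k)|
          = σ j t / ((β - t) ^ 2 * |lam j t| ^ k) := by
        rw [abs_div, abs_mul, abs_pow, abs_pow, abs_of_pos hσt,
          abs_of_pos (sub_pos.mpr ht.2)]
      rw [e, show lam j t ^ 2 = |lam j t| ^ 2 from (sq_abs _).symm]
      have hdecomp : (β - t) ^ 2 * |lam j t| ^ k
          = ((β - t) ^ 2 * |lam j t| ^ 2) * |lam j t| ^ (k - 2) := by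
        rw [mul_assoc, ← pow_add]
        congr 2
        omega
      rw [hdecomp, ← div_div]
      have hpow : 1/δ ≤ |lam j t| ^ (k - 2) := by
        refine le_trans hAδ ?_
        calc |lam j t| = |lam j t| ^ 1 := (pow_one _).symm
          _ ≤ |lam j t| ^ (k - 2) := pow_le_pow_right₀ hA1 (by omega)
      have hnum : (0:ℝ) ≤ σ j t / ((β - t) ^ 2 * |lam j t| ^ 2) := by positivity
      calc σ j t / ((β - t) ^ 2 * |lam j t| ^ 2) / |lam j t| ^ (k - 2)
          ≤ σ j t / ((β - t) ^ 2 * |lam j t| ^ 2) / (1/δ) := by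
            gcongr
        _ = δ * (σ j t / ((β - t) ^ 2 * |lam j t| ^ 2)) := by
            rw [div_eq_mul_inv, one_div, inv_inv]
            ring
    have hGform : ∑ j ∈ Finset.univ.filter (fun j : Fin n => j₀ ≤ (j : ℕ)),
        δ * (σ j t / ((β - t) ^ 2 * lam j t ^ 2))
        = δ * ((∑ j ∈ Finset.univ.filter (fun j : Fin n => j₀ ≤ (j : ℕ)),
            σ j t / (lam j t) ^ 2) / (β - t) ^ 2) := by
      rw [← Finset.mul_sum, hsplit 2 t]
    calc |∑ j ∈ Finset.univ.filter (fun j : Fin n => j₀ ≤ (j : ℕ)),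
          σ j t / ((β - t) ^ 2 * lam j t ^ k)|
        ≤ ∑ j ∈ Finset.univ.filter (fun j : Fin n => j₀ ≤ (j : ℕ)),
            δ * (σ j t / ((β - t) ^ 2 * lam j t ^ 2)) := habs
      _ = δ * ((∑ j ∈ Finset.univ.filter (fun j : Fin n => j₀ ≤ (j : ℕ)),
            σ j t / (lam j t) ^ 2) / (β - t) ^ 2) := hGform
      _ ≤ δ * (W (Sum.inl ⟨1, by omega⟩) + 1) :=
          mul_le_mul_of_nonneg_left hG (le_of_lt hδpos)
      _ = ε / 2 := by
          rw [hδdef, div_mul_eq_mul_div, mul_comm 2 (W (Sum.inl ⟨1, by omega⟩) + 1), ← div_div,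
            mul_div_assoc, div_self (ne_of_gt hB), mul_one]
      _ < ε := by linarith
  -- values of higher coefficients vanish
  have hWhigh : ∀ k : Fin (m+3), 2 ≤ (k : ℕ) → W (Sum.inl k) = 0 := by
    intro k hk2
    have hco : Tendsto (fun t => U t (Sum.inl k)) (𝓝[<] β) (𝓝 0) := by
      refine (hhigh ((k : ℕ) + 1) (by omega)).congr fun t => ?_
      simp only [hU, Sum.elim_inl]
      rw [if_neg (by omega), zero_add]
    exact tendsto_nhds_unique (hUlim (Sum.inl k)) hco
  -- final coefficients
  set σβ : Fin n → ℝ := fun j => if h : (j : ℕ) < j₀ then W (Sum.inr ⟨j, h⟩) else 0 with hσβ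
  have hσβval : ∀ (j : Fin n) (h : (j : ℕ) < j₀), σβ j = W (Sum.inr ⟨j, h⟩) := by
    intro j h
    simp only [hσβ]
    rw [dif_pos h]
  have hc5 : ∀ x ∈ S, -(π₂ x) = W (Sum.inl ⟨0, by omega⟩) + W (Sum.inl ⟨1, by omega⟩) * x +
      ∑ j ∈ Finset.univ.filter (fun j : Fin n => (j : ℕ) < j₀), σβ j / (L j - x) := by
    intro x hxS
    have hxLne' : ∀ j : Fin n, (j : ℕ) < j₀ → L j ≠ x := fun j hj => Ne.symm (hSL x hxS j hj)
    have hevid : ∀ᶠ t in 𝓝[<] β,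
        (∑ k : Fin (m+3), x ^ (k : ℕ) * U t (Sum.inl k)) +
          (∑ j : {j : Fin n // (j : ℕ) < j₀}, (lam (j : Fin n) t - x)⁻¹ * U t (Sum.inr j))
        = -((p t - ∑ j, σ j t / (lam j t - x)) / (β - t) ^ 2) - R t x := by
      filter_upwards [hβne, hevne x hxLne', hevne0] with t h1t h2t h3t
      exact key t x h1t h2t h3t
    have hlhs : Tendsto (fun t => (∑ k : Fin (m+3), x ^ (k : ℕ) * U t (Sum.inl k)) +
          (∑ j : {j : Fin n // (j : ℕ) < j₀}, (lam (j : Fin n) t - x)⁻¹ * U t (Sum.inr j)))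
        (𝓝[<] β) (𝓝 ((∑ k : Fin (m+3), x ^ (k : ℕ) * W (Sum.inl k)) +
          (∑ j : {j : Fin n // (j : ℕ) < j₀}, (L (j : Fin n) - x)⁻¹ * W (Sum.inr j)))) := by
      refine Tendsto.add ?_ ?_
      · exact tendsto_finset_sum _ fun k _ => (hUlim (Sum.inl k)).const_mul _
      · refine tendsto_finset_sum _ fun j _ => ?_
        exact (((h1 (j : Fin n) j.2).sub_const x).inv₀
          (sub_ne_zero.mpr (hxLne' (j : Fin n) j.2))).mul (hUlim (Sum.inr j))
    have hrhs : Tendsto (fun t => -((p t - ∑ j, σ j t / (lam j t - x)) / (β - t) ^ 2) - R t x)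
        (𝓝[<] β) (𝓝 (-(π₂ x) - 0)) := ((h4 x hxS).neg).sub (hR0 x)
    have heqlim := tendsto_nhds_unique (hlhs.congr' hevid) hrhs
    rw [sub_zero] at heqlim
    have hsum1 : ∑ k : Fin (m+3), x ^ (k : ℕ) * W (Sum.inl k)
        = W (Sum.inl ⟨0, by omega⟩) + W (Sum.inl ⟨1, by omega⟩) * x := by
      have hterm : ∀ k : Fin (m+3), x ^ (k : ℕ) * W (Sum.inl k)
          = (if k = ⟨0, by omega⟩ then W (Sum.inl (⟨0, by omega⟩ : Fin (m+3))) else 0)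
            + (if k = ⟨1, by omega⟩ then W (Sum.inl (⟨1, by omega⟩ : Fin (m+3))) * x else 0) := by
        intro k
        by_cases hk0 : k = ⟨0, by omega⟩
        · subst hk0
          rw [if_pos rfl, if_neg (by simp [Fin.ext_iff])]
          simp
        · by_cases hk1 : k = ⟨1, by omega⟩
          · subst hk1
            rw [if_neg hk0, if_pos rfl, zero_add, pow_one, mul_comm]
          · have hk2 : 2 ≤ (k : ℕ) := by
              have h0 : (k : ℕ) ≠ 0 := fun h => hk0 (Fin.ext (by simpa using h))
              have h1 : (k : ℕ) ≠ 1 := fun h => hk1 (Fin.ext (by simpa using h))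
              omega
            rw [hWhigh k hk2, mul_zero, if_neg hk0, if_neg hk1, add_zero]
      rw [Finset.sum_congr rfl (fun k _ => hterm k), Finset.sum_add_distrib,
        Finset.sum_ite_eq', Finset.sum_ite_eq']
      simp
    have hsum2 : ∑ j : {j : Fin n // (j : ℕ) < j₀}, (L (j : Fin n) - x)⁻¹ * W (Sum.inr j)
        = ∑ j ∈ Finset.univ.filter (fun j : Fin n => (j : ℕ) < j₀), σβ j / (L j - x) := by
      have hterm : ∀ j : {j : Fin n // (j : ℕ) < j₀},
          (L (j : Fin n) - x)⁻¹ * W (Sum.inr j) = σβ (j : Fin n) / (L (j : Fin n) - x) := by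
        intro j
        rw [hσβval _ j.2, div_eq_mul_inv, mul_comm]
      rw [Finset.sum_congr rfl (fun j _ => hterm j)]
      exact (Finset.sum_subtype (p := fun j : Fin n => (j : ℕ) < j₀)
        (Finset.univ.filter (fun j : Fin n => (j : ℕ) < j₀))
        (fun j => by simp) (fun j => σβ j / (L j - x))).symm
    rw [← heqlim, hsum1, hsum2]
  -- assemble
  refine ⟨σβ, W (Sum.inl ⟨0, by omega⟩), W (Sum.inl ⟨1, by omega⟩), ?_, hfblim, ⟨hglim, hgb0⟩,
    ?_, hc5⟩
  · intro j hj
    constructor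
    · rw [hσβval j hj]
      exact hσblim j hj
    · rw [hσβval j hj]
      refine ge_of_tendsto (hσblim j hj) ?_
      filter_upwards [hmem] with t ht
      have hσt := hσpos j t ⟨le_of_lt ht.1, ht.2⟩
      positivity
  · intro k hk
    exact (hhigh k hk).congr fun t => hsplit k t
end

section
/- Assume g + 4ψ ≠ 0 and h² + ψ·(σ₁ + … + σ_{j₀}) ≠ 0. If g > 0 and g + 4ψ > 0, then the closure (in ℝ) of the set Σ is the union of at most j₀ + 1 compact intervals; that is, there exist k ≤ j₀ + 1 and reals a₁ ≤ b₁, …, a_k ≤ b_k such that closure(Σ) = ⋃_{i=1}^{k} [aᵢ, bᵢ]. -/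
open Polynomial Set Filter Topology

private lemma core {Q : Polynomial ℝ} (hQ : Q ≠ 0) {lo hi : ℝ}
    (hbd : {x : ℝ | 0 ≤ Q.eval x} ⊆ Set.Icc lo hi)
    {P : Set ℝ} (hP : P.Finite) :
    ∃ k : ℕ, 2 * k ≤ Q.natDegree ∧ ∃ a b : Fin k → ℝ, (∀ i, a i ≤ b i) ∧
      closure ({x : ℝ | 0 ≤ Q.eval x} \ P) = ⋃ i, Set.Icc (a i) (b i) := by
  classical
  set A : Set ℝ := {x : ℝ | 0 ≤ Q.eval x} with hA
  have hAclosed : IsClosed A := isClosed_le continuous_const Q.continuous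
  have hAcomp : IsCompact A := isCompact_Icc.of_isClosed_subset hAclosed hbd
  set B : Set ℝ := closure (A \ P) with hB
  have hBA : B ⊆ A := closure_minimal diff_subset hAclosed
  have hBclosed : IsClosed B := isClosed_closure
  have hBcomp : IsCompact B := hAcomp.of_isClosed_subset hBclosed hBA
  -- the open set where Q > 0 is inside B
  set U : Set ℝ := {x : ℝ | 0 < Q.eval x} with hU
  have hUopen : IsOpen U := isOpen_lt continuous_const Q.continuous
  have hUB : U ⊆ B := by
    have hd : Dense Pᶜ := hP.countable.dense_compl ℝ
    refine (hd.open_subset_closure_inter hUopen).trans (closure_mono ?_)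
    rintro y ⟨hy1, hy2⟩
    exact ⟨le_of_lt (show (0:ℝ) < Q.eval y from hy1), hy2⟩
  -- components
  have hcomp : ∀ x ∈ B, connectedComponentIn B x
      = Set.Icc (sInf (connectedComponentIn B x)) (sSup (connectedComponentIn B x)) := by
    intro x hx
    have hconn : IsConnected (connectedComponentIn B x) :=
      isConnected_connectedComponentIn_iff.mpr hx
    have hclosed : IsClosed (connectedComponentIn B x) := by
      have hpc : IsPreconnected (closure (connectedComponentIn B x)) :=
        hconn.isPreconnected.closure
      have hsub : closure (connectedComponentIn B x) ⊆ B :=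
        closure_minimal (connectedComponentIn_subset _ _) hBclosed
      exact isClosed_of_closure_subset
        (hpc.subset_connectedComponentIn (subset_closure (mem_connectedComponentIn hx)) hsub)
    exact eq_Icc_of_connected_compact hconn
      (hBcomp.of_isClosed_subset hclosed (connectedComponentIn_subset _ _))
  have hcompact : ∀ x ∈ B, IsCompact (connectedComponentIn B x) := by
    intro x hx
    rw [hcomp x hx]; exact isCompact_Icc
  have hne : ∀ x ∈ B, (connectedComponentIn B x).Nonempty :=
    fun x hx => ⟨x, mem_connectedComponentIn hx⟩
  -- left endpoints are roots
  have hleft : ∀ x ∈ B, Q.eval (sInf (connectedComponentIn B x)) = 0 := by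
    intro x hx
    set C := connectedComponentIn B x with hC
    set a := sInf C with ha
    have hCicc : C = Set.Icc (sInf C) (sSup C) := hcomp x hx
    have haC : a ∈ C := (hcompact x hx).sInf_mem (hne x hx)
    have h0 : 0 ≤ Q.eval a := hBA (connectedComponentIn_subset _ _ haC)
    rcases h0.eq_or_lt with h | h
    · exact h.symm
    · exfalso
      obtain ⟨ε, hε, hball⟩ := Metric.isOpen_iff.mp hUopen a h
      have hs : Set.Icc (a - ε / 2) (sSup C) ⊆ B := by
        intro y hy
        rcases le_or_gt a y with h1 | h1
        · refine (connectedComponentIn_subset B x) ?_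
          rw [show connectedComponentIn B x = C from rfl, hCicc]
          exact ⟨h1, hy.2⟩
        · apply hUB
          apply hball
          rw [Metric.mem_ball, Real.dist_eq, abs_lt]
          constructor <;> [linarith [hy.1]; linarith]
      have hxs : x ∈ Set.Icc (a - ε / 2) (sSup C) := by
        have hxC : x ∈ C := mem_connectedComponentIn hx
        rw [hCicc] at hxC
        exact ⟨by linarith [hxC.1], hxC.2⟩
      have hsub : Set.Icc (a - ε / 2) (sSup C) ⊆ C :=
        isPreconnected_Icc.subset_connectedComponentIn hxs hs
      have hmem : a - ε / 2 ∈ C := by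
        apply hsub
        refine ⟨le_refl _, ?_⟩
        have haC2 : a ∈ Set.Icc (sInf C) (sSup C) := hCicc ▸ haC
        linarith [haC2.2]
      have : a ≤ a - ε / 2 := csInf_le (hcompact x hx).bddBelow hmem
      linarith
  -- right endpoints are roots
  have hright : ∀ x ∈ B, Q.eval (sSup (connectedComponentIn B x)) = 0 := by
    intro x hx
    set C := connectedComponentIn B x with hC
    set b := sSup C with hb
    have hCicc : C = Set.Icc (sInf C) (sSup C) := hcomp x hx
    have hbC : b ∈ C := (hcompact x hx).sSup_mem (hne x hx)
    have h0 : 0 ≤ Q.eval b := hBA (connectedComponentIn_subset _ _ hbC)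
    rcases h0.eq_or_lt with h | h
    · exact h.symm
    · exfalso
      obtain ⟨ε, hε, hball⟩ := Metric.isOpen_iff.mp hUopen b h
      have hs : Set.Icc (sInf C) (b + ε / 2) ⊆ B := by
        intro y hy
        rcases le_or_gt y b with h1 | h1
        · refine (connectedComponentIn_subset B x) ?_
          rw [show connectedComponentIn B x = C from rfl, hCicc]
          exact ⟨hy.1, h1⟩
        · apply hUB
          apply hball
          rw [Metric.mem_ball, Real.dist_eq, abs_lt]
          constructor <;> [linarith; linarith [hy.2]]
      have hxs : x ∈ Set.Icc (sInf C) (b + ε / 2) := by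
        have hxC : x ∈ C := mem_connectedComponentIn hx
        rw [hCicc] at hxC
        exact ⟨hxC.1, by linarith [hxC.2]⟩
      have hsub : Set.Icc (sInf C) (b + ε / 2) ⊆ C :=
        isPreconnected_Icc.subset_connectedComponentIn hxs hs
      have hmem : b + ε / 2 ∈ C := by
        apply hsub
        refine ⟨?_, le_refl _⟩
        have hbC2 : b ∈ Set.Icc (sInf C) (sSup C) := hCicc ▸ hbC
        linarith [hbC2.1]
      have : b + ε / 2 ≤ b := le_csSup (hcompact x hx).bddAbove hmem
      linarith
  -- degenerate components have even multiplicity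
  have heven : ∀ x ∈ B, sInf (connectedComponentIn B x) = sSup (connectedComponentIn B x) →
      Even (Q.rootMultiplicity (sInf (connectedComponentIn B x))) := by
    intro x hx hdeg
    set C := connectedComponentIn B x with hC
    set a := sInf C with ha
    have hCicc : C = Set.Icc (sInf C) (sSup C) := hcomp x hx
    have hCsingle : C = {a} := by
      rw [hCicc, ← ha, ← hdeg, Set.Icc_self]
    have haC : a ∈ C := by rw [hCsingle]; exact rfl
    have haB : a ∈ B := (connectedComponentIn_subset _ _) haC
    have hCa : connectedComponentIn B a = C :=
      (connectedComponentIn_eq haC).symm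
    by_contra hodd
    rw [Nat.not_even_iff_odd] at hodd
    obtain ⟨R, hfact, hnd⟩ := Q.exists_eq_pow_rootMultiplicity_mul_and_not_dvd hQ a
    have hRa : R.eval a ≠ 0 := fun hh => hnd (dvd_iff_isRoot.mpr hh)
    set m := Q.rootMultiplicity a with hm
    have hQeval : ∀ y : ℝ, Q.eval y = (y - a) ^ m * R.eval y := by
      intro y; rw [hfact]; simp [eval_pow]
    rcases hRa.lt_or_gt with hneg | hpos
    · -- R(a) < 0 : Q > 0 on left of a
      have hVopen : IsOpen {y : ℝ | R.eval y < 0} := isOpen_lt R.continuous continuous_const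
      obtain ⟨ε, hε, hball⟩ := Metric.isOpen_iff.mp hVopen a hneg
      have hs : Set.Icc (a - ε / 2) a ⊆ B := by
        intro y hy
        rcases eq_or_lt_of_le hy.2 with h1 | h1
        · exact h1 ▸ haB
        · apply hUB
          have hyball : R.eval y < 0 := by
            apply hball; rw [Metric.mem_ball, Real.dist_eq, abs_lt]
            constructor <;> [linarith [hy.1]; linarith]
          have : (y - a) ^ m < 0 := Odd.pow_neg hodd (by linarith)
          have := mul_pos_of_neg_of_neg this hyball
          rw [hU, Set.mem_setOf_eq, hQeval y]; exact this
      have hsub : Set.Icc (a - ε / 2) a ⊆ C := by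
        rw [← hCa]
        exact isPreconnected_Icc.subset_connectedComponentIn
          ⟨by linarith, le_refl _⟩ hs
      have : a - ε / 2 ∈ ({a} : Set ℝ) := by
        rw [← hCsingle]; exact hsub ⟨le_refl _, by linarith⟩
      rw [Set.mem_singleton_iff] at this
      linarith
    · -- R(a) > 0 : Q > 0 on right of a
      have hVopen : IsOpen {y : ℝ | 0 < R.eval y} := isOpen_lt continuous_const R.continuous
      obtain ⟨ε, hε, hball⟩ := Metric.isOpen_iff.mp hVopen a hpos
      have hs : Set.Icc a (a + ε / 2) ⊆ B := by
        intro y hy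
        rcases eq_or_lt_of_le hy.1 with h1 | h1
        · exact h1 ▸ haB
        · apply hUB
          have hyball : 0 < R.eval y := by
            apply hball; rw [Metric.mem_ball, Real.dist_eq, abs_lt]
            constructor <;> [linarith; linarith [hy.2]]
          have hpow : 0 < (y - a) ^ m := pow_pos (by linarith) m
          have := mul_pos hpow hyball
          rw [hU, Set.mem_setOf_eq, hQeval y]; exact this
      have hsub : Set.Icc a (a + ε / 2) ⊆ C := by
        rw [← hCa]
        exact isPreconnected_Icc.subset_connectedComponentIn
          ⟨le_refl _, by linarith⟩ hs
      have : a + ε / 2 ∈ ({a} : Set ℝ) := by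
        rw [← hCsingle]; exact hsub ⟨by linarith, le_refl _⟩
      rw [Set.mem_singleton_iff] at this
      linarith
  -- the set of left endpoints of components
  set E : Set ℝ := {r | r ∈ B ∧ sInf (connectedComponentIn B r) = r} with hE
  have hEroot : ∀ r ∈ E, Q.eval r = 0 := by
    intro r hr
    have := hleft r hr.1
    rwa [hr.2] at this
  have hEfin : E.Finite := by
    apply Set.Finite.subset Q.roots.toFinset.finite_toSet
    intro r hr
    simp only [Finset.coe_sort_coe, Finset.mem_coe, Multiset.mem_toFinset, mem_roots', IsRoot.def]
    exact ⟨hQ, hEroot r hr⟩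
  set bfun : ℝ → ℝ := fun r => sSup (connectedComponentIn B r) with hbfun
  have hEcomp : ∀ r ∈ E, connectedComponentIn B r = Set.Icc r (bfun r) := by
    intro r hr
    have := hcomp r hr.1
    rwa [hr.2] at this
  have hrle : ∀ r ∈ E, r ≤ bfun r := by
    intro r hr
    have hm := mem_connectedComponentIn hr.1
    rw [hEcomp r hr] at hm
    exact hm.2
  have hbroot : ∀ r ∈ E, Q.eval (bfun r) = 0 := fun r hr => hright r hr.1
  -- B is the union over E
  have hBunion : B = ⋃ r ∈ E, Set.Icc r (bfun r) := by
    ext y; constructor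
    · intro hy
      set r := sInf (connectedComponentIn B y) with hrdef
      have hrC : r ∈ connectedComponentIn B y := (hcompact y hy).sInf_mem (hne y hy)
      have hrB : r ∈ B := connectedComponentIn_subset _ _ hrC
      have hcc : connectedComponentIn B y = connectedComponentIn B r :=
        connectedComponentIn_eq hrC
      have hrE : r ∈ E := ⟨hrB, by rw [← hcc, ← hrdef]⟩
      refine Set.mem_iUnion₂.mpr ⟨r, hrE, ?_⟩
      rw [← hEcomp r hrE, ← hcc]
      exact mem_connectedComponentIn hy
    · intro hy
      obtain ⟨r, hrE, hyr⟩ := Set.mem_iUnion₂.mp hy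
      refine connectedComponentIn_subset B r ?_
      rw [hEcomp r hrE]; exact hyr
  -- counting
  set F : Finset ℝ := hEfin.toFinset with hF
  have hmemF : ∀ r, r ∈ F ↔ r ∈ E := fun r => hEfin.mem_toFinset
  have hmemcomp : ∀ r ∈ E, ∀ z ∈ ({r, bfun r} : Finset ℝ), z ∈ connectedComponentIn B r := by
    intro r hr z hz
    rw [hEcomp r hr]
    rcases Finset.mem_insert.mp hz with h | h
    · rw [h]; exact ⟨le_refl r, hrle r hr⟩
    · rw [Finset.mem_singleton] at h
      rw [h]; exact ⟨hrle r hr, le_refl _⟩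
  have hdisj : Set.PairwiseDisjoint (↑F) (fun r => ({r, bfun r} : Finset ℝ)) := by
    intro r hr r' hr' hner
    rw [Finset.mem_coe, hmemF] at hr hr'
    rw [Function.onFun]
    rw [Finset.disjoint_left]
    intro z hz hz'
    have h1 := hmemcomp r hr z hz
    have h2 := hmemcomp r' hr' z hz'
    have e1 : connectedComponentIn B r = connectedComponentIn B z := connectedComponentIn_eq h1
    have e2 : connectedComponentIn B r' = connectedComponentIn B z := connectedComponentIn_eq h2
    apply hner
    rw [← hr.2, ← hr'.2, e1, e2]
  have h2le : ∀ r ∈ F, 2 ≤ ∑ z ∈ ({r, bfun r} : Finset ℝ), Q.rootMultiplicity z := by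
    intro r hrF
    have hr : r ∈ E := (hmemF r).mp hrF
    rcases eq_or_lt_of_le (hrle r hr) with h | h
    · have hsingle : ({r, bfun r} : Finset ℝ) = {r} := by
        rw [← h]
        exact Finset.insert_eq_self.mpr (Finset.mem_singleton_self r)
      rw [hsingle, Finset.sum_singleton]
      have hev : Even (Q.rootMultiplicity r) := by
        have := heven r hr.1 (by rw [hr.2]; exact h)
        rwa [hr.2] at this
      have hpos : 0 < Q.rootMultiplicity r :=
        (Polynomial.rootMultiplicity_pos hQ).mpr (hEroot r hr)
      obtain ⟨t, ht⟩ := hev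
      omega
    · rw [Finset.sum_pair (ne_of_lt h)]
      have h1 : 0 < Q.rootMultiplicity r :=
        (Polynomial.rootMultiplicity_pos hQ).mpr (hEroot r hr)
      have h2 : 0 < Q.rootMultiplicity (bfun r) :=
        (Polynomial.rootMultiplicity_pos hQ).mpr (hbroot r hr)
      omega
  have hsubset : F.biUnion (fun r => ({r, bfun r} : Finset ℝ)) ⊆ Q.roots.toFinset := by
    intro z hz
    obtain ⟨r, hrF, hzr⟩ := Finset.mem_biUnion.mp hz
    have hr : r ∈ E := (hmemF r).mp hrF
    rw [Multiset.mem_toFinset, mem_roots', IsRoot.def]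
    refine ⟨hQ, ?_⟩
    rcases Finset.mem_insert.mp hzr with h | h
    · rw [h]; exact hEroot r hr
    · rw [Finset.mem_singleton] at h
      rw [h]; exact hbroot r hr
  have hcount : 2 * F.card ≤ Q.natDegree := by
    calc 2 * F.card = ∑ _r ∈ F, 2 := by rw [Finset.sum_const, smul_eq_mul, mul_comm]
    _ ≤ ∑ r ∈ F, ∑ z ∈ ({r, bfun r} : Finset ℝ), Q.rootMultiplicity z :=
        Finset.sum_le_sum h2le
    _ = ∑ z ∈ F.biUnion (fun r => ({r, bfun r} : Finset ℝ)), Q.rootMultiplicity z :=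
        (Finset.sum_biUnion hdisj).symm
    _ ≤ ∑ z ∈ Q.roots.toFinset, Q.rootMultiplicity z :=
        Finset.sum_le_sum_of_subset hsubset
    _ = ∑ z ∈ Q.roots.toFinset, Q.roots.count z :=
        Finset.sum_congr rfl (fun z _ => (count_roots Q).symm)
    _ = Multiset.card Q.roots := Multiset.toFinset_sum_count_eq Q.roots
    _ ≤ Q.natDegree := Q.card_roots'
  -- assembly
  refine ⟨F.card, hcount, fun i => ((F.equivFin.symm i : F) : ℝ),
    fun i => bfun ((F.equivFin.symm i : F) : ℝ), ?_, ?_⟩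
  · intro i
    exact hrle _ ((hmemF _).mp (F.equivFin.symm i).2)
  · show B = _
    rw [hBunion]
    ext y
    simp only [Set.mem_iUnion]
    constructor
    · rintro ⟨r, hrE, hy⟩
      exact ⟨F.equivFin ⟨r, (hmemF r).mpr hrE⟩, by simpa using hy⟩
    · rintro ⟨i, hy⟩
      exact ⟨_, (hmemF _).mp (F.equivFin.symm i).2, hy⟩

/-- The rational Nevanlinna-type function `x ↦ -(c₀ + c₁·x + Σⱼ sⱼ/(λⱼ - x))`
used for both `π₂` (with data `(f,g,σ)`) and `κ₀` (with data `(φ,ψ,μ)`). -/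
noncomputable def ratFun (j₀ : ℕ) (lam s : Fin j₀ → ℝ) (c₀ c₁ : ℝ) (x : ℝ) : ℝ :=
  -(c₀ + c₁ * x + ∑ j, s j / (lam j - x))

/-- The set `Σ = {λ ∈ ℝ : λ ≠ λⱼ ∀j, h² - κ₀(λ)·π₂(λ) ≥ (1/4)·π₂(λ)²}`. -/
noncomputable def SigmaSet (j₀ : ℕ) (lam σ μ : Fin j₀ → ℝ) (f g φ ψ h : ℝ) : Set ℝ :=
  {x : ℝ | (∀ j, x ≠ lam j) ∧
    h ^ 2 - ratFun j₀ lam μ φ ψ x * ratFun j₀ lam σ f g x ≥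
      (1 / 4) * (ratFun j₀ lam σ f g x) ^ 2}

/-- (Theorem 6.6 (a), first case.)  If `g + 4ψ ≠ 0`,
`h² + ψ·Σσⱼ ≠ 0`, `g > 0` and `g + 4ψ > 0`, then `closure Σ` is the union of at most
`j₀ + 1` compact intervals. -/
theorem stmt9 (j₀ : ℕ) (lam σ μ : Fin j₀ → ℝ) (hσ : ∀ j, 0 ≤ σ j)
    (f g φ ψ h : ℝ)
    (hne1 : g + 4 * ψ ≠ 0) (hne2 : h ^ 2 + ψ * ∑ j, σ j ≠ 0)
    (hg : 0 < g) (hgψ : 0 < g + 4 * ψ) :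
    ∃ k : ℕ, k ≤ j₀ + 1 ∧ ∃ a b : Fin k → ℝ, (∀ i, a i ≤ b i) ∧
      closure (SigmaSet j₀ lam σ μ f g φ ψ h) = ⋃ i, Set.Icc (a i) (b i) := by
  classical
  set D : Polynomial ℝ := ∏ j : Fin j₀, (C (lam j) - X) with hD
  set Pp : (Fin j₀ → ℝ) → ℝ → ℝ → Polynomial ℝ := fun s c₀ c₁ =>
    -((C c₀ + C c₁ * X) * D +
      ∑ j : Fin j₀, C (s j) * ∏ i ∈ Finset.univ.erase j, (C (lam i) - X)) with hPp
  set Q : Polynomial ℝ :=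
    C (h ^ 2) * D ^ 2 - Pp μ φ ψ * Pp σ f g - C (4⁻¹ : ℝ) * (Pp σ f g) ^ 2 with hQdef
  -- evaluation facts
  have hDev : ∀ x : ℝ, D.eval x = ∏ j, (lam j - x) := by
    intro x; simp [hD, eval_prod]
  have hDne : ∀ x : ℝ, (∀ j, x ≠ lam j) → D.eval x ≠ 0 := by
    intro x hx
    rw [hDev]
    exact Finset.prod_ne_zero_iff.mpr
      (fun j _ => sub_ne_zero.mpr (fun hh => hx j hh.symm))
  have hPev : ∀ (s : Fin j₀ → ℝ) (c₀ c₁ x : ℝ), (∀ j, x ≠ lam j) →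
      (Pp s c₀ c₁).eval x = ratFun j₀ lam s c₀ c₁ x * D.eval x := by
    intro s c₀ c₁ x hx
    have hstep : ∀ j : Fin j₀, (s j / (lam j - x)) * ∏ i, (lam i - x)
        = s j * ∏ i ∈ Finset.univ.erase j, (lam i - x) := by
      intro j
      have hne0 : lam j - x ≠ 0 := sub_ne_zero.mpr (fun hh => hx j hh.symm)
      rw [← Finset.mul_prod_erase Finset.univ _ (Finset.mem_univ j)]
      field_simp
    simp only [hPp, eval_neg, eval_add, eval_mul, eval_finset_sum, eval_prod, eval_sub,
      eval_C, eval_X, ratFun, hDev]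
    rw [neg_mul, add_mul, add_mul, Finset.sum_mul,
      Finset.sum_congr rfl (fun j _ => hstep j)]
    ring
  have hQev : ∀ x : ℝ, (∀ j, x ≠ lam j) →
      Q.eval x = (h ^ 2 - ratFun j₀ lam μ φ ψ x * ratFun j₀ lam σ f g x
        - 4⁻¹ * (ratFun j₀ lam σ f g x) ^ 2) * (D.eval x) ^ 2 := by
    intro x hx
    simp only [hQdef, eval_sub, eval_mul, eval_pow, eval_C]
    rw [hPev μ φ ψ x hx, hPev σ f g x hx]
    ring
  have hSigma : SigmaSet j₀ lam σ μ f g φ ψ h = {x : ℝ | 0 ≤ Q.eval x} \ Set.range lam := by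
    ext x
    simp only [SigmaSet, Set.mem_setOf_eq, Set.mem_diff, Set.mem_range, not_exists]
    constructor
    · rintro ⟨h1, h2⟩
      refine ⟨?_, fun j hj => h1 j hj.symm⟩
      rw [hQev x h1]
      have hD2 : (0:ℝ) ≤ (D.eval x) ^ 2 := sq_nonneg _
      apply mul_nonneg _ hD2
      rw [ge_iff_le, one_div] at h2
      linarith
    · rintro ⟨h1, h2⟩
      have hx : ∀ j, x ≠ lam j := fun j hj => h2 j hj.symm
      refine ⟨hx, ?_⟩
      rw [hQev x hx] at h1
      have hD2 : (0:ℝ) < (D.eval x) ^ 2 := pow_two_pos_of_ne_zero (hDne x hx)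
      have h3 := (mul_nonneg_iff_of_pos_right hD2).mp h1
      rw [ge_iff_le, one_div]
      linarith
  -- degrees and coefficients
  set Mo : Polynomial ℝ := ∏ j : Fin j₀, (X - C (lam j)) with hMo
  have hMoMonic : Mo.Monic := monic_prod_of_monic _ _ (fun j _ => monic_X_sub_C _)
  have hMoDeg : Mo.natDegree = j₀ := by
    rw [hMo, natDegree_prod_of_monic _ _ (fun j _ => monic_X_sub_C _)]
    simp [natDegree_X_sub_C]
  have hDM : D = C ((-1 : ℝ) ^ j₀) * Mo := by
    have hC : (C ((-1 : ℝ) ^ j₀) : Polynomial ℝ) = (-1) ^ j₀ := by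
      rw [map_pow, map_neg, map_one]
    rw [hD, hMo, hC]
    calc ∏ j : Fin j₀, (C (lam j) - X)
        = ∏ j : Fin j₀, ((-1 : Polynomial ℝ) * (X - C (lam j))) := by
          apply Finset.prod_congr rfl; intros; ring
      _ = (∏ _j : Fin j₀, (-1 : Polynomial ℝ)) * ∏ j : Fin j₀, (X - C (lam j)) :=
          Finset.prod_mul_distrib
      _ = (-1) ^ j₀ * ∏ j : Fin j₀, (X - C (lam j)) := by
          rw [Finset.prod_const, Finset.card_univ, Fintype.card_fin]
  have hDdeg : D.natDegree = j₀ := by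
    rw [hDM, natDegree_C_mul (pow_ne_zero _ (by norm_num : (-1:ℝ) ≠ 0)), hMoDeg]
  have hDcoeff : D.coeff j₀ = (-1 : ℝ) ^ j₀ := by
    have : Mo.coeff j₀ = 1 := by
      rw [← hMoDeg]; exact hMoMonic.coeff_natDegree
    rw [hDM, coeff_C_mul, this, mul_one]
  -- Pp degree bound and top coefficient
  have hlin : ∀ c₀ c₁ : ℝ, (C c₀ + C c₁ * X : Polynomial ℝ).natDegree ≤ 1 := by
    intro c₀ c₁
    apply le_trans (natDegree_add_le _ _)
    refine max_le (by simp) ?_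
    apply le_trans natDegree_mul_le
    simp
  have hSdeg : ∀ s : Fin j₀ → ℝ,
      (∑ j : Fin j₀, C (s j) * ∏ i ∈ Finset.univ.erase j, (C (lam i) - X)).natDegree ≤ j₀ := by
    intro s
    apply natDegree_sum_le_of_forall_le
    intro j _
    apply le_trans natDegree_mul_le
    rw [natDegree_C, zero_add]
    apply le_trans (natDegree_prod_le _ _)
    have hb : ∀ i ∈ Finset.univ.erase j, (C (lam i) - X).natDegree ≤ 1 := by
      intro i _
      apply le_trans (natDegree_sub_le _ _)
      simp
    apply le_trans (Finset.sum_le_card_nsmul _ _ 1 hb)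
    simp only [smul_eq_mul, mul_one]
    exact le_trans Finset.card_erase_le (by simp)
  have hPpdeg : ∀ (s : Fin j₀ → ℝ) (c₀ c₁ : ℝ), (Pp s c₀ c₁).natDegree ≤ j₀ + 1 := by
    intro s c₀ c₁
    simp only [hPp]
    rw [natDegree_neg]
    apply le_trans (natDegree_add_le _ _)
    refine max_le ?_ (le_trans (hSdeg s) (by omega))
    apply le_trans natDegree_mul_le
    have := hlin c₀ c₁
    omega
  have hPpcoeff : ∀ (s : Fin j₀ → ℝ) (c₀ c₁ : ℝ),
      (Pp s c₀ c₁).coeff (j₀ + 1) = -(c₁ * (-1 : ℝ) ^ j₀) := by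
    intro s c₀ c₁
    simp only [hPp]
    rw [coeff_neg, coeff_add,
      coeff_eq_zero_of_natDegree_lt (lt_of_le_of_lt (hSdeg s) (by omega)), add_zero]
    have hcm := coeff_mul_add_eq_of_natDegree_le (hlin c₀ c₁) (le_of_eq hDdeg)
    rw [show j₀ + 1 = 1 + j₀ from by omega, hcm, hDcoeff]
    congr 1
    simp [coeff_C]
  -- Q's top coefficient
  have hQcoeff : Q.coeff (2 * j₀ + 2) = -(ψ * g + 4⁻¹ * (g * g)) := by
    have hsq : ((-1 : ℝ) ^ j₀) * ((-1 : ℝ) ^ j₀) = 1 := by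
      rw [← pow_add, ← two_mul, pow_mul]; norm_num
    have t1 : (C (h ^ 2) * D ^ 2).coeff (2 * j₀ + 2) = 0 := by
      apply coeff_eq_zero_of_natDegree_lt
      apply lt_of_le_of_lt natDegree_mul_le
      rw [natDegree_C, zero_add, pow_two]
      apply lt_of_le_of_lt natDegree_mul_le
      omega
    have t2 : (Pp μ φ ψ * Pp σ f g).coeff (2 * j₀ + 2) = (ψ * g) := by
      have := coeff_mul_add_eq_of_natDegree_le (hPpdeg μ φ ψ) (hPpdeg σ f g)
      rw [show 2 * j₀ + 2 = (j₀ + 1) + (j₀ + 1) from by omega, this,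
        hPpcoeff μ φ ψ, hPpcoeff σ f g]
      calc -(ψ * (-1:ℝ) ^ j₀) * -(g * (-1:ℝ) ^ j₀)
          = (ψ * g) * ((-1:ℝ) ^ j₀ * (-1:ℝ) ^ j₀) := by ring
        _ = ψ * g := by rw [hsq, mul_one]
    have t3 : (C (4⁻¹ : ℝ) * (Pp σ f g) ^ 2).coeff (2 * j₀ + 2) = 4⁻¹ * (g * g) := by
      rw [coeff_C_mul, pow_two]
      have := coeff_mul_add_eq_of_natDegree_le (hPpdeg σ f g) (hPpdeg σ f g)
      rw [show 2 * j₀ + 2 = (j₀ + 1) + (j₀ + 1) from by omega, this, hPpcoeff σ f g]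
      calc (4⁻¹:ℝ) * (-(g * (-1:ℝ) ^ j₀) * -(g * (-1:ℝ) ^ j₀))
          = 4⁻¹ * ((g * g) * ((-1:ℝ) ^ j₀ * (-1:ℝ) ^ j₀)) := by ring
        _ = 4⁻¹ * (g * g) := by rw [hsq, mul_one]
    rw [hQdef, coeff_sub, coeff_sub, t1, t2, t3]
    ring
  have hQcoeffneg : Q.coeff (2 * j₀ + 2) < 0 := by
    rw [hQcoeff]
    nlinarith
  have hQne : Q ≠ 0 := by
    intro hh
    rw [hh, coeff_zero] at hQcoeffneg
    exact lt_irrefl 0 hQcoeffneg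
  have hQdegle : Q.natDegree ≤ 2 * j₀ + 2 := by
    rw [hQdef]
    apply le_trans (natDegree_sub_le _ _)
    refine max_le (le_trans (natDegree_sub_le _ _) (max_le ?_ ?_)) ?_
    · apply le_trans natDegree_mul_le
      rw [natDegree_C, zero_add, pow_two]
      apply le_trans natDegree_mul_le
      omega
    · apply le_trans natDegree_mul_le
      have h1 := hPpdeg μ φ ψ; have h2 := hPpdeg σ f g
      omega
    · apply le_trans natDegree_mul_le
      rw [natDegree_C, zero_add, pow_two]
      apply le_trans natDegree_mul_le
      have h2 := hPpdeg σ f g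
      omega
  have hQdeg : Q.natDegree = 2 * j₀ + 2 :=
    le_antisymm hQdegle (le_natDegree_of_ne_zero (ne_of_lt hQcoeffneg))
  have hQlead : Q.leadingCoeff < 0 := by
    rw [Polynomial.leadingCoeff, hQdeg]; exact hQcoeffneg
  have hQdegpos : 0 < Q.degree := by
    rw [← natDegree_pos_iff_degree_pos, hQdeg]; omega
  -- boundedness of {Q ≥ 0}
  have T1 : Tendsto (fun x : ℝ => Q.eval x) atTop atBot :=
    Q.tendsto_atBot_of_leadingCoeff_nonpos hQdegpos (le_of_lt hQlead)
  have T2 : Tendsto (fun x : ℝ => Q.eval x) atBot atBot := by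
    set Q2 := Q.comp (-X) with hQ2
    have hXdeg : (-X : Polynomial ℝ).natDegree = 1 := by simp
    have hQ2deg : Q2.natDegree = Q.natDegree := by
      rw [hQ2, natDegree_comp, hXdeg, mul_one]
    have hQ2lead : Q2.leadingCoeff ≤ 0 := by
      rw [hQ2, leadingCoeff_comp (by rw [hXdeg]; omega)]
      have hl : (-X : Polynomial ℝ).leadingCoeff = -1 := by
        rw [leadingCoeff_neg, leadingCoeff_X]
      rw [hl, hQdeg]
      have : (-1 : ℝ) ^ (2 * j₀ + 2) = 1 := by
        rw [show 2 * j₀ + 2 = 2 * (j₀ + 1) from by omega, pow_mul]; norm_num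
      rw [this, mul_one]
      exact le_of_lt hQlead
    have hQ2degpos : 0 < Q2.degree := by
      rw [← natDegree_pos_iff_degree_pos, hQ2deg, hQdeg]; omega
    have T := Q2.tendsto_atBot_of_leadingCoeff_nonpos hQ2degpos hQ2lead
    have Tc := T.comp tendsto_neg_atBot_atTop
    have heq : (fun x : ℝ => Q2.eval (-x)) = fun x : ℝ => Q.eval x := by
      funext x
      rw [hQ2, eval_comp]
      simp
    rw [show ((fun x : ℝ => Q2.eval x) ∘ (Neg.neg : ℝ → ℝ)) = fun x : ℝ => Q2.eval (-x)
      from rfl, heq] at Tc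
    exact Tc
  obtain ⟨M1, hM1⟩ := eventually_atTop.mp (T1.eventually (eventually_lt_atBot (0 : ℝ)))
  obtain ⟨M2, hM2⟩ := eventually_atBot.mp (T2.eventually (eventually_lt_atBot (0 : ℝ)))
  have hbd : {x : ℝ | 0 ≤ Q.eval x} ⊆ Set.Icc M2 M1 := by
    intro x hx
    rw [Set.mem_setOf_eq] at hx
    constructor
    · by_contra hc
      push_neg at hc
      exact absurd hx (not_le.mpr (hM2 x (le_of_lt hc)))
    · by_contra hc
      push_neg at hc
      exact absurd hx (not_le.mpr (hM1 x (le_of_lt hc)))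
  obtain ⟨k, hk, a, b, hab, hclos⟩ := core hQne hbd (Set.finite_range lam)
  rw [hQdeg] at hk
  refine ⟨k, by omega, a, b, hab, ?_⟩
  rw [hSigma]
  exact hclos
end

section
/- Assume g + 4ψ ≠ 0 and h² + ψ·(σ₁ + … + σ_{j₀}) ≠ 0. If g > 0 and g + 4ψ < 0, then the closure (in ℝ) of the set Σ is the union of a left half-line, at most j₀ compact intervals, and a right half-line; that is, there exist s₁, s₂ ∈ ℝ, k ≤ j₀ and reals a₁ ≤ b₁, …, a_k ≤ b_k such that closure(Σ) = (−∞, s₁] ∪ ⋃_{i=1}^{k} [aᵢ, bᵢ] ∪ [s₂, ∞). -/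
open Set Polynomial Filter



lemma crossing_up {C : Set ℝ} (hC : IsClosed C) {x y : ℝ} (hxy : x ≤ y)
    (hx : x ∈ C) (hy : y ∉ C) : ∃ z ∈ Set.Icc x y, z ∈ frontier C := by
  set S := C ∩ Set.Icc x y with hS
  have hne : S.Nonempty := ⟨x, hx, le_refl x, hxy⟩
  have hbdd : BddAbove S := ⟨y, fun w hw => hw.2.2⟩
  have hz := (hC.inter isClosed_Icc).csSup_mem hne hbdd
  set z := sSup S with hzdef
  have hzx : x ≤ z := le_csSup hbdd ⟨hx, le_refl x, hxy⟩
  have hzy : z ≤ y := hz.2.2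
  have hzC : z ∈ C := hz.1
  have hzy' : z < y := lt_of_le_of_ne hzy (fun h => hy (h ▸ hzC))
  refine ⟨z, ⟨hzx, hzy⟩, ?_⟩
  rw [frontier_eq_closure_inter_closure]
  refine ⟨subset_closure hzC, ?_⟩
  have hsub : Set.Ioc z y ⊆ Cᶜ := by
    intro p hp hpC
    exact absurd (le_csSup hbdd ⟨hpC, le_trans hzx hp.1.le, hp.2⟩) (not_le.2 hp.1)
  have : z ∈ closure (Set.Ioc z y) := by
    rw [closure_Ioc hzy'.ne]; exact ⟨le_refl z, hzy⟩
  exact closure_mono hsub this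

lemma crossing_down {C : Set ℝ} (hC : IsClosed C) {x y : ℝ} (hxy : x ≤ y)
    (hx : x ∉ C) (hy : y ∈ C) : ∃ z ∈ Set.Icc x y, z ∈ frontier C := by
  set S := C ∩ Set.Icc x y with hS
  have hne : S.Nonempty := ⟨y, hy, hxy, le_refl y⟩
  have hbdd : BddBelow S := ⟨x, fun w hw => hw.2.1⟩
  have hz := (hC.inter isClosed_Icc).csInf_mem hne hbdd
  set z := sInf S with hzdef
  have hzy : z ≤ y := csInf_le hbdd ⟨hy, hxy, le_refl y⟩
  have hzx : x ≤ z := hz.2.1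
  have hzC : z ∈ C := hz.1
  have hzx' : x < z := lt_of_le_of_ne hzx (fun h => hx (h ▸ hzC))
  refine ⟨z, ⟨hzx, hzy⟩, ?_⟩
  rw [frontier_eq_closure_inter_closure]
  refine ⟨subset_closure hzC, ?_⟩
  have hsub : Set.Ico x z ⊆ Cᶜ := by
    intro p hp hpC
    exact absurd (csInf_le hbdd ⟨hpC, hp.1, le_trans hp.2.le hzy⟩) (not_le.2 hp.2)
  have : z ∈ closure (Set.Ico x z) := by
    rw [closure_Ico hzx'.ne]; exact ⟨hzx, le_refl z⟩
  exact closure_mono hsub this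

lemma decomp (C : Set ℝ) (hC : IsClosed C) (hfin : (frontier C).Finite)
    (w : ℝ → ℕ) (m : ℕ)
    (h1 : ∀ x ∈ frontier C, 1 ≤ w x)
    (h2 : ∀ x ∈ frontier C, (∀ᶠ y in nhds x, y ∈ C → y = x) → 2 ≤ w x)
    (h3 : ∑ x ∈ hfin.toFinset, w x ≤ 2 * m + 2)
    (u v : ℝ) (hu : Set.Iic u ⊆ C) (hv : Set.Ici v ⊆ C) :
    ∃ s₁ s₂ : ℝ, ∃ k : ℕ, k ≤ m ∧ ∃ a b : Fin k → ℝ, (∀ i, a i ≤ b i) ∧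
      C = Set.Iic s₁ ∪ (⋃ i, Set.Icc (a i) (b i)) ∪ Set.Ici s₂ := by
  classical
  set F := hfin.toFinset with hF
  rcases Nat.eq_zero_or_pos F.card with hq0 | hqpos
  · -- frontier empty, C = univ
    have hFe : frontier C = ∅ := by
      have := Finset.card_eq_zero.mp hq0
      rw [← hfin.coe_toFinset, ← hF, this]; simp
    have hCuniv : C = Set.univ := by
      rcases frontier_eq_empty_iff.mp hFe with h | h
      · exact absurd (hu (le_refl u : u ∈ Set.Iic u)) (by simp [h])
      · exact h
    refine ⟨0, 0, 0, Nat.zero_le m, fun i => 0, fun i => 0, fun i => i.elim0, ?_⟩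
    rw [hCuniv]
    ext x
    simp [le_total x 0]
  · set q := F.card with hqdef
    have hq : 0 < q := hqpos
    set e := F.orderIsoOfFin rfl with he
    set g : ℕ → ℝ := fun n => if h : n < q then (e ⟨n, h⟩ : ℝ) else 0 with hg
    have gF : ∀ n, n < q → g n ∈ frontier C := by
      intro n hn
      have : (e ⟨n, hn⟩ : ℝ) ∈ frontier C := hfin.mem_toFinset.mp (e ⟨n, hn⟩).2
      simpa [hg, hn] using this
    have gC : ∀ n, n < q → g n ∈ C := by
      intro n hn
      have := gF n hn
      rw [frontier_eq_closure_inter_closure, hC.closure_eq] at this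
      exact this.1
    have gmono : ∀ {n₁ n₂ : ℕ}, n₁ < n₂ → n₂ < q → g n₁ < g n₂ := by
      intro n₁ n₂ h12 h2q
      have h1q : n₁ < q := lt_trans h12 h2q
      have : e ⟨n₁, h1q⟩ < e ⟨n₂, h2q⟩ := by
        apply e.strictMono
        exact h12
      simpa [hg, h1q, h2q] using this
    have gsurj : ∀ x ∈ frontier C, ∃ n, n < q ∧ g n = x := by
      intro x hx
      have hxF : x ∈ F := hfin.mem_toFinset.mpr hx
      obtain ⟨i, hi⟩ := e.surjective ⟨x, hxF⟩
      exact ⟨i.1, i.2, by simp [hg, show (i.1 : ℕ) < q from i.2, hi]⟩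
    -- half lines
    have hlow : Set.Iic (g 0) ⊆ C := by
      intro x hx
      by_contra hxC
      obtain ⟨z, hz1, hz2⟩ := crossing_up hC (min_le_right u x) (hu (min_le_left u x)) hxC
      obtain ⟨n, hn, hgn⟩ := gsurj z hz2
      have hg0 : g 0 ≤ g n := by
        rcases Nat.eq_zero_or_pos n with h | h
        · rw [h]
        · exact (gmono h hn).le
      have : x = g 0 := le_antisymm hx (le_trans hg0 (hgn ▸ hz1.2))
      exact hxC (this ▸ gC 0 hq)
    have hhigh : Set.Ici (g (q - 1)) ⊆ C := by
      intro x hx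
      by_contra hxC
      obtain ⟨z, hz1, hz2⟩ := crossing_down hC (le_max_right v x) hxC (hv (le_max_left v x))
      obtain ⟨n, hn, hgn⟩ := gsurj z hz2
      have hgq : g n ≤ g (q - 1) := by
        rcases Nat.lt_or_ge n (q - 1) with h | h
        · exact (gmono h (by omega)).le
        · have : n = q - 1 := by omega
          rw [this]
      have : x = g (q - 1) := le_antisymm (le_trans (hgn ▸ hz1.1) hgq) hx
      exact hxC (this ▸ gC (q - 1) (by omega))
    -- constancy on gaps
    have const : ∀ n, n + 1 < q → ∀ x y, x ∈ Set.Ioo (g n) (g (n+1)) →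
        y ∈ Set.Ioo (g n) (g (n+1)) → x ∈ C → y ∈ C := by
      intro n hn1 x y hx hy hxC
      by_contra hyC
      have key : ∀ z, z ∈ frontier C → z ∉ Set.Ioo (g n) (g (n+1)) := by
        intro z hz hzI
        obtain ⟨t, ht, hgt⟩ := gsurj z hz
        subst hgt
        rcases Nat.lt_or_ge t (n+1) with h | h
        · rcases Nat.lt_or_ge t n with h' | h'
          · exact absurd hzI.1 (not_lt.2 (gmono h' (by omega)).le)
          · have : t = n := by omega
            subst this
            exact lt_irrefl _ hzI.1
        · rcases Nat.lt_or_ge (n+1) t with h' | h'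
          · exact absurd hzI.2 (not_lt.2 (gmono h' ht).le)
          · have : t = n + 1 := by omega
            subst this
            exact lt_irrefl _ hzI.2
      rcases le_total x y with hxy | hxy
      · obtain ⟨z, hz1, hz2⟩ := crossing_up hC hxy hxC hyC
        exact key z hz2 ⟨lt_of_lt_of_le hx.1 hz1.1, lt_of_le_of_lt hz1.2 hy.2⟩
      · obtain ⟨z, hz1, hz2⟩ := crossing_down hC hxy hyC hxC
        exact key z hz2 ⟨lt_of_lt_of_le hy.1 hz1.1, lt_of_le_of_lt hz1.2 hx.2⟩
    -- midpoints and interval/singleton index sets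
    set mid : ℕ → ℝ := fun n => (g n + g (n+1)) / 2 with hmid
    have midIoo : ∀ n, n + 1 < q → mid n ∈ Set.Ioo (g n) (g (n+1)) := by
      intro n hn
      have := gmono (Nat.lt_succ_self n) hn
      constructor <;> [skip; skip] <;> simp [hmid] <;> linarith
    set Pfin : Finset ℕ := (Finset.range (q-1)).filter (fun n => mid n ∈ C) with hPfin
    set Sfin : Finset ℕ := (Finset.range q).filter
      (fun n => 0 < n ∧ n + 1 < q ∧ mid (n-1) ∉ C ∧ mid n ∉ C) with hSfin
    have memP : ∀ n, n ∈ Pfin ↔ (n < q - 1 ∧ mid n ∈ C) := by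
      intro n; simp [hPfin]
    have memS : ∀ n, n ∈ Sfin ↔ (0 < n ∧ n + 1 < q ∧ mid (n-1) ∉ C ∧ mid n ∉ C) := by
      intro n; simp [hSfin]; intro h1 h2; omega
    have hIccP : ∀ n ∈ Pfin, Set.Icc (g n) (g (n+1)) ⊆ C := by
      intro n hn x hx
      obtain ⟨hn1, hmidC⟩ := (memP n).mp hn
      have hn1' : n + 1 < q := by omega
      rcases eq_or_lt_of_le hx.1 with h | h
      · exact h ▸ gC n (by omega)
      rcases eq_or_lt_of_le hx.2 with h' | h'
      · exact h' ▸ gC (n+1) hn1'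
      exact const n hn1' (mid n) x (midIoo n hn1') ⟨h, h'⟩ hmidC
    -- x ∈ C between g0 and g(q-1) lands in the middle union
    set U : Set ℝ := (⋃ n ∈ Pfin, Set.Icc (g n) (g (n+1))) ∪ (⋃ n ∈ Sfin, Set.Icc (g n) (g n))
      with hU
    have hCeq : C = Set.Iic (g 0) ∪ U ∪ Set.Ici (g (q-1)) := by
      apply Set.Subset.antisymm
      · intro x hx
        rcases le_or_gt x (g 0) with h | h
        · exact Or.inl (Or.inl h)
        rcases le_or_gt (g (q-1)) x with h' | h'
        · exact Or.inr h'
        refine Or.inl (Or.inr ?_)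
        by_cases hxF : x ∈ frontier C
        · obtain ⟨n, hn, hgn⟩ := gsurj x hxF
          subst hgn
          have hn0 : 0 < n := by
            by_contra h0
            have hn0' : n = 0 := by omega
            rw [hn0'] at h
            exact lt_irrefl _ h
          have hnq : n < q - 1 := by
            rcases Nat.lt_or_ge n (q-1) with h0 | h0
            · exact h0
            · have heq : n = q - 1 := by omega
              rw [heq] at h'
              exact absurd h' (lt_irrefl _)
          by_cases hm1 : mid (n-1) ∈ C
          · have hP : n - 1 ∈ Pfin := (memP _).mpr ⟨by omega, hm1⟩
            refine Or.inl (Set.mem_biUnion hP ?_)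
            have hsucc : n - 1 + 1 = n := by omega
            rw [hsucc]
            exact ⟨(gmono (by omega) (by omega)).le, le_refl _⟩
          by_cases hm2 : mid n ∈ C
          · have hP : n ∈ Pfin := (memP _).mpr ⟨hnq, hm2⟩
            refine Or.inl (Set.mem_biUnion hP ?_)
            exact ⟨le_refl _, (gmono (by omega) (by omega)).le⟩
          · have hS : n ∈ Sfin := (memS _).mpr ⟨hn0, by omega, hm1, hm2⟩
            exact Or.inr (Set.mem_biUnion hS ⟨le_refl _, le_refl _⟩)
        · have hspec : g (Nat.findGreatest (fun t => g t < x) (q-1)) < x :=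
            Nat.findGreatest_spec (P := fun t => g t < x) (Nat.zero_le _) h
          set n := Nat.findGreatest (fun t => g t < x) (q-1) with hn
          have hnle : n ≤ q - 1 := by rw [hn]; exact Nat.findGreatest_le _
          have hnlt : n < q - 1 := by
            rcases eq_or_lt_of_le hnle with h0 | h0
            · exfalso; rw [h0] at hspec; exact lt_irrefl _ (lt_trans hspec h')
            · exact h0
          have hng : ¬ (g (n+1) < x) :=
            Nat.findGreatest_is_greatest (P := fun t => g t < x) (n := q-1) (k := n+1)
              (by rw [← hn]; omega) (by omega)
          have hxlt : x < g (n+1) := by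
            rcases eq_or_lt_of_le (not_lt.mp hng) with h0 | h0
            · exact absurd (h0 ▸ gF (n+1) (by omega)) hxF
            · exact h0
          have hmidC : mid n ∈ C :=
            const n (by omega) x (mid n) ⟨hspec, hxlt⟩ (midIoo n (by omega)) hx
          have hP : n ∈ Pfin := (memP _).mpr ⟨hnlt, hmidC⟩
          exact Or.inl (Set.mem_biUnion hP ⟨hspec.le, hxlt.le⟩)
      · intro x hx
        rcases hx with (h | h) | h
        · exact hlow h
        · rcases h with h | h
          · obtain ⟨n, hn, hxn⟩ := Set.mem_iUnion₂.mp h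
            exact hIccP n hn hxn
          · obtain ⟨n, hn, hxn⟩ := Set.mem_iUnion₂.mp h
            have : x = g n := le_antisymm hxn.2 hxn.1
            obtain ⟨-, hn1, -, -⟩ := (memS n).mp hn
            exact this ▸ gC n (by omega)
        · exact hhigh h
    -- counting
    set L : ℕ → Prop := fun n => n = 0 ∨ (0 < n ∧ mid (n-1) ∈ C) with hL
    set Rt : ℕ → Prop := fun n => n = q - 1 ∨ (n + 1 < q ∧ mid n ∈ C) with hRt
    have notboth : ∀ n, n < q → ¬ (L n ∧ Rt n) := by
      rintro n hn ⟨hLn, hRn⟩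
      have hint : g n ∈ interior C := by
        set lo := if n = 0 then g 0 - 1 else g (n-1) with hlo
        set hi := if n = q - 1 then g (q-1) + 1 else g (n+1) with hhi
        have hlo_lt : lo < g n := by
          rcases Nat.eq_zero_or_pos n with h0 | h0
          · simp [hlo, h0]
          · have : lo = g (n-1) := by
              rw [hlo, if_neg (by omega)]
            rw [this]; exact gmono (by omega) hn
        have hhi_gt : g n < hi := by
          by_cases h0 : n = q - 1
          · simp [hhi, h0]
          · have : hi = g (n+1) := by rw [hhi, if_neg h0]
            rw [this]; exact gmono (by omega) (by omega)
        rw [mem_interior]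
        refine ⟨Set.Ioo lo hi, ?_, isOpen_Ioo, ⟨hlo_lt, hhi_gt⟩⟩
        intro y hy
        rcases lt_trichotomy y (g n) with hy' | hy' | hy'
        · rcases hLn with h0 | ⟨h0, hmC⟩
          · apply hlow
            rw [h0] at hy'
            exact hy'.le
          · have hylo : g (n-1) < y := by
              have : lo = g (n-1) := by rw [hlo, if_neg (by omega)]
              rw [← this]; exact hy.1
            have hsucc : n - 1 + 1 = n := by omega
            exact const (n-1) (by omega) (mid (n-1)) y (midIoo (n-1) (by omega))
              (by rw [hsucc]; exact ⟨hylo, hy'⟩) hmC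
        · exact hy' ▸ gC n hn
        · rcases hRn with h0 | ⟨h0, hmC⟩
          · apply hhigh
            rw [h0] at hy'
            exact hy'.le
          · have hyhi : y < g (n+1) := by
              have : hi = g (n+1) := by rw [hhi, if_neg (by omega)]
              rw [← this]; exact hy.2
            exact const n (by omega) (mid n) y (midIoo n (by omega)) ⟨hy', hyhi⟩ hmC
      have := gF n hn
      rw [frontier_eq_closure_inter_closure, closure_compl] at this
      exact this.2 hint
    have isoS : ∀ n ∈ Sfin, 2 ≤ w (g n) := by
      intro n hnS
      obtain ⟨hn0, hn1, hm1, hm2⟩ := (memS n).mp hnS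
      apply h2 (g n) (gF n (by omega))
      have hev : Set.Ioo (g (n-1)) (g (n+1)) ∈ nhds (g n) :=
        Ioo_mem_nhds (gmono (by omega) (by omega)) (gmono (by omega) (by omega))
      filter_upwards [hev] with y hy hyC
      rcases lt_trichotomy y (g n) with hy' | hy' | hy'
      · exfalso
        have hsucc : n - 1 + 1 = n := by omega
        exact hm1 (const (n-1) (by omega) y (mid (n-1))
          (by rw [hsucc]; exact ⟨hy.1, hy'⟩) (midIoo (n-1) (by omega)) hyC)
      · exact hy'
      · exact absurd (const n (by omega) y (mid n) ⟨hy', hy.2⟩ (midIoo n (by omega)) hyC) hm2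
    set c : ℕ → ℕ := fun n =>
      (if L n then 1 else 0) + (if Rt n then 1 else 0) + (if n ∈ Sfin then 2 else 0) with hc
    have claimC : ∀ n ∈ Finset.range q, c n ≤ w (g n) := by
      intro n hn
      rw [Finset.mem_range] at hn
      by_cases hnS : n ∈ Sfin
      · obtain ⟨hn0, hn1, hm1, hm2⟩ := (memS n).mp hnS
        have hLn : ¬ L n := by
          rintro (h0 | ⟨-, h0⟩)
          · omega
          · exact hm1 h0
        have hRn : ¬ Rt n := by
          rintro (h0 | ⟨-, h0⟩)
          · omega
          · exact hm2 h0
        simp only [hc, if_neg hLn, if_neg hRn, if_pos hnS]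
        exact isoS n hnS
      · have h1' := h1 (g n) (gF n hn)
        have hnb := notboth n hn
        rcases Classical.em (L n) with hLn | hLn
        · have hRn : ¬ Rt n := fun hRn => hnb ⟨hLn, hRn⟩
          simp only [hc, if_pos hLn, if_neg hRn, if_neg hnS]
          omega
        · rcases Classical.em (Rt n) with hRn | hRn
          · simp only [hc, if_neg hLn, if_pos hRn, if_neg hnS]
            omega
          · simp only [hc, if_neg hLn, if_neg hRn, if_neg hnS]
            omega
    have sumc : ∑ n ∈ Finset.range q, c n = 2 + 2 * (Pfin.card + Sfin.card) := by
      have hsplit : ∑ n ∈ Finset.range q, c n =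
          (∑ n ∈ Finset.range q, if L n then 1 else 0) +
          (∑ n ∈ Finset.range q, if Rt n then 1 else 0) +
          (∑ n ∈ Finset.range q, if n ∈ Sfin then 2 else 0) := by
        rw [← Finset.sum_add_distrib, ← Finset.sum_add_distrib]
      have hqq : q = (q - 1) + 1 := by omega
      have hS1 : (∑ n ∈ Finset.range q, if L n then 1 else 0) = 1 + Pfin.card := by
        rw [hqq, Finset.sum_range_succ']
        have hL0 : L 0 := Or.inl rfl
        rw [if_pos hL0]
        have : ∀ i ∈ Finset.range (q-1), (if L (i+1) then 1 else 0) =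
            (if mid i ∈ C then 1 else 0) := by
          intro i hi
          have : L (i+1) ↔ mid i ∈ C := by
            rw [hL]
            constructor
            · rintro (h0 | ⟨-, h0⟩)
              · omega
              · simpa using h0
            · intro h0; exact Or.inr ⟨by omega, by simpa using h0⟩
          by_cases hm : mid i ∈ C
          · rw [if_pos (this.mpr hm), if_pos hm]
          · rw [if_neg (fun hh => hm (this.mp hh)), if_neg hm]
        rw [Finset.sum_congr rfl this, ← Finset.card_filter, ← hPfin]
        omega
      have hS2 : (∑ n ∈ Finset.range q, if Rt n then 1 else 0) = Pfin.card + 1 := by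
        have hrange : Finset.range q = insert (q-1) (Finset.range (q-1)) := by
          conv_lhs => rw [hqq]
          rw [Finset.range_add_one]
        rw [hrange, Finset.sum_insert (by simp)]
        have hRq : Rt (q-1) := Or.inl rfl
        rw [if_pos hRq]
        have : ∀ i ∈ Finset.range (q-1), (if Rt i then 1 else 0) =
            (if mid i ∈ C then 1 else 0) := by
          intro i hi
          rw [Finset.mem_range] at hi
          have : Rt i ↔ mid i ∈ C := by
            rw [hRt]
            constructor
            · rintro (h0 | ⟨-, h0⟩)
              · omega
              · exact h0
            · intro h0; exact Or.inr ⟨by omega, h0⟩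
          by_cases hm : mid i ∈ C
          · rw [if_pos (this.mpr hm), if_pos hm]
          · rw [if_neg (fun hh => hm (this.mp hh)), if_neg hm]
        rw [Finset.sum_congr rfl this, ← Finset.card_filter, ← hPfin]
        omega
      have hS3 : (∑ n ∈ Finset.range q, if n ∈ Sfin then 2 else 0) = 2 * Sfin.card := by
        rw [Finset.sum_ite_mem]
        have : Finset.range q ∩ Sfin = Sfin := by
          apply Finset.inter_eq_right.mpr
          intro n hn
          rw [hSfin] at hn
          exact Finset.mem_of_mem_filter n hn
        rw [this, Finset.sum_const, smul_eq_mul, mul_comm]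
      rw [hsplit, hS1, hS2, hS3]
      ring
    have sumw : ∑ n ∈ Finset.range q, w (g n) = ∑ x ∈ F, w x := by
      have himg : Finset.image g (Finset.range q) = F := by
        apply Finset.Subset.antisymm
        · intro x hx
          obtain ⟨n, hn, hgn⟩ := Finset.mem_image.mp hx
          rw [Finset.mem_range] at hn
          exact hgn ▸ hfin.mem_toFinset.mpr (gF n hn)
        · intro x hx
          obtain ⟨n, hn, hgn⟩ := gsurj x (hfin.mem_toFinset.mp hx)
          exact Finset.mem_image.mpr ⟨n, Finset.mem_range.mpr hn, hgn⟩
      rw [← himg, Finset.sum_image]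
      intro n₁ h1' n₂ h2' heq
      rw [Finset.mem_coe, Finset.mem_range] at h1' h2'
      by_contra hne
      rcases Nat.lt_or_ge n₁ n₂ with hlt | hge
      · have hgl := gmono hlt h2'
        rw [heq] at hgl
        exact lt_irrefl _ hgl
      · have hlt : n₂ < n₁ := by omega
        have hgl := gmono hlt h1'
        rw [heq] at hgl
        exact lt_irrefl _ hgl
    have hcount : Pfin.card + Sfin.card ≤ m := by
      have := Finset.sum_le_sum claimC
      rw [sumc, sumw] at this
      omega
    -- build a b
    set k := Pfin.card + Sfin.card with hk
    set f1 : ↥Pfin ⊕ ↥Sfin → ℝ := Sum.elim (fun p => g p.1) (fun s => g s.1) with hf1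
    set f2 : ↥Pfin ⊕ ↥Sfin → ℝ := Sum.elim (fun p => g (p.1+1)) (fun s => g s.1) with hf2
    have hle : ∀ x, f1 x ≤ f2 x := by
      rintro (p | s)
      · simp only [hf1, hf2, Sum.elim_inl]
        obtain ⟨hp1, -⟩ := (memP p.1).mp p.2
        exact (gmono (by omega) (by omega)).le
      · simp only [hf1, hf2, Sum.elim_inr]
        exact le_refl _
    set e2 : Fin k ≃ (↥Pfin ⊕ ↥Sfin) :=
      (finSumFinEquiv.symm.trans (Equiv.sumCongr Pfin.equivFin.symm Sfin.equivFin.symm))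
      with he2
    set a : Fin k → ℝ := fun i => f1 (e2 i) with ha
    set b : Fin k → ℝ := fun i => f2 (e2 i) with hb
    have hab : ∀ i, a i ≤ b i := fun i => hle (e2 i)
    have hUnion1 : (⋃ i, Set.Icc (a i) (b i)) = ⋃ x, Set.Icc (f1 x) (f2 x) := by
      apply Set.Subset.antisymm
      · exact Set.iUnion_subset fun i => Set.subset_iUnion (fun x => Set.Icc (f1 x) (f2 x)) (e2 i)
      · refine Set.iUnion_subset fun x => ?_
        have hx : Set.Icc (f1 x) (f2 x) = Set.Icc (a (e2.symm x)) (b (e2.symm x)) := by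
          simp only [ha, hb, Equiv.apply_symm_apply]
        rw [hx]
        exact Set.subset_iUnion (fun i => Set.Icc (a i) (b i)) (e2.symm x)
    have hUnion2 : (⋃ x, Set.Icc (f1 x) (f2 x)) = U := by
      rw [Set.iUnion_sum, hU]
      congr 1
      · simp only [hf1, hf2, Sum.elim_inl]
        rw [Set.iUnion_subtype]
      · simp only [hf1, hf2, Sum.elim_inr]
        rw [Set.iUnion_subtype]
    exact ⟨g 0, g (q-1), k, hcount, a, b, hab, by rw [hCeq, hUnion1, hUnion2]⟩

lemma evalAux (j₀ : ℕ) (lam s : Fin j₀ → ℝ) (c₀ c₁ : ℝ) (x : ℝ) (hx : ∀ j, x ≠ lam j) :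
    Polynomial.eval x (-((C c₀ + C c₁ * X) * (∏ j, (C (lam j) - X)) +
      ∑ j, C (s j) * ∏ i ∈ Finset.univ.erase j, (C (lam i) - X))) =
    ratFun j₀ lam s c₀ c₁ x * Polynomial.eval x (∏ j, (C (lam j) - X)) := by
  have hne : ∀ j : Fin j₀, lam j - x ≠ 0 := fun j => sub_ne_zero.mpr (Ne.symm (hx j))
  have hPe : Polynomial.eval x (∏ j : Fin j₀, (C (lam j) - X)) = ∏ j, (lam j - x) := by
    rw [eval_prod]; simp
  have hEe : ∀ j : Fin j₀, Polynomial.eval x (∏ i ∈ Finset.univ.erase j, (C (lam i) - X))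
      = ∏ i ∈ Finset.univ.erase j, (lam i - x) := by
    intro j; rw [eval_prod]; simp
  have key : ∀ j : Fin j₀, s j / (lam j - x) * ∏ i, (lam i - x)
      = s j * ∏ i ∈ Finset.univ.erase j, (lam i - x) := by
    intro j
    rw [← Finset.mul_prod_erase Finset.univ (fun i => lam i - x) (Finset.mem_univ j)]
    rw [div_mul_eq_mul_div, mul_comm (lam j - x), ← mul_assoc, mul_div_assoc,
      div_self (hne j), mul_one]
  simp only [eval_neg, eval_add, eval_mul, eval_C, eval_X, eval_finset_sum, hPe, hEe]
  rw [ratFun]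
  have expand : -(c₀ + c₁ * x + ∑ j, s j / (lam j - x)) * ∏ j, (lam j - x)
      = -((c₀ + c₁ * x) * ∏ j, (lam j - x) + ∑ j, (s j / (lam j - x) * ∏ i, (lam i - x))) := by
    rw [← Finset.sum_mul]; ring
  rw [expand]
  congr 1
  congr 1
  exact Finset.sum_congr rfl (fun j _ => (key j).symm)

/-- (Theorem 6.6 (a), second case.)  If `g + 4ψ ≠ 0`,
`h² + ψ·Σσⱼ ≠ 0`, `g > 0` and `g + 4ψ < 0`, then `closure Σ` is the union of a left
half-line, at most `j₀` compact intervals, and a right half-line. -/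
theorem stmt10 (j₀ : ℕ) (lam σ μ : Fin j₀ → ℝ) (hσ : ∀ j, 0 ≤ σ j)
    (f g φ ψ h : ℝ)
    (hne1 : g + 4 * ψ ≠ 0) (hne2 : h ^ 2 + ψ * ∑ j, σ j ≠ 0)
    (hg : 0 < g) (hgψ : g + 4 * ψ < 0) :
    ∃ s₁ s₂ : ℝ, ∃ k : ℕ, k ≤ j₀ ∧ ∃ a b : Fin k → ℝ, (∀ i, a i ≤ b i) ∧
      closure (SigmaSet j₀ lam σ μ f g φ ψ h) =
        Set.Iic s₁ ∪ (⋃ i, Set.Icc (a i) (b i)) ∪ Set.Ici s₂ := by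
  classical
  have hψ : ψ < 0 := by linarith
  set Pp : Polynomial ℝ := ∏ j : Fin j₀, (C (lam j) - X) with hPp
  set Ap : Polynomial ℝ := -((C f + C g * X) * Pp +
    ∑ j : Fin j₀, C (σ j) * ∏ i ∈ Finset.univ.erase j, (C (lam i) - X)) with hAp
  set Bp : Polynomial ℝ := -((C φ + C ψ * X) * Pp +
    ∑ j : Fin j₀, C (μ j) * ∏ i ∈ Finset.univ.erase j, (C (lam i) - X)) with hBp
  set Rp : Polynomial ℝ := C (h^2) * Pp^2 - Bp * Ap - C (1/4) * Ap^2 with hRp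
  -- evaluation facts
  have hPe : ∀ x : ℝ, Pp.eval x = ∏ j, (lam j - x) := by
    intro x; rw [hPp, eval_prod]; simp
  have hPne : ∀ x : ℝ, (∀ j, x ≠ lam j) → Pp.eval x ≠ 0 := by
    intro x hx
    rw [hPe]
    exact Finset.prod_ne_zero_iff.mpr (fun j _ => sub_ne_zero.mpr (Ne.symm (hx j)))
  have hAe : ∀ x : ℝ, (∀ j, x ≠ lam j) →
      Ap.eval x = ratFun j₀ lam σ f g x * Pp.eval x := by
    intro x hx; rw [hAp, hPp]; exact evalAux j₀ lam σ f g x hx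
  have hBe : ∀ x : ℝ, (∀ j, x ≠ lam j) →
      Bp.eval x = ratFun j₀ lam μ φ ψ x * Pp.eval x := by
    intro x hx; rw [hBp, hPp]; exact evalAux j₀ lam μ φ ψ x hx
  have hRe : ∀ x : ℝ, (∀ j, x ≠ lam j) → Rp.eval x =
      (h^2 - ratFun j₀ lam μ φ ψ x * ratFun j₀ lam σ f g x
        - (1/4) * (ratFun j₀ lam σ f g x)^2) * (Pp.eval x)^2 := by
    intro x hx
    rw [hRp]
    simp only [eval_sub, eval_mul, eval_pow, eval_C, hAe x hx, hBe x hx]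
    ring
  have memSigma : ∀ x : ℝ, x ∈ SigmaSet j₀ lam σ μ f g φ ψ h ↔
      ((∀ j, x ≠ lam j) ∧ 0 ≤ Rp.eval x) := by
    intro x
    have hp2 : ∀ (hx : ∀ j, x ≠ lam j), 0 < (Pp.eval x)^2 :=
      fun hx => pow_two_pos_of_ne_zero (hPne x hx)
    constructor
    · rintro ⟨hxz, hineq⟩
      refine ⟨hxz, ?_⟩
      rw [hRe x hxz]
      apply mul_nonneg _ (hp2 hxz).le
      linarith [hineq]
    · rintro ⟨hxz, hR0⟩
      refine ⟨hxz, ?_⟩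
      rw [hRe x hxz] at hR0
      have := (mul_nonneg_iff_of_pos_right (hp2 hxz)).mp hR0
      linarith
  -- degree and leading coefficient computations
  set M : Polynomial ℝ := ∏ j : Fin j₀, (X - C (lam j)) with hM
  have hMmonic : M.Monic := monic_prod_of_monic _ _ (fun j _ => monic_X_sub_C _)
  have hMdeg : M.natDegree = j₀ := by
    rw [hM, natDegree_prod_of_monic _ _ (fun j _ => monic_X_sub_C _)]
    simp [natDegree_X_sub_C]
  have hPM : Pp = C ((-1)^j₀) * M := by
    rw [hPp, hM]
    have : ∀ j : Fin j₀, C (lam j) - X = C (-1) * (X - C (lam j)) := by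
      intro j; rw [map_neg, map_one]; ring
    rw [Finset.prod_congr rfl (fun j _ => this j), Finset.prod_mul_distrib,
      Finset.prod_const, Finset.card_univ, Fintype.card_fin, ← map_pow]
  have hPdeg : Pp.natDegree ≤ j₀ := by
    rw [hPM]
    exact le_trans (natDegree_C_mul_le _ _) (le_of_eq hMdeg)
  have hPcoeff : Pp.coeff j₀ = (-1)^j₀ := by
    rw [hPM, coeff_C_mul]
    have : M.coeff j₀ = 1 := by
      rw [← hMdeg]; exact hMmonic.coeff_natDegree
    rw [this, mul_one]
  have hEdeg : ∀ j : Fin j₀,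
      (∏ i ∈ Finset.univ.erase j, (C (lam i) - X)).natDegree ≤ j₀ := by
    intro j
    refine le_trans (natDegree_prod_le _ _) ?_
    calc ∑ i ∈ Finset.univ.erase j, (C (lam i) - X).natDegree
        ≤ ∑ _i ∈ Finset.univ.erase j, 1 := by
          apply Finset.sum_le_sum
          intro i _
          have : C (lam i) - X = -(X - C (lam i)) := by ring
          rw [this, natDegree_neg, natDegree_X_sub_C]
      _ = (Finset.univ.erase j).card := by simp
      _ ≤ j₀ := le_trans (Finset.card_erase_le) (by simp)
  have hSdegσ : (∑ j : Fin j₀, C (σ j) * ∏ i ∈ Finset.univ.erase j,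
      (C (lam i) - X)).natDegree ≤ j₀ :=
    natDegree_sum_le_of_forall_le _ _ (fun j _ =>
      le_trans (natDegree_C_mul_le _ _) (hEdeg j))
  have hSdegμ : (∑ j : Fin j₀, C (μ j) * ∏ i ∈ Finset.univ.erase j,
      (C (lam i) - X)).natDegree ≤ j₀ :=
    natDegree_sum_le_of_forall_le _ _ (fun j _ =>
      le_trans (natDegree_C_mul_le _ _) (hEdeg j))
  have hlin : ∀ c₀ c₁ : ℝ, (C c₀ + C c₁ * X).natDegree ≤ 1 := by
    intro c₀ c₁
    refine le_trans (natDegree_add_le _ _) ?_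
    simp only [natDegree_C, sup_le_iff]
    exact ⟨Nat.zero_le _, le_trans (natDegree_C_mul_le _ _) natDegree_X_le⟩
  have hdegle : ∀ (c₀ c₁ : ℝ) (S : Polynomial ℝ), S.natDegree ≤ j₀ →
      (-((C c₀ + C c₁ * X) * Pp + S)).natDegree ≤ j₀ + 1 := by
    intro c₀ c₁ S hS
    rw [natDegree_neg]
    refine le_trans (natDegree_add_le _ _) ?_
    rw [sup_le_iff]
    constructor
    · refine le_trans natDegree_mul_le ?_
      have := add_le_add (hlin c₀ c₁) hPdeg
      omega
    · omega
  have hAdegle : Ap.natDegree ≤ j₀ + 1 := by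
    rw [hAp]; exact hdegle f g _ hSdegσ
  have hBdegle : Bp.natDegree ≤ j₀ + 1 := by
    rw [hBp]; exact hdegle φ ψ _ hSdegμ
  have hcoefftop : ∀ (c₀ c₁ : ℝ) (S : Polynomial ℝ), S.natDegree ≤ j₀ →
      (-((C c₀ + C c₁ * X) * Pp + S)).coeff (j₀ + 1) = -(c₁ * (-1)^j₀) := by
    intro c₀ c₁ S hS
    rw [coeff_neg, coeff_add]
    have h1 : ((C c₀ + C c₁ * X) * Pp).coeff (j₀+1) = c₁ * (-1)^j₀ := by
      rw [add_mul, coeff_add, coeff_C_mul,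
        coeff_eq_zero_of_natDegree_lt (lt_of_le_of_lt hPdeg (by omega)),
        mul_zero, zero_add, mul_assoc, coeff_C_mul, coeff_X_mul, hPcoeff]
    have h2 : S.coeff (j₀+1) = 0 :=
      coeff_eq_zero_of_natDegree_lt (by omega)
    rw [h1, h2, add_zero]
  have hAcoeff : Ap.coeff (j₀+1) = -(g * (-1)^j₀) := by
    rw [hAp]; exact hcoefftop f g _ hSdegσ
  have hBcoeff : Bp.coeff (j₀+1) = -(ψ * (-1)^j₀) := by
    rw [hBp]; exact hcoefftop φ ψ _ hSdegμ
  have hneg1 : ((-1 : ℝ)^j₀) ≠ 0 := pow_ne_zero _ (by norm_num)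
  have hAdeg : Ap.natDegree = j₀ + 1 := by
    refine le_antisymm hAdegle (le_natDegree_of_ne_zero ?_)
    rw [hAcoeff]
    exact neg_ne_zero.mpr (mul_ne_zero hg.ne' hneg1)
  have hBdeg : Bp.natDegree = j₀ + 1 := by
    refine le_antisymm hBdegle (le_natDegree_of_ne_zero ?_)
    rw [hBcoeff]
    exact neg_ne_zero.mpr (mul_ne_zero hψ.ne hneg1)
  have hALead : Ap.leadingCoeff = -(g * (-1)^j₀) := by
    rw [leadingCoeff, hAdeg, hAcoeff]
  have hBLead : Bp.leadingCoeff = -(ψ * (-1)^j₀) := by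
    rw [leadingCoeff, hBdeg, hBcoeff]
  have hsq1 : ((-1 : ℝ)^j₀)^2 = 1 := by
    rw [← pow_mul, mul_comm, pow_mul]
    norm_num
  -- coefficient of Rp at 2j₀+2
  have hBA : (Bp * Ap).coeff (2*j₀+2) = ψ * g := by
    have hidx : Bp.natDegree + Ap.natDegree = 2*j₀+2 := by rw [hAdeg, hBdeg]; ring
    have := coeff_mul_degree_add_degree Bp Ap
    rw [hidx, hALead, hBLead] at this
    rw [this]
    calc (-(ψ * (-1:ℝ)^j₀)) * (-(g * (-1:ℝ)^j₀)) = ψ * g * ((-1:ℝ)^j₀)^2 := by ring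
      _ = ψ * g := by rw [hsq1, mul_one]
  have hAA : (Ap^2).coeff (2*j₀+2) = g^2 := by
    have hidx : Ap.natDegree + Ap.natDegree = 2*j₀+2 := by rw [hAdeg]; ring
    have := coeff_mul_degree_add_degree Ap Ap
    rw [hidx, hALead] at this
    rw [pow_two, this]
    calc (-(g * (-1:ℝ)^j₀)) * (-(g * (-1:ℝ)^j₀)) = g^2 * ((-1:ℝ)^j₀)^2 := by ring
      _ = g^2 := by rw [hsq1, mul_one]
  have hP2 : (C (h^2) * Pp^2).coeff (2*j₀+2) = 0 := by
    rw [coeff_C_mul, coeff_eq_zero_of_natDegree_lt, mul_zero]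
    refine lt_of_le_of_lt natDegree_pow_le ?_
    omega
  have hRcoeff : Rp.coeff (2*j₀+2) = -(ψ * g) - (1/4) * g^2 := by
    rw [hRp, coeff_sub, coeff_sub, hP2, hBA, coeff_C_mul, hAA]
    ring
  have hRcpos : 0 < -(ψ * g) - (1/4) * g^2 := by nlinarith
  have hRdegle : Rp.natDegree ≤ 2*j₀+2 := by
    rw [hRp]
    refine le_trans (natDegree_sub_le _ _) ?_
    rw [sup_le_iff]
    constructor
    · refine le_trans (natDegree_sub_le _ _) ?_
      rw [sup_le_iff]
      constructor
      · refine le_trans (natDegree_C_mul_le _ _) (le_trans natDegree_pow_le ?_)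
        omega
      · refine le_trans natDegree_mul_le ?_
        omega
    · refine le_trans (natDegree_C_mul_le _ _) (le_trans natDegree_pow_le ?_)
      omega
  have hRdeg : Rp.natDegree = 2*j₀+2 := by
    refine le_antisymm hRdegle (le_natDegree_of_ne_zero ?_)
    rw [hRcoeff]
    exact hRcpos.ne'
  have hRLead : Rp.leadingCoeff = -(ψ * g) - (1/4) * g^2 := by
    rw [leadingCoeff, hRdeg, hRcoeff]
  have hR0 : Rp ≠ 0 := leadingCoeff_ne_zero.mp (by rw [hRLead]; exact hRcpos.ne')
  -- topology
  set Sig := SigmaSet j₀ lam σ μ f g φ ψ h with hSig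
  set Cl := closure Sig with hCl
  have hContR : Continuous fun x : ℝ => Rp.eval x := Rp.continuous
  have hGe : IsClosed {x : ℝ | 0 ≤ Rp.eval x} := isClosed_le continuous_const hContR
  have hLe : IsClosed {x : ℝ | Rp.eval x ≤ 0} := isClosed_le hContR continuous_const
  have hCsub : Cl ⊆ {x : ℝ | 0 ≤ Rp.eval x} :=
    closure_minimal (fun x hx => ((memSigma x).mp hx).2) hGe
  have fact1 : ∀ y : ℝ, 0 < Rp.eval y → y ∈ Cl := by
    intro y hy
    have hop : IsOpen {x : ℝ | 0 < Rp.eval x} := isOpen_lt continuous_const hContR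
    have hdense : Dense (Set.range lam)ᶜ :=
      Set.Countable.dense_compl ℝ (Set.finite_range lam).countable
    have hsub1 := hdense.open_subset_closure_inter hop
    have hsub2 : {x : ℝ | 0 < Rp.eval x} ∩ (Set.range lam)ᶜ ⊆ Sig := by
      rintro x ⟨hx1, hx2⟩
      refine (memSigma x).mpr ⟨?_, le_of_lt hx1⟩
      intro j hj
      exact hx2 ⟨j, hj.symm⟩
    exact closure_mono hsub2 (hsub1 hy)
  have hcomplsub : Clᶜ ⊆ {x : ℝ | Rp.eval x ≤ 0} := by
    intro y hy
    by_contra hc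
    exact hy (fact1 y (not_le.mp hc))
  have hClosed : IsClosed Cl := isClosed_closure
  have hfrontroot : ∀ x ∈ frontier Cl, Rp.IsRoot x := by
    intro x hx
    rw [frontier_eq_closure_inter_closure] at hx
    have hx1 : 0 ≤ Rp.eval x := hCsub (hClosed.closure_eq ▸ hx.1)
    have hx2 : Rp.eval x ≤ 0 := closure_minimal hcomplsub hLe hx.2
    exact le_antisymm hx2 hx1
  have hfin : (frontier Cl).Finite :=
    (Polynomial.finite_setOf_isRoot hR0).subset hfrontroot
  set w : ℝ → ℕ := fun x => Polynomial.rootMultiplicity x Rp with hw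
  have hw1 : ∀ x ∈ frontier Cl, 1 ≤ w x := fun x hx =>
    (Polynomial.rootMultiplicity_pos hR0).mpr (hfrontroot x hx)
  have hw2 : ∀ x ∈ frontier Cl, (∀ᶠ y in nhds x, y ∈ Cl → y = x) → 2 ≤ w x := by
    intro x hx hiso
    have hroot : Rp.eval x = 0 := hfrontroot x hx
    have hle : ∀ᶠ y in nhds x, Rp.eval y ≤ Rp.eval x := by
      filter_upwards [hiso] with y hy
      by_contra hc
      push_neg at hc
      have hy0 : 0 < Rp.eval y := by rw [hroot] at hc; exact hc
      have heq := hy (fact1 y hy0)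
      rw [heq, hroot] at hy0
      exact lt_irrefl 0 hy0
    have hmax : IsLocalMax (fun y => Rp.eval y) x := hle
    have hd := hmax.deriv_eq_zero
    rw [Polynomial.deriv] at hd
    have h2lt : 1 < Polynomial.rootMultiplicity x Rp := by
      rw [Polynomial.lt_rootMultiplicity_iff_isRoot_iterate_derivative hR0]
      intro m hm
      interval_cases m
      · simpa using hroot
      · simpa using hd
    exact h2lt
  have hw3 : ∑ x ∈ hfin.toFinset, w x ≤ 2 * j₀ + 2 := by
    have hsub2 : hfin.toFinset ⊆ Rp.roots.toFinset := by
      intro x hx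
      rw [Multiset.mem_toFinset, Polynomial.mem_roots']
      exact ⟨hR0, hfrontroot x (hfin.mem_toFinset.mp hx)⟩
    calc ∑ x ∈ hfin.toFinset, w x ≤ ∑ x ∈ Rp.roots.toFinset, w x :=
          Finset.sum_le_sum_of_subset hsub2
      _ = ∑ x ∈ Rp.roots.toFinset, Rp.roots.count x :=
          Finset.sum_congr rfl (fun x _ => (Polynomial.count_roots _).symm)
      _ = Multiset.card Rp.roots := Multiset.toFinset_sum_count_eq _
      _ ≤ Rp.natDegree := Polynomial.card_roots' _
      _ = 2 * j₀ + 2 := hRdeg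
  -- half-lines
  have htop : Filter.Tendsto (fun x : ℝ => Rp.eval x) Filter.atTop Filter.atTop :=
    Polynomial.tendsto_atTop_of_leadingCoeff_nonneg Rp
      (natDegree_pos_iff_degree_pos.mp (by omega)) (by rw [hRLead]; exact hRcpos.le)
  obtain ⟨v, hv⟩ := Filter.eventually_atTop.mp (htop.eventually_ge_atTop 1)
  have hIci : Set.Ici v ⊆ Cl := fun x hx => fact1 x (by linarith [hv x hx])
  set Rq : Polynomial ℝ := Rp.comp (-X) with hRq
  have hXdeg : (-X : Polynomial ℝ).natDegree = 1 := by rw [natDegree_neg, natDegree_X]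
  have hQdeg : Rq.natDegree = 2*j₀+2 := by
    rw [hRq, natDegree_comp, hXdeg, mul_one, hRdeg]
  have hXlead : (-X : Polynomial ℝ).leadingCoeff = -1 := by
    rw [leadingCoeff, hXdeg, coeff_neg, coeff_X_one]
  have hQlead : Rq.leadingCoeff = Rp.leadingCoeff := by
    rw [hRq, leadingCoeff_comp (by rw [hXdeg]; omega), hXlead, hRdeg,
      Even.neg_one_pow ⟨j₀+1, by ring⟩, mul_one]
  have hbot : Filter.Tendsto (fun x : ℝ => Rq.eval x) Filter.atTop Filter.atTop :=
    Polynomial.tendsto_atTop_of_leadingCoeff_nonneg Rq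
      (natDegree_pos_iff_degree_pos.mp (by omega))
      (by rw [hQlead, hRLead]; exact hRcpos.le)
  obtain ⟨u, hu⟩ := Filter.eventually_atTop.mp (hbot.eventually_ge_atTop 1)
  have hIic : Set.Iic (-u) ⊆ Cl := by
    intro y hy
    have h1 : u ≤ -y := by
      rw [Set.mem_Iic] at hy
      linarith
    have h2 := hu (-y) h1
    rw [hRq, eval_comp] at h2
    simp only [eval_neg, eval_X, neg_neg] at h2
    exact fact1 y (by linarith)
  exact decomp Cl hClosed hfin w j₀ hw1 hw2 hw3 (-u) v hIic hIci
end

section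
/- Assume g + 4ψ ≠ 0 and h² + ψ·(σ₁ + … + σ_{j₀}) ≠ 0, and assume g = 0 and f ≠ 0. If fψ > 0, then the closure (in ℝ) of the set Σ is the union of a left half-line (−∞, s] and at most j₀ compact intervals, for some s ∈ ℝ. If fψ < 0, then the closure of Σ is the union of at most j₀ compact intervals and a right half-line [s, ∞), for some s ∈ ℝ. -/
open Polynomial Set

lemma prodNegOfOdd (O : Finset ℝ) (x : ℝ) (hodd : Odd O.card)
    (hlt : ∀ r ∈ O, x < r) : (∏ r ∈ O, (x - r)) < 0 := by
  have h1 : (∏ r ∈ O, (x - r)) = (-1 : ℝ) ^ O.card * ∏ r ∈ O, (r - x) := by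
    rw [← Finset.prod_const, ← Finset.prod_mul_distrib]
    exact Finset.prod_congr rfl (fun r _ => by ring)
  rw [h1, hodd.neg_one_pow]
  have h2 : 0 < ∏ r ∈ O, (r - x) :=
    Finset.prod_pos (fun r hr => by have := hlt r hr; linarith)
  linarith

lemma iUnion_fin_succ {n : ℕ} (f : Fin (n+1) → Set ℝ) :
    (⋃ i, f i) = f 0 ∪ ⋃ i : Fin n, f i.succ := by
  ext x
  simp only [mem_iUnion, mem_union]
  constructor
  · rintro ⟨i, hi⟩
    rcases Fin.eq_zero_or_eq_succ i with h | ⟨j, rfl⟩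
    · exact Or.inl (h ▸ hi)
    · exact Or.inr ⟨j, hi⟩
  · rintro (h | ⟨j, hj⟩)
    · exact ⟨0, h⟩
    · exact ⟨j.succ, hj⟩

lemma structO : ∀ (n : ℕ) (O : Finset ℝ) (hc : O.card = 2*n+1),
    ∃ (hne : O.Nonempty) (a b : Fin n → ℝ), (∀ i, a i < b i) ∧ (∀ i, a i ∈ O) ∧ (∀ i, b i ∈ O) ∧
      {x : ℝ | ∏ r ∈ O, (x - r) ≤ 0} = Set.Iic (O.min' hne) ∪ ⋃ i, Set.Icc (a i) (b i) := by
  intro n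
  induction n with
  | zero =>
    intro O hc
    obtain ⟨r, rfl⟩ := Finset.card_eq_one.mp hc
    refine ⟨⟨r, Finset.mem_singleton_self r⟩, Fin.elim0, Fin.elim0, fun i => i.elim0,
      fun i => i.elim0, fun i => i.elim0, ?_⟩
    ext x
    simp [Finset.min'_singleton, sub_nonpos]
  | succ n ih =>
    intro O hc
    have hne : O.Nonempty := Finset.card_pos.mp (by omega)
    set s₀ := O.min' hne with hs₀
    have hs₀O : s₀ ∈ O := O.min'_mem hne
    set O₁ := O.erase s₀ with hO₁
    have hc₁ : O₁.card = 2*n+2 := by rw [hO₁, Finset.card_erase_of_mem hs₀O, hc]; omega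
    have hne₁ : O₁.Nonempty := Finset.card_pos.mp (by omega)
    set s₁ := O₁.min' hne₁ with hs₁
    have hs₁O₁ : s₁ ∈ O₁ := O₁.min'_mem hne₁
    have hs₁O : s₁ ∈ O := Finset.mem_of_mem_erase hs₁O₁
    have hs₀s₁ : s₀ < s₁ := by
      have h1 : s₀ ≤ s₁ := O.min'_le s₁ hs₁O
      have h2 : s₁ ≠ s₀ := Finset.ne_of_mem_erase hs₁O₁
      exact lt_of_le_of_ne h1 (Ne.symm h2)
    set O₂ := O₁.erase s₁ with hO₂
    have hc₂ : O₂.card = 2*n+1 := by rw [hO₂, Finset.card_erase_of_mem hs₁O₁, hc₁]; omega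
    obtain ⟨hne₂, a, b, hab, haO, hbO, hset⟩ := ih O₂ hc₂
    set m₂ := O₂.min' hne₂ with hm₂
    have hm₂O₂ : m₂ ∈ O₂ := O₂.min'_mem hne₂
    have hm₂O : m₂ ∈ O := Finset.mem_of_mem_erase (Finset.mem_of_mem_erase hm₂O₂)
    have hs₁m₂ : s₁ < m₂ := by
      have h1 : s₁ ≤ m₂ := O₁.min'_le m₂ (Finset.mem_of_mem_erase hm₂O₂)
      have h2 : m₂ ≠ s₁ := Finset.ne_of_mem_erase hm₂O₂
      exact lt_of_le_of_ne h1 (Ne.symm h2)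
    have hO₂gt : ∀ r ∈ O₂, s₁ < r := fun r hr => lt_of_lt_of_le hs₁m₂ (O₂.min'_le r hr)
    have hodd₂ : Odd O₂.card := by rw [hc₂]; exact ⟨n, by ring⟩
    -- product splitting
    have hprod : ∀ x : ℝ, (∏ r ∈ O, (x - r)) = (x - s₀) * ((x - s₁) * ∏ r ∈ O₂, (x - r)) := by
      intro x
      rw [← Finset.mul_prod_erase O _ hs₀O, ← Finset.mul_prod_erase O₁ _ hs₁O₁]
    refine ⟨hne, Fin.cons s₁ a, Fin.cons m₂ b, ?_, ?_, ?_, ?_⟩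
    · intro i
      refine Fin.cases ?_ ?_ i
      · simpa using hs₁m₂
      · intro j; simpa using hab j
    · intro i
      refine Fin.cases ?_ ?_ i
      · simpa using hs₁O
      · intro j; simp only [Fin.cons_succ]
        exact Finset.mem_of_mem_erase (Finset.mem_of_mem_erase (haO j))
    · intro i
      refine Fin.cases ?_ ?_ i
      · simpa using hm₂O
      · intro j; simp only [Fin.cons_succ]
        exact Finset.mem_of_mem_erase (Finset.mem_of_mem_erase (hbO j))
    · rw [iUnion_fin_succ]
      simp only [Fin.cons_zero, Fin.cons_succ]
      ext x
      simp only [mem_setOf_eq, mem_union, mem_Iic, mem_iUnion, mem_Icc]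
      have hp2neg : x < s₁ → (∏ r ∈ O₂, (x - r)) < 0 := fun hx =>
        prodNegOfOdd O₂ x hodd₂ (fun r hr => lt_of_lt_of_le hx (le_of_lt (hO₂gt r hr)))
      have hsetx : ∀ y : ℝ, (∏ r ∈ O₂, (y - r)) ≤ 0 ↔ (y ≤ m₂ ∨ ∃ i, a i ≤ y ∧ y ≤ b i) := by
        intro y
        have := Set.ext_iff.mp hset y
        simpa [mem_setOf_eq, mem_union, mem_Iic, mem_iUnion, mem_Icc] using this
      rcases lt_trichotomy x s₀ with hx0 | hx0 | hx0
      · constructor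
        · intro _; exact Or.inl (le_of_lt hx0)
        · intro _
          rw [hprod x]
          have h1 : x - s₀ < 0 := by linarith
          have h2 : x - s₁ < 0 := by linarith
          have h3 := hp2neg (by linarith)
          have h4 : 0 < (x - s₁) * ∏ r ∈ O₂, (x - r) := mul_pos_of_neg_of_neg h2 h3
          exact le_of_lt (mul_neg_of_neg_of_pos h1 h4)
      · constructor
        · intro _; exact Or.inl (le_of_eq hx0)
        · intro _; rw [hprod x, hx0]; simp
      · have hIic : ¬ (x ≤ s₀) := not_le.mpr hx0
        rcases lt_trichotomy x s₁ with hx1 | hx1 | hx1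
        · constructor
          · intro hle
            exfalso
            rw [hprod x] at hle
            have h1 : 0 < x - s₀ := by linarith
            have h2 : x - s₁ < 0 := by linarith
            have h3 := hp2neg hx1
            have h4 : 0 < (x - s₁) * ∏ r ∈ O₂, (x - r) := mul_pos_of_neg_of_neg h2 h3
            nlinarith [mul_pos h1 h4]
          · rintro (hc | hc | ⟨i, hi1, hi2⟩)
            · exact absurd hc hIic
            · linarith [hc.1]
            · have hai : m₂ ≤ a i := O₂.min'_le _ (haO i)
              linarith
        · constructor
          · intro _
            exact Or.inr (Or.inl ⟨le_of_eq hx1.symm, by linarith⟩)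
          · intro _
            rw [hprod x, ← hx1]
            simp
        · have h0pos : 0 < (x - s₀) * (x - s₁) := by nlinarith
          constructor
          · intro hle
            rw [hprod x, ← mul_assoc] at hle
            have hp2 : (∏ r ∈ O₂, (x - r)) ≤ 0 := by
              by_contra hcon
              push_neg at hcon
              nlinarith
            rcases (hsetx x).mp hp2 with h | ⟨i, hi⟩
            · exact Or.inr (Or.inl ⟨le_of_lt hx1, h⟩)
            · exact Or.inr (Or.inr ⟨i, hi⟩)
          · rintro (hc | hc | ⟨i, hi1, hi2⟩)
            · exact absurd hc hIic
            · rw [hprod x, ← mul_assoc]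
              have hp2 : (∏ r ∈ O₂, (x - r)) ≤ 0 := (hsetx x).mpr (Or.inl hc.2)
              nlinarith
            · rw [hprod x, ← mul_assoc]
              have hp2 : (∏ r ∈ O₂, (x - r)) ≤ 0 := (hsetx x).mpr (Or.inr ⟨i, hi1, hi2⟩)
              nlinarith

lemma multisetProdSign (s : Multiset ℝ) :
    s.prod = (-1) ^ (Multiset.card s) * (s.map (fun a => -a)).prod := by
  induction s using Multiset.induction_on with
  | empty => simp
  | cons a t ih =>
    rw [Multiset.map_cons, Multiset.prod_cons, Multiset.prod_cons, Multiset.card_cons,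
      pow_succ, ih]
    ring

lemma multisetProdNegOfNeg (s : Multiset ℝ) (h : ∀ a ∈ s, a < 0) :
    s.prod = (-1) ^ (Multiset.card s) * (s.map (fun a => -a)).prod ∧
      0 < (s.map (fun a => -a)).prod := by
  refine ⟨multisetProdSign s, Multiset.prod_pos ?_⟩
  intro a ha
  obtain ⟨b, hb, rfl⟩ := Multiset.mem_map.mp ha
  linarith [h b hb]

lemma subset_closure_diff_countable {A U : Set ℝ} (hU : IsOpen U) (hd : A ⊆ closure U)
    (hUA : U ⊆ A) {Z : Set ℝ} (hZ : Z.Countable) : A ⊆ closure (A \ Z) := by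
  have hdense : Dense Zᶜ := hZ.dense_compl ℝ
  intro x hx
  rw [mem_closure_iff]
  intro V hV hxV
  have h1 : (V ∩ U).Nonempty := by
    have := hd hx
    rw [mem_closure_iff] at this
    exact this V hV hxV
  have h2 : ((V ∩ U) ∩ Zᶜ).Nonempty := hdense.inter_open_nonempty _ (hV.inter hU) h1
  obtain ⟨y, ⟨hyV, hyU⟩, hyZ⟩ := h2
  exact ⟨y, hyV, hUA hyU, hyZ⟩

lemma iUnion_fin_append {m e : ℕ} (f : Fin (m + e) → Set ℝ) :
    (⋃ i, f i) = (⋃ i : Fin m, f (Fin.castAdd e i)) ∪ ⋃ i : Fin e, f (Fin.natAdd m i) := by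
  ext x
  simp only [Set.mem_iUnion, Set.mem_union]
  constructor
  · rintro ⟨i, hi⟩
    refine Fin.addCases (motive := fun i => x ∈ f i →
        ((∃ j : Fin m, x ∈ f (Fin.castAdd e j)) ∨ ∃ j : Fin e, x ∈ f (Fin.natAdd m j)))
      (fun j hj => Or.inl ⟨j, hj⟩) (fun j hj => Or.inr ⟨j, hj⟩) i hi
  · rintro (⟨j, hj⟩ | ⟨j, hj⟩)
    exacts [⟨_, hj⟩, ⟨_, hj⟩]

lemma mainNeg (P : Polynomial ℝ) (n : ℕ) (hdeg : P.natDegree = 2*n+1)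
    (hlc : P.leadingCoeff < 0) (Z : Set ℝ) (hZ : Z.Countable) :
    ∃ (s : ℝ) (k : ℕ), k ≤ n ∧ ∃ a b : Fin k → ℝ, (∀ i, a i ≤ b i) ∧
      closure ({x : ℝ | 0 ≤ P.eval x} \ Z) = Set.Iic s ∪ ⋃ i, Set.Icc (a i) (b i) := by
  classical
  have hP0 : P ≠ 0 := fun h => by simp [h] at hlc
  obtain ⟨Q, hPQ, hcard, hQroots⟩ := P.exists_prod_multiset_X_sub_C_mul
  have hQ0 : Q ≠ 0 := by
    intro h
    rw [h, mul_zero] at hPQ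
    exact hP0 hPQ.symm
  have hQne : ∀ x : ℝ, Q.eval x ≠ 0 := by
    intro x hx
    have : x ∈ Q.roots := by rw [mem_roots']; exact ⟨hQ0, hx⟩
    rw [hQroots] at this
    exact absurd this (Multiset.notMem_zero x)
  have evalM : ∀ x : ℝ, P.eval x = (P.roots.map (fun r => x - r)).prod * Q.eval x := by
    intro x
    conv_lhs => rw [← hPQ]
    rw [eval_mul, eval_multiset_prod, Multiset.map_map]
    congr 2
    exact Multiset.map_congr rfl (fun r _ => by simp)
  have hdegpos : 0 < P.degree := natDegree_pos_iff_degree_pos.mp (by omega)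
  -- bounds on roots
  obtain ⟨B, hB⟩ : BddAbove (↑P.roots.toFinset : Set ℝ) := (P.roots.toFinset.finite_toSet).bddAbove
  obtain ⟨B', hB'⟩ : BddBelow (↑P.roots.toFinset : Set ℝ) := (P.roots.toFinset.finite_toSet).bddBelow
  have hroot_le : ∀ r ∈ P.roots, r ≤ B := fun r hr => hB (Multiset.mem_toFinset.mpr hr)
  have hroot_ge : ∀ r ∈ P.roots, B' ≤ r := fun r hr => hB' (Multiset.mem_toFinset.mpr hr)
  -- point on the right where P < 0
  have hbot : Filter.Tendsto (fun x => P.eval x) Filter.atTop Filter.atBot :=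
    P.tendsto_atBot_of_leadingCoeff_nonpos hdegpos hlc.le
  obtain ⟨x₁, hx₁B, hx₁P⟩ : ∃ x₁, B < x₁ ∧ P.eval x₁ < 0 := by
    have h1 := (Filter.eventually_gt_atTop B).and (hbot.eventually (Filter.eventually_lt_atBot 0))
    exact h1.exists
  have hM₁pos : 0 < (P.roots.map (fun r => x₁ - r)).prod := by
    apply Multiset.prod_pos
    intro a ha
    obtain ⟨r, hr, rfl⟩ := Multiset.mem_map.mp ha
    have := hroot_le r hr
    linarith
  have hQ₁neg : Q.eval x₁ < 0 := by
    rcases lt_or_gt_of_ne (hQne x₁) with h | h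
    · exact h
    · exfalso
      have := evalM x₁
      nlinarith
  have hQneg : ∀ x, Q.eval x < 0 := by
    intro x
    rcases lt_or_gt_of_ne (hQne x) with h | h
    · exact h
    · exfalso
      have hcont : ContinuousOn (fun y => Q.eval y) (Set.uIcc x x₁) :=
        (Polynomial.continuous Q).continuousOn
      have h0 : (0 : ℝ) ∈ Set.uIcc (Q.eval x) (Q.eval x₁) := by
        rw [Set.mem_uIcc]
        right; constructor <;> linarith
      obtain ⟨c, _, hc⟩ := intermediate_value_uIcc hcont h0
      exact hQne c hc
  -- point on the left where P > 0
  have hndc : (P.comp (-X : ℝ[X])).natDegree = 2*n+1 := by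
    rw [natDegree_comp, hdeg]
    simp [natDegree_neg]
  have hR : Filter.Tendsto (fun y => P.eval (-y)) Filter.atTop Filter.atTop := by
    have h1 : (fun y : ℝ => P.eval (-y)) = fun y => (P.comp (-X)).eval y := by
      funext y; simp [eval_comp]
    rw [h1]
    apply Polynomial.tendsto_atTop_of_leadingCoeff_nonneg
    · exact natDegree_pos_iff_degree_pos.mp (by omega)
    · rw [leadingCoeff_comp (by simp [natDegree_neg])]
      have h2 : (-X : ℝ[X]).leadingCoeff = -1 := by
        rw [leadingCoeff_neg, leadingCoeff_X]
      rw [h2, hdeg]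
      have h3 : (-1 : ℝ) ^ (2*n+1) = -1 := Odd.neg_one_pow ⟨n, by ring⟩
      rw [h3]
      nlinarith
  obtain ⟨y₁, hy₁B, hy₁P⟩ : ∃ y₁, -B' < y₁ ∧ 0 < P.eval (-y₁) := by
    have h1 := (Filter.eventually_gt_atTop (-B')).and (hR.eventually (Filter.eventually_gt_atTop 0))
    exact h1.exists
  set x₀ := -y₁ with hx₀def
  have hx₀lt : ∀ r ∈ P.roots, x₀ < r := by
    intro r hr
    have := hroot_ge r hr
    simp only [hx₀def]
    linarith
  -- odd number of roots with multiplicity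
  have hcodd : Odd (Multiset.card P.roots) := by
    by_contra hcon
    rw [Nat.not_odd_iff_even] at hcon
    have hall : ∀ a ∈ (P.roots.map (fun r => x₀ - r)), a < 0 := by
      intro a ha
      obtain ⟨r, hr, rfl⟩ := Multiset.mem_map.mp ha
      have := hx₀lt r hr
      linarith
    obtain ⟨heq, hpos⟩ := multisetProdNegOfNeg _ hall
    rw [Multiset.card_map] at heq
    have hMpos : 0 < (P.roots.map (fun r => x₀ - r)).prod := by
      rw [heq, hcon.neg_one_pow, one_mul]
      exact hpos
    have := evalM x₀
    have := hQneg x₀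
    nlinarith
  -- odd/even root classification
  set T := P.roots.toFinset with hTdef
  set O := T.filter (fun r => Odd (P.roots.count r)) with hOdef
  set E := T.filter (fun r => ¬ Odd (P.roots.count r)) with hEdef
  have hOsub : ∀ r ∈ O, r ∈ P.roots := fun r hr =>
    Multiset.mem_toFinset.mp (Finset.mem_filter.mp hr).1
  have hEsub : ∀ r ∈ E, r ∈ P.roots := fun r hr =>
    Multiset.mem_toFinset.mp (Finset.mem_filter.mp hr).1
  have hOcard : Odd O.card := by
    have h1 : (∑ r ∈ T, P.roots.count r) = Multiset.card P.roots :=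
      Multiset.toFinset_sum_count_eq _
    have h2 : Odd (∑ r ∈ T, P.roots.count r) := h1 ▸ hcodd
    exact (Finset.odd_sum_iff_odd_card_odd (fun r => P.roots.count r)).mp h2
  obtain ⟨m, hm⟩ := hOcard
  have hmO : O.card = 2*m + 1 := by omega
  -- counting bound
  have hsum : (∑ r ∈ O, P.roots.count r) + (∑ r ∈ E, P.roots.count r)
      = Multiset.card P.roots := by
    rw [← Multiset.toFinset_sum_count_eq P.roots,
      ← Finset.sum_filter_add_sum_filter_not T (fun r => Odd (P.roots.count r))]
  have hOge : O.card ≤ ∑ r ∈ O, P.roots.count r := by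
    calc O.card = ∑ _r ∈ O, 1 := by simp
    _ ≤ ∑ r ∈ O, P.roots.count r :=
      Finset.sum_le_sum (fun r hr => Multiset.one_le_count_iff_mem.mpr (hOsub r hr))
  have hEge : 2 * E.card ≤ ∑ r ∈ E, P.roots.count r := by
    calc 2 * E.card = ∑ _r ∈ E, 2 := by simp [mul_comm]
    _ ≤ ∑ r ∈ E, P.roots.count r := by
      refine Finset.sum_le_sum (fun r hr => ?_)
      have h1 : Even (P.roots.count r) :=
        Nat.not_odd_iff_even.mp (Finset.mem_filter.mp hr).2
      have h2 : 1 ≤ P.roots.count r := Multiset.one_le_count_iff_mem.mpr (hEsub r hr)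
      obtain ⟨t, ht⟩ := h1
      omega
  have hcardroots : Multiset.card P.roots ≤ 2*n+1 := hdeg ▸ P.card_roots'
  have hkbound : m + E.card ≤ n := by omega
  -- structure of the odd-root set
  obtain ⟨hne, a, b, hab, haO, hbO, hset⟩ := structO m O hmO
  set s := O.min' hne with hsdef
  -- sign factorization away from roots
  have hsign : ∀ x : ℝ, x ∉ P.roots →
      ∃ c : ℝ, 0 < c ∧ P.eval x = (c * Q.eval x) * ∏ r ∈ O, (x - r) := by
    intro x hx
    have hxne : ∀ r ∈ T, x ≠ r := fun r hr hx' =>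
      hx (hx' ▸ Multiset.mem_toFinset.mp hr)
    have hMx : (P.roots.map (fun r => x - r)).prod
        = ∏ r ∈ T, (x - r) ^ (P.roots.count r) :=
      Finset.prod_multiset_map_count _ _
    have hTsplit : ∏ r ∈ T, (x - r) ^ (P.roots.count r)
        = (∏ r ∈ O, (x - r) ^ (P.roots.count r)) *
          ∏ r ∈ E, (x - r) ^ (P.roots.count r) :=
      (Finset.prod_filter_mul_prod_filter_not T _ _).symm
    have hEpos : 0 < ∏ r ∈ E, (x - r) ^ (P.roots.count r) := by
      refine Finset.prod_pos (fun r hr => ?_)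
      have h1 : Even (P.roots.count r) :=
        Nat.not_odd_iff_even.mp (Finset.mem_filter.mp hr).2
      exact h1.pow_pos (sub_ne_zero.mpr (hxne r (Finset.mem_filter.mp hr).1))
    have hOex : ∏ r ∈ O, (x - r) ^ (P.roots.count r)
        = (∏ r ∈ O, (x - r)) * ∏ r ∈ O, (x - r) ^ (P.roots.count r - 1) := by
      rw [← Finset.prod_mul_distrib]
      refine Finset.prod_congr rfl (fun r hr => ?_)
      have h1 : 1 ≤ P.roots.count r := Multiset.one_le_count_iff_mem.mpr (hOsub r hr)
      rw [← pow_succ']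
      congr 1
      omega
    have hvpos : 0 < ∏ r ∈ O, (x - r) ^ (P.roots.count r - 1) := by
      refine Finset.prod_pos (fun r hr => ?_)
      have h1 : Odd (P.roots.count r) := (Finset.mem_filter.mp hr).2
      have h2 : Even (P.roots.count r - 1) := by
        obtain ⟨t, ht⟩ := h1; exact ⟨t, by omega⟩
      exact h2.pow_pos (sub_ne_zero.mpr (hxne r (Finset.mem_filter.mp hr).1))
    refine ⟨(∏ r ∈ O, (x - r) ^ (P.roots.count r - 1)) *
      ∏ r ∈ E, (x - r) ^ (P.roots.count r), mul_pos hvpos hEpos, ?_⟩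
    rw [evalM x, hMx, hTsplit, hOex]
    ring
  -- splitting of the nonnegativity set
  have hsplit : {x : ℝ | 0 ≤ P.eval x}
      = {x : ℝ | ∏ r ∈ O, (x - r) ≤ 0} ∪ (↑E : Set ℝ) := by
    ext x
    simp only [Set.mem_setOf_eq, Set.mem_union, Finset.mem_coe]
    by_cases hx : x ∈ P.roots
    · have hx0 : P.eval x = 0 := (mem_roots'.mp hx).2
      constructor
      · intro _
        by_cases hodd : Odd (P.roots.count x)
        · left
          have hxO : x ∈ O := Finset.mem_filter.mpr ⟨Multiset.mem_toFinset.mpr hx, hodd⟩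
          have h0 : ∏ r ∈ O, (x - r) = 0 := Finset.prod_eq_zero hxO (by ring)
          exact le_of_eq h0
        · right
          exact Finset.mem_filter.mpr ⟨Multiset.mem_toFinset.mpr hx, hodd⟩
      · intro _
        rw [hx0]
    · obtain ⟨c, hc, heq⟩ := hsign x hx
      have hQx := hQneg x
      have hne0 : (∏ r ∈ O, (x - r)) ≠ 0 := by
        intro h0
        obtain ⟨r, hr, hr0⟩ := Finset.prod_eq_zero_iff.mp h0
        have : x = r := by linarith
        exact hx (this ▸ hOsub r hr)
      constructor
      · intro h0
        left
        by_contra hcon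
        push_neg at hcon
        have h1 : c * Q.eval x < 0 := mul_neg_of_pos_of_neg hc hQx
        have h2 : (c * Q.eval x) * ∏ r ∈ O, (x - r) < 0 := mul_neg_of_neg_of_pos h1 hcon
        linarith
      · rintro (h | h)
        · have hlt : (∏ r ∈ O, (x - r)) < 0 := lt_of_le_of_ne h hne0
          have h1 : c * Q.eval x < 0 := mul_neg_of_pos_of_neg hc hQx
          have h2 : 0 < (c * Q.eval x) * ∏ r ∈ O, (x - r) := mul_pos_of_neg_of_neg h1 hlt
          linarith
        · exact absurd (hEsub x h) hx
  -- closed pieces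
  have hScl : IsClosed {x : ℝ | ∏ r ∈ O, (x - r) ≤ 0} := by
    have hcont : Continuous (fun x : ℝ => ∏ r ∈ O, (x - r)) :=
      continuous_finset_prod O (fun r _ => continuous_id.sub continuous_const)
    exact IsClosed.preimage hcont isClosed_Iic
  have hclS : closure ({x : ℝ | ∏ r ∈ O, (x - r) ≤ 0} \ Z)
      = {x : ℝ | ∏ r ∈ O, (x - r) ≤ 0} := by
    apply Set.Subset.antisymm
    · exact (closure_mono Set.diff_subset).trans (le_of_eq hScl.closure_eq)
    · have hpiece : ∀ A U : Set ℝ, IsOpen U → A ⊆ closure U → U ⊆ A →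
          A ⊆ {x : ℝ | ∏ r ∈ O, (x - r) ≤ 0} →
          A ⊆ closure ({x : ℝ | ∏ r ∈ O, (x - r) ≤ 0} \ Z) := by
        intro A U hU h1 h2 h3 x hx
        exact closure_mono (Set.diff_subset_diff_left h3)
          (subset_closure_diff_countable hU h1 h2 hZ hx)
      have hIic : Set.Iic s ⊆ {x : ℝ | ∏ r ∈ O, (x - r) ≤ 0} := by
        rw [hset]; exact Set.subset_union_left
      have hIcc : ∀ i, Set.Icc (a i) (b i) ⊆ {x : ℝ | ∏ r ∈ O, (x - r) ≤ 0} := by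
        intro i
        rw [hset]
        exact (Set.subset_iUnion (fun i => Set.Icc (a i) (b i)) i).trans Set.subset_union_right
      have h1 : Set.Iic s ⊆ closure ({x : ℝ | ∏ r ∈ O, (x - r) ≤ 0} \ Z) :=
        hpiece _ (Set.Iio s) isOpen_Iio (by rw [closure_Iio]) Set.Iio_subset_Iic_self hIic
      have h2 : ∀ i, Set.Icc (a i) (b i) ⊆ closure ({x : ℝ | ∏ r ∈ O, (x - r) ≤ 0} \ Z) := by
        intro i
        exact hpiece _ (Set.Ioo (a i) (b i)) isOpen_Ioo
          (by rw [closure_Ioo (hab i).ne]) Set.Ioo_subset_Icc_self (hIcc i)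
      intro x hx
      rw [hset] at hx
      rcases hx with hx | hx
      · exact h1 hx
      · obtain ⟨i, hi⟩ := Set.mem_iUnion.mp hx
        exact h2 i hi
  have hEfin : ((↑E : Set ℝ) \ Z).Finite := E.finite_toSet.diff
  have hclE : closure ((↑E : Set ℝ) \ Z) = (↑E : Set ℝ) \ Z := hEfin.isClosed.closure_eq
  -- enumerate the remaining isolated points
  set F := hEfin.toFinset with hFdef
  have hFsub : F ⊆ E := by
    intro r hr
    have := hEfin.mem_toFinset.mp hr
    exact Finset.mem_coe.mp this.1
  have hFcard : F.card ≤ E.card := Finset.card_le_card hFsub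
  set g : Fin F.card → ℝ := fun i => ((F.orderIsoOfFin rfl) i : ℝ) with hgdef
  have hFcover : (⋃ i : Fin F.card, Set.Icc (g i) (g i)) = (↑E : Set ℝ) \ Z := by
    ext y
    simp only [Set.Icc_self, Set.mem_iUnion, Set.mem_singleton_iff]
    constructor
    · rintro ⟨i, rfl⟩
      exact hEfin.mem_toFinset.mp ((F.orderIsoOfFin rfl) i).2
    · intro hy
      have hyF : y ∈ F := hEfin.mem_toFinset.mpr hy
      refine ⟨(F.orderIsoOfFin rfl).symm ⟨y, hyF⟩, ?_⟩
      exact (congrArg Subtype.val ((F.orderIsoOfFin rfl).apply_symm_apply ⟨y, hyF⟩)).symm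
  refine ⟨s, m + F.card, by omega, Fin.append a g, Fin.append b g, ?_, ?_⟩
  · intro i
    refine Fin.addCases (motive := fun i => Fin.append a g i ≤ Fin.append b g i)
      (fun j => ?_) (fun j => ?_) i
    · simp only [Fin.append_left]
      exact (hab j).le
    · simp only [Fin.append_right]
      exact le_refl _
  · rw [hsplit, Set.union_diff_distrib, closure_union, hclS, hclE, hset, iUnion_fin_append]
    simp only [Fin.append_left, Fin.append_right]
    rw [hFcover, Set.union_assoc]

lemma polyFacts (j₀ : ℕ) (lam σ μ : Fin j₀ → ℝ) (f φ ψ h : ℝ)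
    (hψ : ψ ≠ 0) (hf : f ≠ 0) :
    ∃ Pp : ℝ[X], Pp.natDegree = 2*j₀+1 ∧ Pp.leadingCoeff = -(f*ψ) ∧
      SigmaSet j₀ lam σ μ f 0 φ ψ h = {x : ℝ | 0 ≤ Pp.eval x} \ Set.range lam := by
  classical
  set Dp : ℝ[X] := ∏ j, (C (lam j) - X) with hDpdef
  set Ep : Fin j₀ → ℝ[X] := fun j => ∏ i ∈ Finset.univ.erase j, (C (lam i) - X) with hEpdef
  set Nπ : ℝ[X] := -(C f * Dp + ∑ j, C (σ j) * Ep j) with hNπdef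
  set Nκ : ℝ[X] := -((C φ + C ψ * X) * Dp + ∑ j, C (μ j) * Ep j) with hNκdef
  set Pp : ℝ[X] := C (h^2) * Dp^2 - Nκ * Nπ - C (1/4) * Nπ^2 with hPpdef
  have hfac_ne : ∀ r : ℝ, (C r - X : ℝ[X]) ≠ 0 := by
    intro r hr
    have h1 : (C r - X : ℝ[X]) = -(X - C r) := by ring
    rw [h1, neg_eq_zero] at hr
    exact Polynomial.X_sub_C_ne_zero r hr
  have hfac_deg : ∀ r : ℝ, (C r - X : ℝ[X]).natDegree = 1 := by
    intro r
    have h1 : (C r - X : ℝ[X]) = -(X - C r) := by ring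
    rw [h1, natDegree_neg, natDegree_X_sub_C]
  have hfac_lc : ∀ r : ℝ, (C r - X : ℝ[X]).leadingCoeff = -1 := by
    intro r
    have h1 : (C r - X : ℝ[X]) = -(X - C r) := by ring
    rw [h1, leadingCoeff_neg, (monic_X_sub_C r).leadingCoeff]
  have hDdeg : Dp.natDegree = j₀ := by
    rw [hDpdef, natDegree_prod _ _ (fun j _ => hfac_ne (lam j))]
    simp [hfac_deg]
  have hDlc : Dp.leadingCoeff = (-1)^j₀ := by
    rw [hDpdef, leadingCoeff_prod]
    simp [hfac_lc]
  have hEdeg : ∀ j, (Ep j).natDegree = j₀ - 1 := by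
    intro j
    rw [hEpdef]
    simp only
    rw [natDegree_prod _ _ (fun i _ => hfac_ne (lam i))]
    simp only [hfac_deg]
    rw [Finset.sum_const, Finset.card_erase_of_mem (Finset.mem_univ j)]
    simp
  have hj₀pos : ∀ _j : Fin j₀, 1 ≤ j₀ := fun j => j.pos
  -- coefficient of Nπ at j₀
  have hsumdeg : (∑ j, C (σ j) * Ep j).natDegree ≤ j₀ - 1 := by
    refine (Polynomial.natDegree_sum_le _ _).trans ?_
    simp only [Finset.fold_max_le]
    refine ⟨Nat.zero_le _, fun j _ => ?_⟩
    exact (natDegree_C_mul_le _ _).trans (le_of_eq (hEdeg j))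
  have hsumdeg' : (∑ j, C (μ j) * Ep j).natDegree ≤ j₀ - 1 := by
    refine (Polynomial.natDegree_sum_le _ _).trans ?_
    simp only [Finset.fold_max_le]
    refine ⟨Nat.zero_le _, fun j _ => ?_⟩
    exact (natDegree_C_mul_le _ _).trans (le_of_eq (hEdeg j))
  have hsumcoeff : ∀ (c : Fin j₀ → ℝ) (k : ℕ), j₀ ≤ k → (∑ j, C (c j) * Ep j).coeff k = 0 := by
    intro c k hk
    rw [finset_sum_coeff]
    refine Finset.sum_eq_zero (fun j _ => ?_)
    refine coeff_eq_zero_of_natDegree_lt ?_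
    refine lt_of_le_of_lt ((natDegree_C_mul_le _ _).trans (le_of_eq (hEdeg j))) ?_
    have := hj₀pos j
    omega
  have hDcj : Dp.coeff j₀ = (-1)^j₀ := by
    conv_lhs => rw [← hDdeg]
    rw [coeff_natDegree, hDlc]
  have hNπcoeff : Nπ.coeff j₀ = -(f * (-1)^j₀) := by
    rw [hNπdef, coeff_neg, coeff_add, coeff_C_mul, hsumcoeff σ j₀ le_rfl, hDcj, add_zero]
  have hNπdeg_le : Nπ.natDegree ≤ j₀ := by
    rw [hNπdef, natDegree_neg]
    refine (natDegree_add_le _ _).trans ?_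
    refine max_le ((natDegree_C_mul_le _ _).trans (le_of_eq hDdeg)) (hsumdeg.trans ?_)
    omega
  have hNπne : Nπ.coeff j₀ ≠ 0 :=
    hNπcoeff ▸ neg_ne_zero.mpr (mul_ne_zero hf (pow_ne_zero _ (by norm_num)))
  have hNπdeg : Nπ.natDegree = j₀ :=
    le_antisymm hNπdeg_le (le_natDegree_of_ne_zero hNπne)
  have hNπlc : Nπ.leadingCoeff = -(f * (-1)^j₀) := by
    rw [leadingCoeff, hNπdeg, hNπcoeff]
  have hNπ0 : Nπ ≠ 0 := fun hc => hNπne (by rw [hc]; simp)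
  -- coefficient of Nκ at j₀ + 1
  have hNκcoeff : Nκ.coeff (j₀+1) = -(ψ * (-1)^j₀) := by
    rw [hNκdef, coeff_neg, coeff_add, add_mul, coeff_add]
    have h1 : (C φ * Dp).coeff (j₀+1) = 0 := by
      refine coeff_eq_zero_of_natDegree_lt ?_
      refine lt_of_le_of_lt ((natDegree_C_mul_le _ _).trans (le_of_eq hDdeg)) (by omega)
    have h2 : (C ψ * X * Dp).coeff (j₀+1) = ψ * (-1)^j₀ := by
      rw [mul_assoc, coeff_C_mul, coeff_X_mul, hDcj]
    rw [h1, h2, hsumcoeff μ (j₀+1) (by omega)]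
    ring
  have hNκdeg_le : Nκ.natDegree ≤ j₀ + 1 := by
    rw [hNκdef, natDegree_neg]
    refine (natDegree_add_le _ _).trans (max_le ?_ (hsumdeg'.trans (by omega)))
    rw [add_mul]
    refine (natDegree_add_le _ _).trans (max_le ?_ ?_)
    · exact (natDegree_C_mul_le _ _).trans (by omega)
    · rw [mul_assoc]
      refine (natDegree_C_mul_le _ _).trans ?_
      refine (natDegree_mul_le).trans ?_
      rw [natDegree_X, hDdeg]
      omega
  have hNκne : Nκ.coeff (j₀+1) ≠ 0 :=
    hNκcoeff ▸ neg_ne_zero.mpr (mul_ne_zero hψ (pow_ne_zero _ (by norm_num)))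
  have hNκdeg : Nκ.natDegree = j₀ + 1 :=
    le_antisymm hNκdeg_le (le_natDegree_of_ne_zero hNκne)
  have hNκlc : Nκ.leadingCoeff = -(ψ * (-1)^j₀) := by
    rw [leadingCoeff, hNκdeg, hNκcoeff]
  -- leading coefficient of Pp
  have hPpcoeff : Pp.coeff (2*j₀+1) = -(f*ψ) := by
    rw [hPpdef, coeff_sub, coeff_sub]
    have h1 : (C (h^2) * Dp^2).coeff (2*j₀+1) = 0 := by
      refine coeff_eq_zero_of_natDegree_lt ?_
      refine lt_of_le_of_lt ((natDegree_C_mul_le _ _).trans ?_) (show 2*j₀ < 2*j₀+1 by omega)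
      refine (natDegree_pow _ _).le.trans ?_
      rw [hDdeg]
    have h2 : (Nκ * Nπ).coeff (2*j₀+1) = Nκ.leadingCoeff * Nπ.leadingCoeff := by
      have := Polynomial.coeff_mul_degree_add_degree Nκ Nπ
      rw [hNκdeg, hNπdeg] at this
      rw [show 2*j₀+1 = j₀ + 1 + j₀ by omega]
      exact this
    have h3 : (C (1/4) * Nπ^2).coeff (2*j₀+1) = 0 := by
      refine coeff_eq_zero_of_natDegree_lt ?_
      refine lt_of_le_of_lt ((natDegree_C_mul_le _ _).trans ?_) (show 2*j₀ < 2*j₀+1 by omega)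
      refine (natDegree_pow _ _).le.trans ?_
      rw [hNπdeg]
    rw [h1, h2, h3, hNκlc, hNπlc]
    have h4 : ((-1:ℝ))^j₀ * (-1)^j₀ = 1 := by
      rw [← pow_add]
      exact Even.neg_one_pow ⟨j₀, rfl⟩
    linear_combination (-(f*ψ)) * h4
  have hPpdeg_le : Pp.natDegree ≤ 2*j₀+1 := by
    rw [hPpdef]
    refine (natDegree_sub_le _ _).trans (max_le ((natDegree_sub_le _ _).trans (max_le ?_ ?_)) ?_)
    · refine (natDegree_C_mul_le _ _).trans ?_
      refine (natDegree_pow _ _).le.trans ?_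
      rw [hDdeg]; omega
    · refine natDegree_mul_le.trans ?_
      rw [hNκdeg, hNπdeg]
      omega
    · refine (natDegree_C_mul_le _ _).trans ?_
      refine (natDegree_pow _ _).le.trans ?_
      rw [hNπdeg]; omega
  have hPpne : Pp.coeff (2*j₀+1) ≠ 0 :=
    hPpcoeff ▸ neg_ne_zero.mpr (mul_ne_zero hf hψ)
  have hPpdeg : Pp.natDegree = 2*j₀+1 :=
    le_antisymm hPpdeg_le (le_natDegree_of_ne_zero hPpne)
  have hPplc : Pp.leadingCoeff = -(f*ψ) := by
    rw [leadingCoeff, hPpdeg, hPpcoeff]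
  -- evaluation identities
  have evalD : ∀ x : ℝ, Dp.eval x = ∏ j, (lam j - x) := by
    intro x
    rw [hDpdef, eval_prod]
    exact Finset.prod_congr rfl (fun j _ => by simp)
  have evalE : ∀ (j : Fin j₀) (x : ℝ), (Ep j).eval x = ∏ i ∈ Finset.univ.erase j, (lam i - x) := by
    intro j x
    rw [hEpdef]
    simp only
    rw [eval_prod]
    exact Finset.prod_congr rfl (fun i _ => by simp)
  have hDsplit : ∀ (j : Fin j₀) (x : ℝ), Dp.eval x = (lam j - x) * (Ep j).eval x := by
    intro j x
    rw [evalD, evalE]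
    exact (Finset.mul_prod_erase Finset.univ _ (Finset.mem_univ j)).symm
  have hNgen : ∀ (c : Fin j₀ → ℝ) (c₀ c₁ x : ℝ), (∀ j, x ≠ lam j) →
      (-(( C c₀ + C c₁ * X) * Dp + ∑ j, C (c j) * Ep j)).eval x
        = ratFun j₀ lam c c₀ c₁ x * Dp.eval x := by
    intro c c₀ c₁ x hx
    have hsum : ∀ j : Fin j₀, c j * (Ep j).eval x = c j / (lam j - x) * Dp.eval x := by
      intro j
      have hne : lam j - x ≠ 0 := sub_ne_zero.mpr (Ne.symm (hx j))
      rw [hDsplit j x]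
      field_simp
    simp only [eval_neg, eval_add, eval_mul, eval_finset_sum, eval_C, eval_X, ratFun]
    rw [Finset.sum_congr rfl (fun j _ => hsum j)]
    rw [← Finset.sum_mul]
    ring
  have hNπev : ∀ x : ℝ, (∀ j, x ≠ lam j) → Nπ.eval x = ratFun j₀ lam σ f 0 x * Dp.eval x := by
    intro x hx
    have h1 : Nπ = -((C f + C (0:ℝ) * X) * Dp + ∑ j, C (σ j) * Ep j) := by
      rw [hNπdef]; simp
    rw [h1]
    exact hNgen σ f 0 x hx
  have hNκev : ∀ x : ℝ, (∀ j, x ≠ lam j) → Nκ.eval x = ratFun j₀ lam μ φ ψ x * Dp.eval x := by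
    intro x hx
    exact hNgen μ φ ψ x hx
  have hDne : ∀ x : ℝ, (∀ j, x ≠ lam j) → Dp.eval x ≠ 0 := by
    intro x hx
    rw [evalD]
    exact Finset.prod_ne_zero_iff.mpr (fun j _ => sub_ne_zero.mpr (Ne.symm (hx j)))
  refine ⟨Pp, hPpdeg, hPplc, ?_⟩
  ext x
  simp only [SigmaSet, Set.mem_setOf_eq, Set.mem_diff, Set.mem_range]
  constructor
  · rintro ⟨hx, hineq⟩
    refine ⟨?_, fun ⟨j, hj⟩ => hx j hj.symm⟩
    have hD := hDne x hx
    have hPev : Pp.eval x = (h^2 - ratFun j₀ lam μ φ ψ x * ratFun j₀ lam σ f 0 x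
        - 1/4 * (ratFun j₀ lam σ f 0 x)^2) * (Dp.eval x)^2 := by
      rw [hPpdef]
      simp only [eval_sub, eval_mul, eval_pow, eval_C]
      rw [hNπev x hx, hNκev x hx]
      ring
    rw [hPev]
    have h2 : (0:ℝ) < (Dp.eval x)^2 := by positivity
    have h3 : 0 ≤ h^2 - ratFun j₀ lam μ φ ψ x * ratFun j₀ lam σ f 0 x
        - 1/4 * (ratFun j₀ lam σ f 0 x)^2 := by linarith [hineq]
    exact mul_nonneg h3 h2.le
  · rintro ⟨hge, hnot⟩
    have hx : ∀ j, x ≠ lam j := fun j hj => hnot ⟨j, hj.symm⟩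
    refine ⟨hx, ?_⟩
    have hD := hDne x hx
    have hPev : Pp.eval x = (h^2 - ratFun j₀ lam μ φ ψ x * ratFun j₀ lam σ f 0 x
        - 1/4 * (ratFun j₀ lam σ f 0 x)^2) * (Dp.eval x)^2 := by
      rw [hPpdef]
      simp only [eval_sub, eval_mul, eval_pow, eval_C]
      rw [hNπev x hx, hNκev x hx]
      ring
    rw [hPev] at hge
    have h2 : (0:ℝ) < (Dp.eval x)^2 := by positivity
    have h3 : 0 ≤ h^2 - ratFun j₀ lam μ φ ψ x * ratFun j₀ lam σ f 0 x
        - 1/4 * (ratFun j₀ lam σ f 0 x)^2 := by nlinarith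
    linarith

/-- (Theorem 6.6 (b).)  Assume `g + 4ψ ≠ 0`, `h² + ψ·Σσⱼ ≠ 0`, `g = 0`
and `f ≠ 0`.  If `fψ > 0` then `closure Σ` is a left half-line together with at most `j₀`
compact intervals; if `fψ < 0` it is at most `j₀` compact intervals together with a right
half-line. -/
theorem stmt11 (j₀ : ℕ) (lam σ μ : Fin j₀ → ℝ) (hσ : ∀ j, 0 ≤ σ j)
    (f g φ ψ h : ℝ)
    (hne1 : g + 4 * ψ ≠ 0) (hne2 : h ^ 2 + ψ * ∑ j, σ j ≠ 0)
    (hg : g = 0) (hf : f ≠ 0) :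
    (0 < f * ψ →
      ∃ s : ℝ, ∃ k : ℕ, k ≤ j₀ ∧ ∃ a b : Fin k → ℝ, (∀ i, a i ≤ b i) ∧
        closure (SigmaSet j₀ lam σ μ f g φ ψ h) =
          Set.Iic s ∪ ⋃ i, Set.Icc (a i) (b i)) ∧
    (f * ψ < 0 →
      ∃ s : ℝ, ∃ k : ℕ, k ≤ j₀ ∧ ∃ a b : Fin k → ℝ, (∀ i, a i ≤ b i) ∧
        closure (SigmaSet j₀ lam σ μ f g φ ψ h) =
          (⋃ i, Set.Icc (a i) (b i)) ∪ Set.Ici s) := by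
  subst hg
  have hψ : ψ ≠ 0 := by
    intro hc
    apply hne1
    rw [hc]
    ring
  obtain ⟨Pp, hdeg, hlc, hsetEq⟩ := polyFacts j₀ lam σ μ f φ ψ h hψ hf
  have hZc : (Set.range lam).Countable := (Set.finite_range lam).countable
  constructor
  · intro hfψ
    have hlc' : Pp.leadingCoeff < 0 := by rw [hlc]; linarith
    obtain ⟨s, k, hk, a, b, hab, hcl⟩ := mainNeg Pp j₀ hdeg hlc' _ hZc
    exact ⟨s, k, hk, a, b, hab, by rw [hsetEq, hcl]⟩
  · intro hfψ
    set Pq := Pp.comp (-X) with hPq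
    have hdeg2 : Pq.natDegree = 2*j₀+1 := by
      rw [hPq, natDegree_comp, hdeg]
      simp [natDegree_neg]
    have hlc2 : Pq.leadingCoeff < 0 := by
      rw [hPq, leadingCoeff_comp (by simp [natDegree_neg])]
      rw [show (-X : ℝ[X]).leadingCoeff = -1 by rw [leadingCoeff_neg, leadingCoeff_X], hdeg, hlc]
      rw [show ((-1:ℝ))^(2*j₀+1) = -1 from Odd.neg_one_pow ⟨j₀, by ring⟩]
      nlinarith
    set Z' := Neg.neg '' (Set.range lam) with hZ'
    have hZ'c : Z'.Countable := hZc.image _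
    obtain ⟨s, k, hk, a, b, hab, hcl⟩ := mainNeg Pq j₀ hdeg2 hlc2 Z' hZ'c
    refine ⟨-s, k, hk, fun i => -(b i), fun i => -(a i), fun i => ?_, ?_⟩
    · show -(b i) ≤ -(a i)
      linarith [hab i]
    have hev : ∀ t : ℝ, Pq.eval t = Pp.eval (-t) := by
      intro t
      rw [hPq]
      simp [eval_comp]
    have himg : {x : ℝ | 0 ≤ Pp.eval x} \ Set.range lam
        = Neg.neg '' ({x : ℝ | 0 ≤ Pq.eval x} \ Z') := by
      ext x
      simp only [Set.mem_image, Set.mem_diff, Set.mem_setOf_eq]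
      constructor
      · rintro ⟨hge, hnx⟩
        refine ⟨-x, ⟨?_, ?_⟩, by ring⟩
        · rw [hev]; simpa using hge
        · rintro ⟨y, hy, hyx⟩
          exact hnx ((neg_injective hyx) ▸ hy)
      · rintro ⟨y, ⟨hge, hny⟩, rfl⟩
        constructor
        · rw [hev] at hge; simpa using hge
        · intro hx
          exact hny ⟨-y, by simpa using hx, by ring⟩
    have hcoe : (Neg.neg : ℝ → ℝ) = ⇑(Homeomorph.neg ℝ) := rfl
    rw [hsetEq, himg, hcoe, ← (Homeomorph.neg ℝ).image_closure, hcl]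
    rw [Set.image_union, Set.image_iUnion]
    have h1 : (Homeomorph.neg ℝ) '' Set.Iic s = Set.Ici (-s) := by
      rw [show ((Homeomorph.neg ℝ) '' Set.Iic s) = Neg.neg '' Set.Iic s from rfl,
        Set.image_neg_eq_neg, Set.neg_Iic]
    have h2 : ∀ i, (Homeomorph.neg ℝ) '' Set.Icc (a i) (b i) = Set.Icc (-(b i)) (-(a i)) := by
      intro i
      rw [show ((Homeomorph.neg ℝ) '' Set.Icc (a i) (b i)) = Neg.neg '' Set.Icc (a i) (b i) from rfl,
        Set.image_neg_eq_neg, Set.neg_Icc]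
    rw [h1]
    rw [show (⋃ i, (Homeomorph.neg ℝ) '' Set.Icc (a i) (b i)) = ⋃ i, Set.Icc (-(b i)) (-(a i))
      from Set.iUnion_congr h2]
    exact Set.union_comm _ _
end
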